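/- arXiv:2011.02466 — 11 statements merged into one kernel-verified Lean document; each statement's English description precedes it below -/
import Mathlib

section
/- Let G be a connected weighted graph on n ≥ 2 vertices with positive edge weights, let w_min and w_max be the minimum and maximum edge weights, and let α = w_max/w_min. Then: (i) for every vector x ∈ ℝⁿ with xᵀ𝟙 = 0 one has (w_min/(2n⁴α²))·‖x‖_∞² ≤ xᵀ L_G x ≤ n²·w_max·‖x‖_∞²; and (ii) for every vector b ∈ ℝⁿ with bᵀ𝟙 = 0 one has (1/(n²·w_max))·‖b‖_∞² ≤ bᵀ L_G† b ≤ (2n⁴α²/w_min)·‖b‖_∞². -/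
/-!
The Laplacian form is `xᵀ L x = ½ ∑ᵤ ∑ᵥ w_uv (x_u - x_v)²`, so every edge satisfies
`w_uv (x_u - x_v)² ≤ 2 xᵀ L x`. If `∑ x = 0` the largest and smallest coordinates have opposite
signs, hence `‖x‖_∞ ≤ max x - min x`, and a path of fewer than `n` edges joins them; summing the
edge differences along it gives `‖x‖_∞² ≤ 2 n² xᵀ L x / w_min`. The upper bound comes from
`∑ᵤ ∑ᵥ (x_u - x_v)² = 2 n ∑ᵤ x_u²` for `∑ x = 0`.

For (ii), the Penrose identities `LHL = L` and `(LH)ᵀ = LH` make `b - LHb` orthogonal to the range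
of `L`; it is a zero-sum vector on which the form vanishes, hence zero by connectivity. So
`b = L y` with `y = Hb` (recentred to sum zero) and `bᵀ H b = yᵀ L y`. Cauchy–Schwarz on each row of `L y` gives the
lower bound, and `yᵀ L y = yᵀ b ≤ n ‖y‖_∞ ‖b‖_∞` combined with (i) gives the upper bound.
-/

open Matrix Finset

theorem sum_sum_eq_zero_of_swap_eq_neg {ι : Type*} [Fintype ι] {f : ι → ι → ℝ}
    (hf : ∀ i j, f j i = -f i j) : ∑ i, ∑ j, f i j = 0 := by
  have h : ∑ i, ∑ j, f i j = ∑ i, ∑ j, -f i j := by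
    rw [sum_comm]
    exact sum_congr rfl fun _ _ => sum_congr rfl fun _ _ => hf _ _
  simp only [sum_neg_distrib] at h
  linarith

theorem sum_sum_sub_sq {ι : Type*} [Fintype ι] (x : ι → ℝ) :
    ∑ i, ∑ j, (x i - x j) ^ 2 =
      2 * Fintype.card ι * ∑ i, x i ^ 2 - 2 * (∑ i, x i) ^ 2 := by
  simp only [sub_sq, sum_add_distrib, sum_sub_distrib, sum_const, card_univ, nsmul_eq_mul,
    ← mul_sum, ← sum_mul]
  ring

theorem dotProduct_le_card_mul_norm_mul_norm {ι : Type*} [Fintype ι] (x z : ι → ℝ) :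
    x ⬝ᵥ z ≤ Fintype.card ι * ‖x‖ * ‖z‖ := by
  calc x ⬝ᵥ z ≤ ∑ _i : ι, ‖x‖ * ‖z‖ := by
        refine sum_le_sum fun i _ => (le_abs_self _).trans ?_
        rw [abs_mul]
        exact mul_le_mul (norm_le_pi_norm x i) (norm_le_pi_norm z i) (abs_nonneg _)
          (norm_nonneg _)
    _ = Fintype.card ι * ‖x‖ * ‖z‖ := by rw [sum_const, card_univ, nsmul_eq_mul, mul_assoc]

theorem Matrix.sub_mul_mulVec_dotProduct_mulVec_eq_zero {ι R : Type*} [Fintype ι] [CommRing R]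
    {A H : Matrix ι ι R} (hAHA : A * H * A = A) (hAH : (A * H)ᵀ = A * H) (b z : ι → R) :
    (b - (A * H) *ᵥ b) ⬝ᵥ A *ᵥ z = 0 := by
  rw [sub_dotProduct, ← hAH, mulVec_transpose, ← dotProduct_mulVec, mulVec_mulVec, hAHA,
    sub_self]

theorem SimpleGraph.Walk.sub_le_length_mul {V : Type*} {G : SimpleGraph V} {x : V → ℝ} {M : ℝ}
    (hM : ∀ u v, G.Adj u v → x u - x v ≤ M) {i j : V} (p : G.Walk i j) :
    x i - x j ≤ p.length * M := by
  induction p with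
  | nil => simp
  | cons h q ih =>
    rw [length_cons, Nat.cast_succ]
    linarith [hM _ _ h]

theorem SimpleGraph.Connected.norm_le_card_mul {V : Type*} [Fintype V] {G : SimpleGraph V}
    (hG : G.Connected) {x : V → ℝ} (hx : ∑ u, x u = 0) {M : ℝ} (hM0 : 0 ≤ M)
    (hM : ∀ u v, G.Adj u v → x u - x v ≤ M) : ‖x‖ ≤ Fintype.card V * M := by
  have := hG.nonempty
  obtain ⟨i, hi⟩ := Finite.exists_max x
  obtain ⟨j, hj⟩ := Finite.exists_min x
  obtain ⟨k, -, hk⟩ :=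
    exists_le_of_sum_le univ_nonempty (f := fun _ => 0) (g := x) (by simp [hx])
  obtain ⟨l, -, hl⟩ :=
    exists_le_of_sum_le univ_nonempty (f := x) (g := fun _ => 0) (by simp [hx])
  have hnorm : ‖x‖ ≤ x i - x j := by
    refine (pi_norm_le_iff_of_nonneg ?_).2 fun m => ?_
    · linarith [hi k, hj l, hk, hl]
    · rw [Real.norm_eq_abs, abs_le]
      constructor <;> linarith [hi m, hj m, hi k, hj l, hk, hl]
  obtain ⟨p, hp, -⟩ := hG.exists_path_of_dist i j
  have hlen : (p.length : ℝ) ≤ Fintype.card V := by exact_mod_cast hp.length_lt.le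
  calc ‖x‖ ≤ x i - x j := hnorm
    _ ≤ p.length * M := p.sub_le_length_mul hM
    _ ≤ Fintype.card V * M := by gcongr

noncomputable def weightedLaplacian {V : Type*} [Fintype V] [DecidableEq V] (w : V → V → ℝ) :
    Matrix V V ℝ :=
  of fun u v => if u = v then ∑ s ∈ univ.erase u, w u s else -w u v

theorem pos_of_fromRel_adj {V : Type*} {w : V → V → ℝ} (hw : ∀ u v, w u v = w v u) {u v : V}
    (h : (SimpleGraph.fromRel fun u v => 0 < w u v).Adj u v) : 0 < w u v := by
  obtain ⟨-, h | h⟩ := h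
  exacts [h, hw u v ▸ h]

section WeightedLaplacian

variable {V : Type*} [Fintype V] [DecidableEq V] (w : V → V → ℝ)

theorem weightedLaplacian_mulVec_apply (x : V → ℝ) (u : V) :
    (weightedLaplacian w *ᵥ x) u = ∑ v, w u v * (x u - x v) := by
  rw [mulVec, dotProduct, ← add_sum_erase _ _ (mem_univ u), ← add_sum_erase _ _ (mem_univ u)]
  simp only [weightedLaplacian, of_apply, if_true, sub_self, mul_zero, zero_add, sum_mul,
    ← sum_add_distrib]
  refine sum_congr rfl fun v hv => ?_
  rw [if_neg (ne_of_mem_erase hv).symm]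
  ring

variable {w}

theorem sum_weightedLaplacian_mulVec (hw : ∀ u v, w u v = w v u) (x : V → ℝ) :
    ∑ u, (weightedLaplacian w *ᵥ x) u = 0 := by
  simp only [weightedLaplacian_mulVec_apply]
  exact sum_sum_eq_zero_of_swap_eq_neg fun u v => by rw [hw]; ring

theorem dotProduct_weightedLaplacian_mulVec (hw : ∀ u v, w u v = w v u) (x : V → ℝ) :
    x ⬝ᵥ weightedLaplacian w *ᵥ x = (∑ u, ∑ v, w u v * (x u - x v) ^ 2) / 2 := by
  have h := sum_sum_eq_zero_of_swap_eq_neg (f := fun u v => w u v * (x u ^ 2 - x v ^ 2) / 2)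
    fun u v => by rw [hw]; ring
  rw [← sub_eq_zero, ← h, dotProduct, sum_div, ← sum_sub_distrib]
  refine sum_congr rfl fun u _ => ?_
  rw [weightedLaplacian_mulVec_apply, mul_sum, sum_div, ← sum_sub_distrib]
  exact sum_congr rfl fun v _ => by ring

theorem dotProduct_weightedLaplacian_mulVec_nonneg (hw : ∀ u v, w u v = w v u)
    (hw0 : ∀ u v, 0 ≤ w u v) (x : V → ℝ) : 0 ≤ x ⬝ᵥ weightedLaplacian w *ᵥ x := by
  rw [dotProduct_weightedLaplacian_mulVec hw]
  exact div_nonneg (sum_nonneg fun u _ => sum_nonneg fun v _ =>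
    mul_nonneg (hw0 u v) (sq_nonneg _)) zero_le_two

theorem sum_mul_sq_sub_le_dotProduct_weightedLaplacian (hw : ∀ u v, w u v = w v u)
    (hw0 : ∀ u v, 0 ≤ w u v)
    (x : V → ℝ) (u : V) :
    ∑ v, w u v * (x u - x v) ^ 2 ≤ 2 * (x ⬝ᵥ weightedLaplacian w *ᵥ x) := by
  rw [dotProduct_weightedLaplacian_mulVec hw, mul_div_cancel₀ _ two_ne_zero]
  exact single_le_sum (f := fun u => ∑ v, w u v * (x u - x v) ^ 2)
    (fun u _ => sum_nonneg fun v _ => mul_nonneg (hw0 u v) (sq_nonneg _)) (mem_univ u)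

theorem mul_sq_sub_le_dotProduct_weightedLaplacian (hw : ∀ u v, w u v = w v u)
    (hw0 : ∀ u v, 0 ≤ w u v)
    (x : V → ℝ) (u v : V) :
    w u v * (x u - x v) ^ 2 ≤ 2 * (x ⬝ᵥ weightedLaplacian w *ᵥ x) :=
  (single_le_sum (f := fun v => w u v * (x u - x v) ^ 2)
    (fun v _ => mul_nonneg (hw0 u v) (sq_nonneg _)) (mem_univ v)).trans
    (sum_mul_sq_sub_le_dotProduct_weightedLaplacian hw hw0 x u)

theorem eq_zero_of_dotProduct_weightedLaplacian_mulVec_eq_zero (hw : ∀ u v, w u v = w v u)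
    (hw0 : ∀ u v, 0 ≤ w u v) (hconn : (SimpleGraph.fromRel fun u v => 0 < w u v).Connected)
    {x : V → ℝ} (hx : ∑ u, x u = 0) (hQ : x ⬝ᵥ weightedLaplacian w *ᵥ x = 0) :
    x = 0 := by
  refine norm_le_zero_iff.1 ?_
  refine (hconn.norm_le_card_mul hx le_rfl fun u v huv => ?_).trans_eq (mul_zero _)
  have h := mul_sq_sub_le_dotProduct_weightedLaplacian hw hw0 x u v
  rw [hQ, mul_zero] at h
  have hsq : (x u - x v) ^ 2 ≤ 0 :=
    le_of_mul_le_mul_left (by rwa [mul_zero]) (pos_of_fromRel_adj hw huv)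
  nlinarith

theorem le_dotProduct_weightedLaplacian_mulVec (hw : ∀ u v, w u v = w v u)
    (hw0 : ∀ u v, 0 ≤ w u v) (hconn : (SimpleGraph.fromRel fun u v => 0 < w u v).Connected)
    {c : ℝ} (hc : 0 < c) (hcw : ∀ u v, u ≠ v → 0 < w u v → c ≤ w u v)
    {x : V → ℝ} (hx : ∑ u, x u = 0) :
    c / (2 * Fintype.card V ^ 2) * ‖x‖ ^ 2 ≤ x ⬝ᵥ weightedLaplacian w *ᵥ x := by
  set Q := x ⬝ᵥ weightedLaplacian w *ᵥ x
  have hQ : 0 ≤ Q := dotProduct_weightedLaplacian_mulVec_nonneg hw hw0 x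
  have hedge : ∀ u v, (SimpleGraph.fromRel fun u v => 0 < w u v).Adj u v →
      x u - x v ≤ √(2 * Q / c) := by
    intro u v huv
    have hcuv : c ≤ w u v := hcw u v huv.1 (pos_of_fromRel_adj hw huv)
    refine (le_abs_self _).trans (Real.abs_le_sqrt ?_)
    rw [le_div_iff₀ hc]
    nlinarith [mul_sq_sub_le_dotProduct_weightedLaplacian hw hw0 x u v, sq_nonneg (x u - x v)]
  have hnorm := hconn.norm_le_card_mul hx (Real.sqrt_nonneg _) hedge
  have hcard : (0 : ℝ) < Fintype.card V := by
    have := hconn.nonempty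
    exact_mod_cast Fintype.card_pos
  have hsq : ‖x‖ ^ 2 ≤ Fintype.card V ^ 2 * (2 * Q / c) := by
    simpa [mul_pow, Real.sq_sqrt (by positivity : 0 ≤ 2 * Q / c)] using
      pow_le_pow_left₀ (norm_nonneg x) hnorm 2
  rw [div_mul_eq_mul_div, div_le_iff₀ (by positivity)]
  calc c * ‖x‖ ^ 2 ≤ c * (Fintype.card V ^ 2 * (2 * Q / c)) := by gcongr
    _ = Q * (2 * Fintype.card V ^ 2) := by field_simp

theorem dotProduct_weightedLaplacian_mulVec_le (hw : ∀ u v, w u v = w v u) {c : ℝ}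
    (hc : 0 ≤ c) (hcw : ∀ u v, u ≠ v → w u v ≤ c) {x : V → ℝ} (hx : ∑ u, x u = 0) :
    x ⬝ᵥ weightedLaplacian w *ᵥ x ≤ Fintype.card V ^ 2 * c * ‖x‖ ^ 2 := by
  have hsq (u : V) : x u ^ 2 ≤ ‖x‖ ^ 2 := by
    simpa using pow_le_pow_left₀ (abs_nonneg _) (norm_le_pi_norm x u) 2
  rw [dotProduct_weightedLaplacian_mulVec hw]
  calc (∑ u, ∑ v, w u v * (x u - x v) ^ 2) / 2 ≤ (∑ u, ∑ v, c * (x u - x v) ^ 2) / 2 := by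
        refine div_le_div_of_nonneg_right (sum_le_sum fun u _ => sum_le_sum fun v _ => ?_)
          zero_le_two
        rcases eq_or_ne u v with rfl | huv
        · simp
        · exact mul_le_mul_of_nonneg_right (hcw u v huv) (sq_nonneg _)
    _ = c * Fintype.card V * ∑ u, x u ^ 2 := by
        simp only [← mul_sum]
        rw [sum_sum_sub_sq, hx]
        ring
    _ ≤ c * Fintype.card V * ∑ _u : V, ‖x‖ ^ 2 :=
        mul_le_mul_of_nonneg_left (sum_le_sum fun u _ => hsq u) (by positivity)
    _ = Fintype.card V ^ 2 * c * ‖x‖ ^ 2 := by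
        rw [sum_const, card_univ, nsmul_eq_mul]
        ring

theorem sq_weightedLaplacian_mulVec_apply_le (hw : ∀ u v, w u v = w v u)
    (hw0 : ∀ u v, 0 ≤ w u v) (y : V → ℝ) (u : V) :
    (weightedLaplacian w *ᵥ y) u ^ 2 ≤
      (∑ v ∈ univ.erase u, w u v) * (2 * (y ⬝ᵥ weightedLaplacian w *ᵥ y)) := by
  rw [weightedLaplacian_mulVec_apply,
    ← sum_erase (f := fun v => w u v * (y u - y v)) (a := u) univ (by simp)]
  refine (sum_sq_le_sum_mul_sum_of_sq_le_mul _ (fun v _ => hw0 u v)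
    (g := fun v => w u v * (y u - y v) ^ 2) (fun v _ => mul_nonneg (hw0 u v) (sq_nonneg _))
    (fun v _ => le_of_eq (by ring))).trans ?_
  gcongr
  · exact sum_nonneg fun v _ => hw0 u v
  · exact (sum_le_sum_of_subset_of_nonneg (erase_subset _ _)
      fun v _ _ => mul_nonneg (hw0 u v) (sq_nonneg _)).trans
      (sum_mul_sq_sub_le_dotProduct_weightedLaplacian hw hw0 y u)

theorem norm_weightedLaplacian_mulVec_sq_le (hw : ∀ u v, w u v = w v u)
    (hw0 : ∀ u v, 0 ≤ w u v) {c : ℝ} (hc : 0 ≤ c) (hcw : ∀ u v, u ≠ v → w u v ≤ c)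
    (y : V → ℝ) :
    ‖weightedLaplacian w *ᵥ y‖ ^ 2 ≤
      Fintype.card V ^ 2 * c * (y ⬝ᵥ weightedLaplacian w *ᵥ y) := by
  have hQ := dotProduct_weightedLaplacian_mulVec_nonneg hw hw0 y
  have hentry (u : V) : (weightedLaplacian w *ᵥ y) u ^ 2 ≤
      Fintype.card V ^ 2 * c * (y ⬝ᵥ weightedLaplacian w *ᵥ y) := by
    have hdeg : ∑ v ∈ univ.erase u, w u v ≤ (Fintype.card V - 1 : ℝ) * c := by
      have := sum_le_card_nsmul (univ.erase u) (w u) c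
        fun v hv => hcw u v (ne_of_mem_erase hv).symm
      rwa [card_erase_of_mem (mem_univ u), card_univ, nsmul_eq_mul,
        Nat.cast_pred (Fintype.card_pos_iff.2 ⟨u⟩)] at this
    refine (sq_weightedLaplacian_mulVec_apply_le hw hw0 y u).trans ?_
    nlinarith [mul_nonneg hc hQ, sq_nonneg ((Fintype.card V : ℝ) - 1)]
  have hM : 0 ≤ Fintype.card V ^ 2 * c * (y ⬝ᵥ weightedLaplacian w *ᵥ y) := by positivity
  refine (Real.le_sqrt (norm_nonneg _) hM).1 ((pi_norm_le_iff_of_nonneg (Real.sqrt_nonneg _)).2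
    fun u => ?_)
  rw [Real.norm_eq_abs]
  exact Real.abs_le_sqrt (hentry u)

theorem dotProduct_weightedLaplacian_mulVec_le_norm_sq (hw : ∀ u v, w u v = w v u)
    (hw0 : ∀ u v, 0 ≤ w u v) (hconn : (SimpleGraph.fromRel fun u v => 0 < w u v).Connected)
    {c : ℝ} (hc : 0 < c) (hcw : ∀ u v, u ≠ v → 0 < w u v → c ≤ w u v)
    {y : V → ℝ} (hy : ∑ u, y u = 0) :
    y ⬝ᵥ weightedLaplacian w *ᵥ y ≤
      2 * Fintype.card V ^ 4 / c * ‖weightedLaplacian w *ᵥ y‖ ^ 2 := by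
  have hn : (0 : ℝ) < Fintype.card V := by
    have := hconn.nonempty
    exact_mod_cast Fintype.card_pos
  have hlow := le_dotProduct_weightedLaplacian_mulVec hw hw0 hconn hc hcw hy
  have hdot := dotProduct_le_card_mul_norm_mul_norm y (weightedLaplacian w *ᵥ y)
  have hQ := dotProduct_weightedLaplacian_mulVec_nonneg hw hw0 y
  generalize y ⬝ᵥ weightedLaplacian w *ᵥ y = Q at *
  generalize (Fintype.card V : ℝ) = n at *
  have hy2 : ‖y‖ ^ 2 ≤ 2 * n ^ 2 / c * Q := by
    rw [div_mul_eq_mul_div, div_le_iff₀ (by positivity)] at hlow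
    rw [div_mul_eq_mul_div, le_div_iff₀ hc]
    linarith
  rcases hQ.eq_or_lt with rfl | hQ
  · positivity
  refine le_of_mul_le_mul_left ?_ hQ
  calc Q * Q ≤ (n * ‖y‖ * ‖weightedLaplacian w *ᵥ y‖) ^ 2 := by
        rw [sq]
        exact mul_self_le_mul_self hQ.le hdot
    _ = n ^ 2 * ‖y‖ ^ 2 * ‖weightedLaplacian w *ᵥ y‖ ^ 2 := by ring
    _ ≤ n ^ 2 * (2 * n ^ 2 / c * Q) * ‖weightedLaplacian w *ᵥ y‖ ^ 2 := by gcongr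
    _ = Q * (2 * n ^ 4 / c * ‖weightedLaplacian w *ᵥ y‖ ^ 2) := by ring

theorem exists_eq_weightedLaplacian_mulVec_of_pinv (hw : ∀ u v, w u v = w v u)
    (hw0 : ∀ u v, 0 ≤ w u v) (hconn : (SimpleGraph.fromRel fun u v => 0 < w u v).Connected)
    {H : Matrix V V ℝ} (hH1 : weightedLaplacian w * H * weightedLaplacian w = weightedLaplacian w)
    (hH3 : (weightedLaplacian w * H)ᵀ = weightedLaplacian w * H) {b : V → ℝ}
    (hb : ∑ u, b u = 0) :
    ∃ y, ∑ u, y u = 0 ∧ weightedLaplacian w *ᵥ y = b ∧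
      b ⬝ᵥ H *ᵥ b = y ⬝ᵥ weightedLaplacian w *ᵥ y := by
  have hLH : weightedLaplacian w *ᵥ H *ᵥ b = b := by
    have hr := eq_zero_of_dotProduct_weightedLaplacian_mulVec_eq_zero hw hw0 hconn
      (x := b - (weightedLaplacian w * H) *ᵥ b) ?_
      (sub_mul_mulVec_dotProduct_mulVec_eq_zero hH1 hH3 _ _)
    · rw [sub_eq_zero, ← mulVec_mulVec] at hr
      exact hr.symm
    · rw [← mulVec_mulVec]
      simp only [Pi.sub_apply, sum_sub_distrib, hb, sum_weightedLaplacian_mulVec hw, sub_zero]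
  have hV : (Fintype.card V : ℝ) ≠ 0 := by
    have := hconn.nonempty
    exact_mod_cast Fintype.card_ne_zero
  set m := (∑ u, (H *ᵥ b) u) / Fintype.card V
  have hLy : weightedLaplacian w *ᵥ (fun u => (H *ᵥ b) u - m) = b := by
    refine Eq.trans ?_ hLH
    ext u
    simp only [weightedLaplacian_mulVec_apply, sub_sub_sub_cancel_right]
  refine ⟨fun u => (H *ᵥ b) u - m, ?_, hLy, ?_⟩
  · rw [sum_sub_distrib, sum_const, card_univ, nsmul_eq_mul, mul_div_cancel₀ _ hV, sub_self]
  · rw [hLy, dotProduct_comm]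
    simp only [dotProduct, sub_mul, sum_sub_distrib, ← mul_sum, hb, mul_zero, sub_zero]

end WeightedLaplacian

theorem stmt_0_general (n : ℕ)
    (w : Fin n → Fin n → ℝ)
    (hsymm : ∀ u v, w u v = w v u)
    (hnonneg : ∀ u v, 0 ≤ w u v)
    (hconn : (SimpleGraph.fromRel fun u v : Fin n => 0 < w u v).Connected)
    (wmin wmax : ℝ)
    (hwmin : IsLeast {r : ℝ | ∃ u v : Fin n, u ≠ v ∧ 0 < w u v ∧ w u v = r} wmin)
    (hwmax : IsGreatest {r : ℝ | ∃ u v : Fin n, u ≠ v ∧ 0 < w u v ∧ w u v = r} wmax)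
    (α : ℝ) (hα : α = wmax / wmin)
    (L : Matrix (Fin n) (Fin n) ℝ)
    (hL : ∀ u v, L u v = if u = v then ∑ s ∈ univ.erase u, w u s else - w u v)
    (H : Matrix (Fin n) (Fin n) ℝ)
    (hH1 : L * H * L = L)
    (hH3 : (L * H)ᵀ = L * H) :
    (∀ x : Fin n → ℝ, ∑ i, x i = 0 →
        wmin / (2 * (n : ℝ) ^ 4 * α ^ 2) * ‖x‖ ^ 2 ≤ x ⬝ᵥ L.mulVec x ∧
        x ⬝ᵥ L.mulVec x ≤ (n : ℝ) ^ 2 * wmax * ‖x‖ ^ 2) ∧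
    (∀ b : Fin n → ℝ, ∑ i, b i = 0 →
        1 / ((n : ℝ) ^ 2 * wmax) * ‖b‖ ^ 2 ≤ b ⬝ᵥ H.mulVec b ∧
        b ⬝ᵥ H.mulVec b ≤ 2 * (n : ℝ) ^ 4 * α ^ 2 / wmin * ‖b‖ ^ 2) := by
  obtain rfl : L = weightedLaplacian w := by ext u v; rw [hL]; rfl
  obtain ⟨u₀, _, -, hpos₀, hwmin₀⟩ := hwmin.1
  have hn : (1 : ℝ) ≤ n := by exact_mod_cast u₀.pos
  have hwmin_pos : 0 < wmin := hwmin₀ ▸ hpos₀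
  have hwmax_pos : 0 < wmax := hwmin_pos.trans_le (hwmax.2 hwmin.1)
  have hα : 1 ≤ α ^ 2 :=
    one_le_pow₀ (by rw [hα, one_le_div hwmin_pos]; exact hwmax.2 hwmin.1)
  have hlow : ∀ u v, u ≠ v → 0 < w u v → wmin ≤ w u v :=
    fun u v huv hpos => hwmin.2 ⟨u, v, huv, hpos, rfl⟩
  have hup : ∀ u v, u ≠ v → w u v ≤ wmax := fun u v huv =>
    (le_or_gt (w u v) 0).elim (fun h => h.trans hwmax_pos.le)
      fun hpos => hwmax.2 ⟨u, v, huv, hpos, rfl⟩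
  refine ⟨fun x hx => ⟨?_, ?_⟩, fun b hb => ?_⟩
  · refine le_trans ?_
      (le_dotProduct_weightedLaplacian_mulVec hsymm hnonneg hconn hwmin_pos hlow hx)
    rw [Fintype.card_fin]
    refine mul_le_mul_of_nonneg_right (div_le_div_of_nonneg_left hwmin_pos.le (by positivity) ?_)
      (sq_nonneg _)
    nlinarith [le_mul_of_one_le_right (by positivity : (0 : ℝ) ≤ n ^ 4) hα,
      pow_le_pow_right₀ hn (by norm_num : 2 ≤ 4)]
  · simpa using dotProduct_weightedLaplacian_mulVec_le hsymm hwmax_pos.le hup hx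
  obtain ⟨y, hy, rfl, hHb⟩ :=
    exists_eq_weightedLaplacian_mulVec_of_pinv hsymm hnonneg hconn hH1 hH3 hb
  rw [hHb]
  constructor
  · have := norm_weightedLaplacian_mulVec_sq_le hsymm hnonneg hwmax_pos.le hup y
    rw [Fintype.card_fin] at this
    rw [one_div_mul_eq_div, div_le_iff₀ (by positivity)]
    linarith
  · refine (dotProduct_weightedLaplacian_mulVec_le_norm_sq hsymm hnonneg hconn hwmin_pos hlow
      hy).trans ?_
    rw [Fintype.card_fin]
    gcongr ?_ / _ * _
    exact le_mul_of_one_le_right (by positivity) hα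

theorem stmt_0 (n : ℕ) (hn : 2 ≤ n)
    (w : Fin n → Fin n → ℝ)
    (hsymm : ∀ u v, w u v = w v u)
    (hnonneg : ∀ u v, 0 ≤ w u v)
    (hconn : (SimpleGraph.fromRel fun u v : Fin n => 0 < w u v).Connected)
    (wmin wmax : ℝ)
    (hwmin : IsLeast {r : ℝ | ∃ u v : Fin n, u ≠ v ∧ 0 < w u v ∧ w u v = r} wmin)
    (hwmax : IsGreatest {r : ℝ | ∃ u v : Fin n, u ≠ v ∧ 0 < w u v ∧ w u v = r} wmax)
    (α : ℝ) (hα : α = wmax / wmin)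
    (L : Matrix (Fin n) (Fin n) ℝ)
    (hL : ∀ u v, L u v = if u = v then ∑ s ∈ univ.erase u, w u s else - w u v)
    (H : Matrix (Fin n) (Fin n) ℝ)
    (hH1 : L * H * L = L) (hH2 : H * L * H = H)
    (hH3 : (L * H)ᵀ = L * H) (hH4 : (H * L)ᵀ = H * L) :
    (∀ x : Fin n → ℝ, ∑ i, x i = 0 →
        wmin / (2 * (n : ℝ) ^ 4 * α ^ 2) * ‖x‖ ^ 2 ≤ x ⬝ᵥ L.mulVec x ∧
        x ⬝ᵥ L.mulVec x ≤ (n : ℝ) ^ 2 * wmax * ‖x‖ ^ 2) ∧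
    (∀ b : Fin n → ℝ, ∑ i, b i = 0 →
        1 / ((n : ℝ) ^ 2 * wmax) * ‖b‖ ^ 2 ≤ b ⬝ᵥ H.mulVec b ∧
        b ⬝ᵥ H.mulVec b ≤ 2 * (n : ℝ) ^ 4 * α ^ 2 / wmin * ‖b‖ ^ 2) :=
  stmt_0_general n w hsymm hnonneg hconn wmin wmax hwmin hwmax α hα L hL H hH1 hH3
end

section
/- Let G be a connected weighted graph on n ≥ 2 vertices with positive edge weights, let w_min and w_max be the minimum and maximum edge weights, and let α = w_max/w_min. Let ε ≥ 0 and let b, x ∈ ℝⁿ be vectors with bᵀ𝟙 = 0 and (b − L_G x)ᵀ L_G† (b − L_G x) ≤ (ε/(2n³α²))² · (xᵀ L_G x). Then ‖b − L_G x‖_∞ ≤ ε · w_min · ‖x‖_∞. -/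
open Matrix Finset

set_option maxHeartbeats 1000000 in
theorem stmt_2 (n : ℕ) (hn : 2 ≤ n)
    (w : Fin n → Fin n → ℝ)
    (hsymm : ∀ u v, w u v = w v u)
    (hnonneg : ∀ u v, 0 ≤ w u v)
    (hconn : (SimpleGraph.fromRel fun u v : Fin n => 0 < w u v).Connected)
    (wmin wmax : ℝ)
    (hwmin : IsLeast {r : ℝ | ∃ u v : Fin n, u ≠ v ∧ 0 < w u v ∧ w u v = r} wmin)
    (hwmax : IsGreatest {r : ℝ | ∃ u v : Fin n, u ≠ v ∧ 0 < w u v ∧ w u v = r} wmax)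
    (α : ℝ) (hα : α = wmax / wmin)
    (L : Matrix (Fin n) (Fin n) ℝ)
    (hL : ∀ u v, L u v = if u = v then ∑ s ∈ univ.erase u, w u s else - w u v)
    (H : Matrix (Fin n) (Fin n) ℝ)
    (hH1 : L * H * L = L) (hH2 : H * L * H = H)
    (hH3 : (L * H)ᵀ = L * H) (hH4 : (H * L)ᵀ = H * L)
    (ε : ℝ) (hε : 0 ≤ ε) (b x : Fin n → ℝ)
    (hb : ∑ i, b i = 0)
    (happrox : (b - L.mulVec x) ⬝ᵥ H.mulVec (b - L.mulVec x)
      ≤ (ε / (2 * (n : ℝ) ^ 3 * α ^ 2)) ^ 2 * (x ⬝ᵥ L.mulVec x)) :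
    ‖b - L.mulVec x‖ ≤ ε * wmin * ‖x‖ := by
  have hn0 : (0:ℝ) < (n:ℝ) := by
    have : (2:ℝ) ≤ (n:ℝ) := by exact_mod_cast hn
    linarith
  have hwmin_pos : 0 < wmin := by
    obtain ⟨u, v, huv, hpos, heq⟩ := hwmin.1
    linarith [heq ▸ hpos]
  have hwmax_pos : 0 < wmax := by
    obtain ⟨u, v, huv, hpos, heq⟩ := hwmax.1
    linarith [heq ▸ hpos]
  have hminmax : wmin ≤ wmax := hwmin.2 hwmax.1
  have hα_pos : 0 < α := by rw [hα]; positivity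
  have hwle : ∀ u v, u ≠ v → w u v ≤ wmax := by
    intro u v huv
    rcases (hnonneg u v).lt_or_eq with h | h
    · exact hwmax.2 ⟨u, v, huv, h, rfl⟩
    · linarith
  -- symmetry of L
  have hLsymm : Lᵀ = L := by
    ext u v
    simp only [transpose_apply]
    rw [hL, hL]
    by_cases h : u = v
    · subst h; simp
    · simp [h, Ne.symm h, hsymm]
  -- swap lemma for double sums over erase
  have swap : ∀ f : Fin n → Fin n → ℝ,
      ∑ u : Fin n, ∑ v ∈ univ.erase u, f u v = ∑ u : Fin n, ∑ v ∈ univ.erase u, f v u := by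
    intro f
    exact Finset.sum_comm' (fun u v => by
      simp only [Finset.mem_univ, Finset.mem_erase, true_and, and_true]
      exact ne_comm)
  -- quadratic form identity
  have quad : ∀ z : Fin n → ℝ,
      2 * (z ⬝ᵥ L.mulVec z) = ∑ u : Fin n, ∑ v : Fin n, w u v * (z u - z v)^2 := by
    intro z
    have inner : ∀ u : Fin n, (L.mulVec z) u
        = ∑ v ∈ univ.erase u, (w u v * z u - w u v * z v) := by
      intro u
      simp only [mulVec, dotProduct]
      rw [← Finset.add_sum_erase _ _ (Finset.mem_univ u)]
      rw [hL u u, if_pos rfl, Finset.sum_mul]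
      rw [← Finset.sum_add_distrib]
      apply Finset.sum_congr rfl
      intro v hv
      have hvu : u ≠ v := fun h => (Finset.mem_erase.mp hv).1 h.symm
      rw [hL u v, if_neg hvu]
      ring
    have lhs : z ⬝ᵥ L.mulVec z
        = ∑ u : Fin n, ∑ v ∈ univ.erase u, (w u v * (z u * z u) - w u v * (z u * z v)) := by
      simp only [dotProduct]
      apply Finset.sum_congr rfl
      intro u _
      rw [inner u, Finset.mul_sum]
      apply Finset.sum_congr rfl
      intro v _
      ring
    have rhs : ∑ u : Fin n, ∑ v : Fin n, w u v * (z u - z v)^2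
        = ∑ u : Fin n, ∑ v ∈ univ.erase u, w u v * (z u - z v)^2 := by
      apply Finset.sum_congr rfl
      intro u _
      rw [← Finset.add_sum_erase _ _ (Finset.mem_univ u)]
      simp
    rw [rhs, lhs]
    have expand : ∑ u : Fin n, ∑ v ∈ univ.erase u, w u v * (z u - z v)^2
        = (∑ u : Fin n, ∑ v ∈ univ.erase u, (w u v * (z u * z u) - w u v * (z u * z v)))
          + (∑ u : Fin n, ∑ v ∈ univ.erase u, (w u v * (z v * z v) - w u v * (z u * z v))) := by
      rw [← Finset.sum_add_distrib]
      apply Finset.sum_congr rfl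
      intro u _
      rw [← Finset.sum_add_distrib]
      apply Finset.sum_congr rfl
      intro v _
      ring
    rw [expand]
    have : (∑ u : Fin n, ∑ v ∈ univ.erase u, (w u v * (z v * z v) - w u v * (z u * z v)))
        = ∑ u : Fin n, ∑ v ∈ univ.erase u, (w u v * (z u * z u) - w u v * (z u * z v)) := by
      rw [swap (fun u v => w u v * (z v * z v) - w u v * (z u * z v))]
      apply Finset.sum_congr rfl
      intro u _
      apply Finset.sum_congr rfl
      intro v _
      rw [hsymm v u]
      ring
    rw [this]
    ring
  -- nonnegativity of the quadratic form
  have hQnonneg : ∀ z : Fin n → ℝ, 0 ≤ z ⬝ᵥ L.mulVec z := by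
    intro z
    have h := quad z
    have hs : 0 ≤ ∑ u : Fin n, ∑ v : Fin n, w u v * (z u - z v)^2 :=
      Finset.sum_nonneg fun u _ => Finset.sum_nonneg fun v _ =>
        mul_nonneg (hnonneg u v) (sq_nonneg _)
    linarith
  -- upper bound on the quadratic form
  have hQbound : ∀ z : Fin n → ℝ, z ⬝ᵥ L.mulVec z ≤ 2 * n * wmax * ∑ i, (z i)^2 := by
    intro z
    have h1 : ∑ u : Fin n, ∑ v : Fin n, w u v * (z u - z v)^2
        ≤ ∑ u : Fin n, ∑ v : Fin n, wmax * (2 * (z u)^2 + 2 * (z v)^2) := by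
      apply Finset.sum_le_sum; intro u _
      apply Finset.sum_le_sum; intro v _
      by_cases h : u = v
      · subst h; simp only [sub_self]; rw [zero_pow (by norm_num), mul_zero]; positivity
      · have hw := hwle u v h
        nlinarith [sq_nonneg (z u + z v), hnonneg u v, sq_nonneg (z u - z v)]
    have h2 : ∑ u : Fin n, ∑ v : Fin n, wmax * (2 * (z u)^2 + 2 * (z v)^2)
        = 4 * n * wmax * ∑ i, (z i)^2 := by
      simp only [Finset.mul_sum, Finset.sum_add_distrib, Finset.sum_const, Finset.card_univ,
        Fintype.card_fin, nsmul_eq_mul, ← Finset.sum_mul, ← Finset.mul_sum]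
      ring
    have h := quad z
    linarith
  -- column sums of L vanish
  have hcol : ∀ j, ∑ i, L i j = 0 := by
    intro j
    rw [← Finset.add_sum_erase _ _ (Finset.mem_univ j), hL j j, if_pos rfl]
    have h : ∑ i ∈ univ.erase j, L i j = ∑ i ∈ univ.erase j, - w j i := by
      apply Finset.sum_congr rfl
      intro i hi
      rw [hL i j, if_neg (Finset.mem_erase.mp hi).1, hsymm i j]
    rw [h, Finset.sum_neg_distrib]
    ring
  have hsumMul : ∀ z : Fin n → ℝ, ∑ i, (L.mulVec z) i = 0 := by
    intro z
    simp only [mulVec, dotProduct]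
    rw [Finset.sum_comm]
    apply Finset.sum_eq_zero
    intro j _
    rw [← Finset.sum_mul, hcol j, zero_mul]
  -- the residual
  set r : Fin n → ℝ := b - L.mulVec x with hrdef
  have hsumr : ∑ i, r i = 0 := by
    have : ∑ i, r i = ∑ i, b i - ∑ i, (L.mulVec x) i := by
      rw [← Finset.sum_sub_distrib]
      apply Finset.sum_congr rfl
      intro i _
      simp [hrdef]
    rw [this, hb, hsumMul x]
    ring
  set y : Fin n → ℝ := H.mulVec r with hydef
  -- L * (L * H) = L
  have hLLH : L * (L * H) = L := by
    have h1 : (L * H * L)ᵀ = Lᵀ * (L * H)ᵀ := by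
      rw [Matrix.transpose_mul]
    rw [hH1, hH3, hLsymm] at h1
    exact h1.symm
  -- show r is in the range of L : L y = r
  have hLy : L.mulVec y = r := by
    set d : Fin n → ℝ := r - L.mulVec y with hddef
    have hLd : L.mulVec d = 0 := by
      have h1 : L.mulVec (L.mulVec y) = (L * (L * H)).mulVec r := by
        rw [hydef, Matrix.mulVec_mulVec, Matrix.mulVec_mulVec, Matrix.mul_assoc]
      rw [hLLH] at h1
      have : L.mulVec d = L.mulVec r - L.mulVec (L.mulVec y) := by
        rw [hddef, Matrix.mulVec_sub]
      rw [this, h1, sub_self]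
    have hQd : d ⬝ᵥ L.mulVec d = 0 := by rw [hLd]; simp
    have hsum0 : ∑ u : Fin n, ∑ v : Fin n, w u v * (d u - d v)^2 = 0 := by
      have h := quad d
      rw [hQd] at h
      linarith
    have hterm : ∀ u v : Fin n, w u v * (d u - d v)^2 = 0 := by
      intro u v
      have h1 := (Finset.sum_eq_zero_iff_of_nonneg (fun u _ =>
        Finset.sum_nonneg fun v _ => mul_nonneg (hnonneg u v) (sq_nonneg _))).mp hsum0 u
        (Finset.mem_univ u)
      exact (Finset.sum_eq_zero_iff_of_nonneg (fun v _ =>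
        mul_nonneg (hnonneg u v) (sq_nonneg _))).mp h1 v (Finset.mem_univ v)
    have hedge : ∀ u v : Fin n, 0 < w u v → d u = d v := by
      intro u v hw
      have h := hterm u v
      have h2 : (d u - d v)^2 = 0 := by
        rcases mul_eq_zero.mp h with h' | h'
        · exact absurd h' (ne_of_gt hw)
        · exact h'
      have := pow_eq_zero_iff (n := 2) (by norm_num) |>.mp h2
      linarith [sub_eq_zero.mp this]
    have hconst : ∀ u v : Fin n, d u = d v := by
      intro u v
      obtain ⟨p⟩ := hconn.preconnected u v
      induction p with
      | nil => rfl
      | cons h q ih =>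
        rename_i a c _
        have hadj := (SimpleGraph.fromRel_adj _ a c).mp h
        rcases hadj.2 with h' | h'
        · exact (hedge a c h').trans ih
        · exact ((hedge c a h').symm).trans ih
    have hsumd : ∑ j, d j = 0 := by
      have : ∑ j, d j = ∑ j, r j - ∑ j, (L.mulVec y) j := by
        rw [← Finset.sum_sub_distrib]
        apply Finset.sum_congr rfl
        intro j _
        simp [hddef]
      rw [this, hsumr, hydef, hsumMul]
      ring
    have hd0 : d = 0 := by
      funext i
      have h1 : ∑ j, d j = n * d i := by
        rw [Finset.sum_congr rfl (fun j _ => hconst j i)]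
        simp [Finset.sum_const, Finset.card_univ]
      rw [hsumd] at h1
      have : d i = 0 := by
        rcases mul_eq_zero.mp h1.symm with h' | h'
        · exact absurd h' (ne_of_gt hn0)
        · exact h'
      simpa using this
    exact (sub_eq_zero.mp hd0).symm
  -- symmetric bilinear form
  have hvm : ∀ a : Fin n → ℝ, a ᵥ* L = L *ᵥ a := by
    intro a
    conv_lhs => rw [← hLsymm]
    exact Matrix.vecMul_transpose L a
  have hdotsym : ∀ a c : Fin n → ℝ, a ⬝ᵥ L.mulVec c = c ⬝ᵥ L.mulVec a := by
    intro a c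
    rw [Matrix.dotProduct_mulVec, hvm, dotProduct_comm]
  -- Cauchy-Schwarz for the L-form
  have hCS : (r ⬝ᵥ L.mulVec y)^2 ≤ (r ⬝ᵥ L.mulVec r) * (y ⬝ᵥ L.mulVec y) := by
    have key : ∀ t : ℝ, 0 ≤ (y ⬝ᵥ L.mulVec y) * (t * t)
        + (2 * (r ⬝ᵥ L.mulVec y)) * t + (r ⬝ᵥ L.mulVec r) := by
      intro t
      have h0 := hQnonneg (r + t • y)
      have expand : (r + t • y) ⬝ᵥ L.mulVec (r + t • y)
          = (y ⬝ᵥ L.mulVec y) * (t * t) + (2 * (r ⬝ᵥ L.mulVec y)) * t + (r ⬝ᵥ L.mulVec r) := by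
        rw [Matrix.mulVec_add, Matrix.mulVec_smul, dotProduct_add, add_dotProduct,
          add_dotProduct, dotProduct_smul, smul_dotProduct, smul_dotProduct, dotProduct_smul]
        rw [hdotsym y r]
        simp only [smul_eq_mul]
        ring
      linarith
    have hd := discrim_le_zero key
    rw [discrim] at hd
    nlinarith
  have hB : r ⬝ᵥ L.mulVec y = r ⬝ᵥ r := by rw [hLy]
  have hQy_eq : y ⬝ᵥ L.mulVec y = r ⬝ᵥ H.mulVec r := by
    conv_lhs => rw [← hH1]
    rw [← Matrix.mulVec_mulVec, hLy, ← Matrix.mulVec_mulVec, hdotsym, hLy, dotProduct_comm]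
  set S := r ⬝ᵥ r with hSdef
  have hSsum : S = ∑ i, (r i)^2 := by
    simp [hSdef, dotProduct, sq]
  have hS0 : 0 ≤ S := by rw [hSsum]; positivity
  set δ := ε / (2 * (n:ℝ)^3 * α^2) with hδdef
  have hδ0 : 0 ≤ δ := by positivity
  set C := 2 * (n:ℝ) * wmax with hCdef
  have hC0 : 0 < C := by positivity
  have hQr : r ⬝ᵥ L.mulVec r ≤ C * S := by rw [hSsum]; exact hQbound r
  have hQy_le : y ⬝ᵥ L.mulVec y ≤ δ^2 * (x ⬝ᵥ L.mulVec x) :=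
    le_trans (le_of_eq hQy_eq) happrox
  have hxsum : ∑ i, (x i)^2 ≤ n * ‖x‖^2 := by
    have hbd : ∀ i, (x i)^2 ≤ ‖x‖^2 := by
      intro i
      have h := norm_le_pi_norm x i
      have h2 : |x i| ≤ ‖x‖ := by simpa using h
      nlinarith [abs_nonneg (x i), sq_abs (x i)]
    calc ∑ i, (x i)^2 ≤ ∑ _i : Fin n, ‖x‖^2 := Finset.sum_le_sum (fun i _ => hbd i)
    _ = n * ‖x‖^2 := by simp [Finset.sum_const, Finset.card_univ]
  have hQx : x ⬝ᵥ L.mulVec x ≤ C * (n * ‖x‖^2) :=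
    le_trans (hQbound x) (mul_le_mul_of_nonneg_left hxsum hC0.le)
  have hS2 : S^2 ≤ (C * S) * (δ^2 * (x ⬝ᵥ L.mulVec x)) := by
    calc S^2 = (r ⬝ᵥ L.mulVec y)^2 := by rw [hB]
    _ ≤ (r ⬝ᵥ L.mulVec r) * (y ⬝ᵥ L.mulVec y) := hCS
    _ ≤ (C * S) * (δ^2 * (x ⬝ᵥ L.mulVec x)) := by
        exact mul_le_mul hQr hQy_le (hQnonneg y) (mul_nonneg hC0.le hS0)
  have hSle : S ≤ C^2 * δ^2 * ((n:ℝ) * ‖x‖^2) := by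
    rcases hS0.lt_or_eq with hpos | heq
    · have h2 : S * S ≤ S * (C^2 * δ^2 * ((n:ℝ) * ‖x‖^2)) := by
        calc S * S = S^2 := (sq S).symm
        _ ≤ (C * S) * (δ^2 * (x ⬝ᵥ L.mulVec x)) := hS2
        _ ≤ (C * S) * (δ^2 * (C * ((n:ℝ) * ‖x‖^2))) := by
            exact mul_le_mul_of_nonneg_left
              (mul_le_mul_of_nonneg_left hQx (sq_nonneg δ)) (mul_nonneg hC0.le hS0)
        _ = S * (C^2 * δ^2 * ((n:ℝ) * ‖x‖^2)) := by ring
      exact le_of_mul_le_mul_left h2 hpos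
    · rw [← heq]
      exact mul_nonneg (mul_nonneg (sq_nonneg C) (sq_nonneg δ))
        (mul_nonneg hn0.le (sq_nonneg _))
  have hne : (univ : Finset (Fin n)).Nonempty := by
    rw [Finset.univ_nonempty_iff]
    exact Fin.pos_iff_nonempty.mp (by omega)
  obtain ⟨i0, -, hi0⟩ := Finset.exists_mem_eq_sup (univ : Finset (Fin n)) hne
    (fun i => ‖r i‖₊)
  have hnormr : ‖r‖ = |r i0| := by
    rw [Pi.norm_def, hi0]
    simp [Real.norm_eq_abs]
  have hr2 : ‖r‖^2 ≤ S := by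
    rw [hnormr, sq_abs, hSsum]
    exact Finset.single_le_sum (fun i _ => sq_nonneg (r i)) (Finset.mem_univ i0)
  have hkey : C^2 * δ^2 * (n:ℝ) ≤ (ε * wmin)^2 := by
    have h1 : C^2 * δ^2 * (n:ℝ) = ε^2 * wmin^4 / ((n:ℝ)^3 * wmax^2) := by
      have hwminne : wmin ≠ 0 := ne_of_gt hwmin_pos
      have hwmaxne : wmax ≠ 0 := ne_of_gt hwmax_pos
      have hnne : (n:ℝ) ≠ 0 := ne_of_gt hn0
      rw [hCdef, hδdef, hα]
      field_simp
    rw [h1, div_le_iff₀ (by positivity)]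
    have h2n : (2:ℝ) ≤ (n:ℝ) := by exact_mod_cast hn
    have hn1 : (1:ℝ) ≤ (n:ℝ)^3 := one_le_pow₀ (by linarith)
    have h2 : wmin^2 ≤ wmax^2 := by nlinarith
    have h3 : wmax^2 ≤ (n:ℝ)^3 * wmax^2 := by nlinarith
    nlinarith [mul_le_mul_of_nonneg_left (h2.trans h3) (sq_nonneg (ε * wmin))]
  have hfinal : ‖r‖^2 ≤ (ε * wmin * ‖x‖)^2 := by
    calc ‖r‖^2 ≤ S := hr2
    _ ≤ C^2 * δ^2 * ((n:ℝ) * ‖x‖^2) := hSle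
    _ = (C^2 * δ^2 * (n:ℝ)) * ‖x‖^2 := by ring
    _ ≤ (ε * wmin)^2 * ‖x‖^2 := mul_le_mul_of_nonneg_right hkey (sq_nonneg _)
    _ = (ε * wmin * ‖x‖)^2 := by ring
  have hrhs : 0 ≤ ε * wmin * ‖x‖ := by positivity
  nlinarith [norm_nonneg r, hfinal, hrhs]
end

section
/- Let k ≥ 1 and n ≥ k+1 be integers, and let G be a simple (unweighted, undirected) graph on n vertices that contains no independent set of size k+1. Then the number of edges of G is at least binom(n, k+1)/binom(n−2, k−1) = n(n−1)/((k+1)k). -/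
/-!
Double count the pairs (edge `e`, `r`-set `S ⊇ e`). Every `r`-set contains an edge, since it is not
independent, while every edge lies in `binom(n-2, r-2)` of them; hence
`binom(n, r) ≤ |E| binom(n-2, r-2)`, and `binom(n, r) binom(r, 2) = binom(n, 2) binom(n-2, r-2)`
turns this into `binom(n, 2) ≤ |E| binom(r, 2)`.
-/

open Finset

namespace SimpleGraph

variable {V : Type*} [Fintype V] [DecidableEq V] {G : SimpleGraph V} [DecidableRel G.Adj]

lemma card_powersetCard_filter_edge_subset {r : ℕ} (hr : 2 ≤ r) {e : Sym2 V}
    (he : e ∈ G.edgeFinset) :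
    #{S ∈ powersetCard r (univ : Finset V) | e.toFinset ⊆ S} =
      (Fintype.card V - 2).choose (r - 2) := by
  have hcard : #e.toFinset = 2 :=
    Sym2.card_toFinset_of_not_isDiag e (G.not_isDiag_of_mem_edgeSet (mem_edgeFinset.1 he))
  rw [card_filter_powersetCard_subset _ _ _ (subset_univ _) (hcard ▸ hr), hcard, card_univ]

lemma IndepSetFree.exists_edge_subset {r : ℕ} (hG : G.IndepSetFree r) {S : Finset V}
    (hS : #S = r) : ∃ e ∈ G.edgeFinset, e.toFinset ⊆ S := by
  by_contra! hno
  refine hG S ⟨fun u hu v hv huv hadj => ?_, hS⟩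
  refine hno s(u, v) (mem_edgeFinset.2 hadj) ?_
  rw [Sym2.toFinset_mk_eq]
  exact insert_subset hu (singleton_subset_iff.2 hv)

lemma IndepSetFree.choose_le_card_edgeFinset_mul {r : ℕ} (hG : G.IndepSetFree r) (hr : 2 ≤ r) :
    (Fintype.card V).choose r ≤ #G.edgeFinset * (Fintype.card V - 2).choose (r - 2) := by
  have key := card_mul_le_card_mul (fun (S : Finset V) (e : Sym2 V) => e.toFinset ⊆ S)
    (s := powersetCard r univ) (t := G.edgeFinset) (m := 1)
    (n := (Fintype.card V - 2).choose (r - 2))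
    (fun S hS => by
      obtain ⟨e, he, heS⟩ := hG.exists_edge_subset (mem_powersetCard.1 hS).2
      exact one_le_card.2 ⟨e, (mem_bipartiteAbove _).2 ⟨he, heS⟩⟩)
    (fun e he => (card_powersetCard_filter_edge_subset hr he).le)
  rwa [card_powersetCard, card_univ, mul_one] at key

lemma IndepSetFree.choose_two_le_card_edgeFinset_mul {r : ℕ} (hG : G.IndepSetFree r)
    (hr : 2 ≤ r) (hrV : r ≤ Fintype.card V) :
    (Fintype.card V).choose 2 ≤ #G.edgeFinset * r.choose 2 := by
  have hpos : 0 < (Fintype.card V - 2).choose (r - 2) := Nat.choose_pos (by omega)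
  refine Nat.le_of_mul_le_mul_right ?_ hpos
  calc (Fintype.card V).choose 2 * (Fintype.card V - 2).choose (r - 2)
      = (Fintype.card V).choose r * r.choose 2 := (Nat.choose_mul hr).symm
    _ ≤ #G.edgeFinset * (Fintype.card V - 2).choose (r - 2) * r.choose 2 :=
      Nat.mul_le_mul_right _ (hG.choose_le_card_edgeFinset_mul hr)
    _ = #G.edgeFinset * r.choose 2 * (Fintype.card V - 2).choose (r - 2) := by ring

end SimpleGraph

theorem stmt_5 (n k : ℕ) (hk : 1 ≤ k) (hn : k + 1 ≤ n)
    (G : SimpleGraph (Fin n)) [DecidableRel G.Adj]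
    (hindep : ∀ s : Finset (Fin n),
      (∀ u ∈ s, ∀ v ∈ s, u ≠ v → ¬ G.Adj u v) → s.card ≤ k) :
    ((n : ℝ) * ((n : ℝ) - 1)) / (((k : ℝ) + 1) * k) ≤ (G.edgeFinset.card : ℝ) := by
  have hfree : G.IndepSetFree (k + 1) := fun s hs => by
    have := hindep s fun u hu v hv huv => hs.isIndepSet hu hv huv
    have := hs.card_eq
    omega
  have hbound := hfree.choose_two_le_card_edgeFinset_mul (by omega) (by simpa using hn)
  rw [Fintype.card_fin] at hbound
  have hreal : ((n.choose 2 : ℕ) : ℝ) ≤ ((#G.edgeFinset * (k + 1).choose 2 : ℕ) : ℝ) := by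
    exact_mod_cast hbound
  rw [Nat.cast_mul, Nat.cast_choose_two, Nat.cast_choose_two] at hreal
  rw [div_le_iff₀ (by positivity)]
  push_cast at hreal
  linarith
end

section
/- Let c > 1, let n ≥ 2, and let G be a simple graph on n vertices with at least n²/c edges. Then there exists a set S of vertices of G with the following three properties: (1) |S| ≥ n/(40c); (2) the conductance of the induced subgraph G[S] satisfies Φ_{G[S]} ≥ 1/(100·c·log₂ n); and (3) every vertex of S has degree at least n/(10000c) within G[S]. -/
/-!
Peel the graph down while keeping the invariant that the current vertex set `S` is *heavy*:
the number of ordered edge pairs inside `G[S]` is at least `α |S| (|S|/n)^κ`, with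
`α = n / (2c)` and `κ = 1 / log₂ n` (so that `(|S|/n)^κ ≥ 1/2`). The whole vertex set is heavy
by the density assumption. Deleting a vertex of degree `< n / (10000c)` in `G[S]` keeps `S`
heavy, and across a cut of conductance `< φ` one of the two sides stays heavy: the extra factor
`(|T|/|S|)^κ ≤ 1 - 2φ` or `(1 - |T|/|S|)^κ ≤ 1 - 2φ|T|/|S|` pays for the lost cut edges. So a
smallest nonempty heavy set has both properties, and being heavy forces `|S| ≥ α / 2`.
-/

open Finset Real

theorem one_sub_rpow_le {x κ : ℝ} (hx : x ≤ 1) (hκ₀ : 0 ≤ κ) (hκ₁ : κ ≤ 1) :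
    (1 - x) ^ κ ≤ 1 - κ * x := by
  simpa [sub_eq_add_neg] using rpow_one_add_le_one_add_mul_self (s := -x) (by linarith) hκ₀ hκ₁

theorem rpow_le_one_sub_half {x κ : ℝ} (hx₀ : 0 ≤ x) (hx : x ≤ 1 / 2) (hκ₀ : 0 ≤ κ)
    (hκ₁ : κ ≤ 1) : x ^ κ ≤ 1 - κ / 2 :=
  calc x ^ κ ≤ (1 - 1 / 2) ^ κ := by gcongr; linarith
    _ ≤ 1 - κ * (1 / 2) := one_sub_rpow_le (by norm_num) hκ₀ hκ₁
    _ = 1 - κ / 2 := by ring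

theorem half_le_div_rpow {s N κ : ℝ} (hs : 1 ≤ s) (hN : 0 < N) (hκ : 0 ≤ κ) (hNκ : N ^ κ ≤ 2) :
    1 / 2 ≤ (s / N) ^ κ :=
  calc 1 / 2 ≤ (N ^ κ)⁻¹ := by rw [one_div]; gcongr
    _ = (1 / N) ^ κ := by rw [one_div, Real.inv_rpow hN.le]
    _ ≤ (s / N) ^ κ := by gcongr

theorem mul_div_rpow_rescale (α κ : ℝ) {s u N : ℝ} (hs : 0 < s) (hu : 0 ≤ u) (hN : 0 ≤ N) :
    α * u * (u / N) ^ κ = α * s * (s / N) ^ κ * (u / s) * (u / s) ^ κ := by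
  have hsplit : u / N = s / N * (u / s) := by field_simp
  rw [hsplit, Real.mul_rpow (by positivity) (by positivity)]
  field_simp

/-- `P` bounds the potential of a set of volume `v`, and `x` is the fraction of its vertices on
the side of volume `a ≤ v / 2` of a cut with `cut` edges. -/
theorem le_or_le_of_sparse_split {P v a cut φ κ x : ℝ} (hP : 0 ≤ P) (hPv : P ≤ v) (hφ : 0 ≤ φ)
    (hφκ : 4 * φ ≤ κ) (hκ : κ ≤ 1) (hx₀ : 0 ≤ x) (hx₁ : x ≤ 1) (ha : 2 * a ≤ v)
    (hcut : cut ≤ φ * a) :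
    P * x * x ^ κ ≤ a - cut ∨ P * (1 - x) * (1 - x) ^ κ ≤ v - a - cut := by
  have hκ₀ : 0 ≤ κ := by linarith
  have hv : 0 ≤ v := hP.trans hPv
  rcases le_or_gt x (1 / 2) with hx | hx
  · rcases le_or_gt (v * x) a with hva | hva
    · left
      have hxκ : x ^ κ ≤ 1 - 2 * φ := by linarith [rpow_le_one_sub_half hx₀ hx hκ₀ hκ]
      calc P * x * x ^ κ ≤ v * x * (1 - 2 * φ) := by gcongr
        _ ≤ a * (1 - 2 * φ) := by gcongr; linarith
        _ ≤ a - cut := by nlinarith [mul_nonneg hv hx₀]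
    · right
      have hxκ : (1 - x) ^ κ ≤ 1 - 4 * φ * x := by
        nlinarith [one_sub_rpow_le hx₁ hκ₀ hκ]
      calc P * (1 - x) * (1 - x) ^ κ ≤ v * (1 - x) * (1 - 4 * φ * x) := by gcongr
        _ ≤ v - (1 + φ) * (v * x) := by nlinarith [mul_nonneg (mul_nonneg hφ hx₀) hv]
        _ ≤ v - a - cut := by nlinarith
  · right
    have hxκ : (1 - x) ^ κ ≤ 1 - 2 * φ := by
      linarith [rpow_le_one_sub_half (x := 1 - x) (by linarith) (by linarith) hκ₀ hκ]
    calc P * (1 - x) * (1 - x) ^ κ ≤ v * (1 / 2) * (1 - 2 * φ) := by gcongr; linarith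
      _ ≤ v - a - cut := by nlinarith

namespace SimpleGraph

variable {V : Type*} (G : SimpleGraph V) [DecidableRel G.Adj]

/-- The volume `μ(S)` of `S` in `G[S]`, counted as ordered pairs of adjacent vertices of `S`. -/
def inducedVolume (S : Finset V) : ℕ := #(G.interedges S S)

theorem sum_card_filter_adj (T S : Finset V) :
    ∑ i ∈ T, #(S.filter (G.Adj i)) = #(G.interedges T S) := by
  rw [interedges_def, card_filter, sum_product]
  simp only [card_filter]

theorem card_interedges_comm (S T : Finset V) : #(G.interedges S T) = #(G.interedges T S) :=
  haveI := G.symm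
  Rel.card_interedges_comm (r := G.Adj) S T

theorem inducedVolume_le_card_mul_card (S : Finset V) : G.inducedVolume S ≤ #S * #S :=
  G.card_interedges_le_mul S S

theorem inducedVolume_singleton (i : V) : G.inducedVolume {i} = 0 := by
  simp [inducedVolume, interedges_def, filter_singleton]

theorem inducedVolume_univ [Fintype V] :
    G.inducedVolume univ = 2 * #G.edgeFinset := by
  rw [← sum_degrees_eq_twice_card_edges, inducedVolume, ← sum_card_filter_adj]
  simp only [← card_neighborFinset_eq_degree, neighborFinset_eq_filter]

def IsHeavy (α κ N : ℝ) (S : Finset V) : Prop :=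
  α * #S * (#S / N) ^ κ ≤ G.inducedVolume S

variable {G} {α κ φ δ N : ℝ} {S T : Finset V}

theorem not_isHeavy_singleton (hα : 0 < α) (hN : 0 < N) (i : V) : ¬G.IsHeavy α κ N {i} := by
  rw [IsHeavy, inducedVolume_singleton, card_singleton, Nat.cast_one, Nat.cast_zero, not_le]
  positivity

theorem IsHeavy.half_le_card (h : G.IsHeavy α κ N S) (hS : S.Nonempty) (hα : 0 ≤ α)
    (hN : 0 < N) (hκ : 0 ≤ κ) (hNκ : N ^ κ ≤ 2) : α / 2 ≤ #S := by
  have hs : (1 : ℝ) ≤ #S := by exact_mod_cast hS.card_pos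
  have hvol : (G.inducedVolume S : ℝ) ≤ #S * #S := by
    exact_mod_cast G.inducedVolume_le_card_mul_card S
  have hpow := half_le_div_rpow hs hN hκ hNκ
  have : α / 2 * #S ≤ #S * #S :=
    calc α / 2 * #S = α * #S * (1 / 2) := by ring
      _ ≤ α * #S * (#S / N) ^ κ := by gcongr
      _ ≤ #S * #S := h.trans hvol
  nlinarith

variable [DecidableEq V]

variable (G) in
theorem card_interedges_of_subset (hT : T ⊆ S) :
    #(G.interedges T S) = G.inducedVolume T + #(G.interedges T (S \ T)) := by
  conv_lhs => rw [← union_sdiff_of_subset hT]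
  rw [inducedVolume, ← card_union_of_disjoint (G.interedges_disjoint_right T disjoint_sdiff)]
  congr 1
  ext ⟨a, b⟩
  simp only [mem_interedges_iff, mem_union]
  tauto

variable (G) in
theorem inducedVolume_eq_add (hT : T ⊆ S) :
    G.inducedVolume S = #(G.interedges T S) + #(G.interedges (S \ T) S) := by
  rw [← sum_card_filter_adj, ← sum_card_filter_adj, inducedVolume, ← sum_card_filter_adj,
    ← sum_sdiff hT, add_comm]

variable (G) in
theorem inducedVolume_le_erase {i : V} (hi : i ∈ S) :
    G.inducedVolume S ≤ G.inducedVolume (S.erase i) + 2 * #(S.filter (G.Adj i)) := by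
  have hsub : {i} ⊆ S := singleton_subset_iff.mpr hi
  have hdeg : #(G.interedges {i} S) = #(S.filter (G.Adj i)) := by
    rw [← sum_card_filter_adj, sum_singleton]
  have hcut : #(G.interedges {i} (S.erase i)) ≤ #(S.filter (G.Adj i)) :=
    hdeg ▸ card_le_card (G.interedges_mono subset_rfl (erase_subset i S))
  have hrest := G.card_interedges_of_subset (sdiff_subset (s := S) (t := {i}))
  rw [Finset.sdiff_sdiff_eq_self hsub, sdiff_singleton_eq_erase,
    G.card_interedges_comm _ {i}] at hrest
  rw [G.inducedVolume_eq_add hsub, sdiff_singleton_eq_erase, hdeg, hrest]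
  omega

variable (G) in
/-- The volume of `T` in `G[S]` is `#(G.interedges T S)`. -/
def InducedConductanceAtLeast (φ : ℝ) (S : Finset V) : Prop :=
  ∀ T ⊆ S, T.Nonempty → T ≠ S →
    φ * min (#(G.interedges T S) : ℝ) #(G.interedges (S \ T) S) ≤ #(G.interedges T (S \ T))

theorem IsHeavy.erase (h : G.IsHeavy α κ N S) {i : V} (hi : i ∈ S)
    (hdeg : #(S.filter (G.Adj i)) ≤ δ) (hδ : 4 * δ ≤ α) (hN : 0 < N) (hκ : 0 ≤ κ)
    (hNκ : N ^ κ ≤ 2) : G.IsHeavy α κ N (S.erase i) := by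
  have hs : (1 : ℝ) ≤ #S := by exact_mod_cast card_pos.mpr ⟨i, hi⟩
  have hcard : (#(S.erase i) : ℝ) = #S - 1 := by
    rw [card_erase_of_mem hi, Nat.cast_sub (card_pos.mpr ⟨i, hi⟩), Nat.cast_one]
  have hvol : (G.inducedVolume S : ℝ) ≤ G.inducedVolume (S.erase i) + 2 * δ := by
    have : (G.inducedVolume S : ℝ) ≤
        G.inducedVolume (S.erase i) + 2 * #(S.filter (G.Adj i)) := by
      exact_mod_cast G.inducedVolume_le_erase hi
    linarith
  have hα : 0 ≤ α := by linarith [(Nat.cast_nonneg _).trans hdeg]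
  have hpow := half_le_div_rpow hs hN hκ hNκ
  rw [IsHeavy, hcard]
  calc α * (#S - 1) * ((#S - 1) / N) ^ κ ≤ α * (#S - 1) * (#S / N) ^ κ := by
        have : (0 : ℝ) ≤ #S - 1 := by linarith
        gcongr
        linarith
    _ = α * #S * (#S / N) ^ κ - α * (#S / N) ^ κ := by ring
    _ ≤ G.inducedVolume S - α / 2 := by unfold IsHeavy at h; nlinarith
    _ ≤ G.inducedVolume (S.erase i) := by linarith

theorem IsHeavy.or_of_sparse_cut (h : G.IsHeavy α κ N S) (hT : T ⊆ S) (hα : 0 ≤ α) (hN : 0 ≤ N)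
    (hφ : 0 ≤ φ) (hφκ : 4 * φ ≤ κ) (hκ : κ ≤ 1)
    (hcut : (#(G.interedges T (S \ T)) : ℝ) ≤
      φ * min (#(G.interedges T S) : ℝ) #(G.interedges (S \ T) S)) :
    G.IsHeavy α κ N T ∨ G.IsHeavy α κ N (S \ T) := by
  wlog hle : #(G.interedges T S) ≤ #(G.interedges (S \ T) S) generalizing T
  · have hT' : S \ (S \ T) = T := Finset.sdiff_sdiff_eq_self hT
    have hC := this (T := S \ T) sdiff_subset (by rwa [hT', G.card_interedges_comm, min_comm])
      (by rw [hT']; omega)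
    rw [hT'] at hC
    exact hC.symm
  rcases S.eq_empty_or_nonempty with rfl | hS
  · simp [subset_empty.mp hT, IsHeavy, inducedVolume]
  have hs : (0 : ℝ) < #S := by exact_mod_cast hS.card_pos
  have hvol : (G.inducedVolume S : ℝ) = #(G.interedges T S) + #(G.interedges (S \ T) S) := by
    exact_mod_cast G.inducedVolume_eq_add hT
  have hvolT : (#(G.interedges T S) : ℝ) = G.inducedVolume T + #(G.interedges T (S \ T)) := by
    exact_mod_cast G.card_interedges_of_subset hT
  have hvolC : (#(G.interedges (S \ T) S) : ℝ) =
      G.inducedVolume (S \ T) + #(G.interedges T (S \ T)) := by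
    have := G.card_interedges_of_subset (sdiff_subset (s := S) (t := T))
    rw [Finset.sdiff_sdiff_eq_self hT, G.card_interedges_comm _ T] at this
    exact_mod_cast this
  have hcardC : (#(S \ T) : ℝ) = #S - #T := by
    rw [card_sdiff_of_subset hT, Nat.cast_sub (card_le_card hT)]
  have hx : (#T : ℝ) / #S ≤ 1 := div_le_one_of_le₀ (by exact_mod_cast card_le_card hT) hs.le
  have hfrac : ((#S : ℝ) - #T) / #S = 1 - #T / #S := by field_simp
  unfold IsHeavy at h ⊢
  rw [hcardC, mul_div_rpow_rescale α κ (u := #T) hs (Nat.cast_nonneg _) hN,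
    mul_div_rpow_rescale α κ (u := #S - #T) hs (by rw [← hcardC]; positivity) hN, hfrac]
  have hle' : (#(G.interedges T S) : ℝ) ≤ #(G.interedges (S \ T) S) := by exact_mod_cast hle
  have hsplit := le_or_le_of_sparse_split (a := #(G.interedges T S)) (by positivity) h hφ hφκ hκ
    (by positivity) hx (by linarith) (hcut.trans (by gcongr; exact min_le_left _ _))
  exact hsplit.imp (·.trans_eq (by linarith)) (·.trans_eq (by linarith))

theorem IsHeavy.exists_large_inducedConductanceAtLeast (h₀ : G.IsHeavy α κ N S)
    (hS : S.Nonempty) (hα : 0 < α) (hφ : 0 ≤ φ) (hφκ : 4 * φ ≤ κ) (hκ : κ ≤ 1) (hN : 0 < N)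
    (hNκ : N ^ κ ≤ 2) (hδ : 4 * δ ≤ α) :
    ∃ S : Finset V, α / 2 ≤ #S ∧ G.InducedConductanceAtLeast φ S ∧
      ∀ i ∈ S, δ ≤ #(S.filter (G.Adj i)) := by
  have hκ₀ : 0 ≤ κ := by linarith
  obtain ⟨S, hmin⟩ :=
    exists_minimal_of_wellFoundedLT (fun S : Finset V => S.Nonempty ∧ G.IsHeavy α κ N S) ⟨S, hS, h₀⟩
  obtain ⟨hne, hheavy⟩ := hmin.prop
  refine ⟨S, hheavy.half_le_card hne hα.le hN hκ₀ hNκ, fun T hTS hT hTS' => ?_, fun i hi => ?_⟩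
  · by_contra! hsparse
    rcases hheavy.or_of_sparse_cut hTS hα.le hN.le hφ hφκ hκ hsparse.le with hT' | hC'
    · exact hmin.not_prop_of_lt (hTS.ssubset_of_ne hTS') ⟨hT, hT'⟩
    · have hC : (S \ T).Nonempty := sdiff_nonempty.mpr fun h => hTS' (hTS.antisymm h)
      exact hmin.not_prop_of_lt (sdiff_ssubset hTS hT) ⟨hC, hC'⟩
  · by_contra! hdeg
    obtain ⟨j, rfl⟩ | hS := hne.exists_eq_singleton_or_nontrivial
    · exact not_isHeavy_singleton hα hN j hheavy
    exact hmin.not_prop_of_lt (erase_ssubset hi)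
      ⟨(erase_nonempty hi).mpr hS, hheavy.erase hi hdeg.le hδ hN hκ₀ hNκ⟩

end SimpleGraph

theorem stmt_6 (n : ℕ) (hn : 2 ≤ n) (c : ℝ) (hc : 1 < c)
    (G : SimpleGraph (Fin n)) [DecidableRel G.Adj]
    (hdense : (n : ℝ) ^ 2 / c ≤ (G.edgeFinset.card : ℝ)) :
    ∃ S : Finset (Fin n),
      ((n : ℝ) / (40 * c) ≤ (S.card : ℝ)) ∧
      (∀ T ⊆ S, T.Nonempty → T ≠ S →
        (1 / (100 * c * Real.logb 2 n)) *
          min (∑ i ∈ T, ((S.filter (G.Adj i)).card : ℝ))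
              (∑ i ∈ S \ T, ((S.filter (G.Adj i)).card : ℝ))
          ≤ (((T ×ˢ (S \ T)).filter fun p => G.Adj p.1 p.2).card : ℝ)) ∧
      (∀ i ∈ S, (n : ℝ) / (10000 * c) ≤ ((S.filter (G.Adj i)).card : ℝ)) := by
  have hn₀ : (0 : ℝ) < n := by positivity
  have hc₀ : 0 < c := by linarith
  have hlog : 1 ≤ logb 2 n :=
    (le_logb_iff_rpow_le one_lt_two hn₀).mpr (by simpa using (by exact_mod_cast hn : (2 : ℝ) ≤ n))
  have hpow : (n : ℝ) ^ (logb 2 n)⁻¹ ≤ 2 := by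
    rw [← rpow_logb zero_lt_two one_lt_two.ne' hn₀, ← rpow_mul zero_lt_two.le,
      rpow_logb zero_lt_two one_lt_two.ne' hn₀, mul_inv_cancel₀ (by positivity), rpow_one]
  have hheavy : G.IsHeavy (n / (2 * c)) (logb 2 n)⁻¹ n univ := by
    rw [SimpleGraph.IsHeavy, card_univ, Fintype.card_fin, div_self hn₀.ne', one_rpow,
      G.inducedVolume_univ]
    push_cast
    linarith [show (n : ℝ) / (2 * c) * n * 1 = n ^ 2 / c / 2 by field_simp]
  have hφκ : 4 * (1 / (100 * c * logb 2 n)) ≤ (logb 2 n)⁻¹ := by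
    rw [inv_eq_one_div, ← mul_div_assoc, div_le_div_iff₀ (by positivity) (by positivity)]
    nlinarith
  have hδ : 4 * (n / (10000 * c)) ≤ n / (2 * c) := by
    rw [← mul_div_assoc, div_le_div_iff₀ (by positivity) (by positivity)]
    nlinarith
  obtain ⟨S, hcard, hcond, hdeg⟩ := hheavy.exists_large_inducedConductanceAtLeast
    ⟨⟨0, by omega⟩, mem_univ _⟩ (by positivity) (by positivity) hφκ (inv_le_one_of_one_le₀ hlog)
    hn₀ hpow (δ := n / (10000 * c)) hδ
  refine ⟨S, le_trans ?_ hcard, fun T hTS hT hTS' => ?_, hdeg⟩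
  · rw [div_div, div_le_div_iff₀ (by positivity) (by positivity)]
    nlinarith
  · have := hcond T hTS hT hTS'
    rw [← G.sum_card_filter_adj T S, ← G.sum_card_filter_adj (S \ T) S] at this
    exact_mod_cast this
end

section
/- Let k be a positive integer, let A : [k] × ℕ → ℝ and B : ℕ × [k] → ℝ, and suppose that for every i, j ∈ [k] the series Σ_{ℓ=0}^∞ A_{iℓ}·B_{ℓj} converges absolutely; define the k×k matrix C by C_{ij} = Σ_{ℓ=0}^∞ A_{iℓ}·B_{ℓj}. Then the family indexed by strictly increasing k-tuples 0 ≤ ℓ₁ < ℓ₂ < ⋯ < ℓ_k of natural numbers, whose value at (ℓ₁, …, ℓ_k) is det(A[ℓ₁, …, ℓ_k]) · det(B[ℓ₁, …, ℓ_k]), is summable, and its sum equals det(C). -/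
open Finset Equiv Function

private lemma auxPi : ∀ (n : ℕ) (f : Fin n → ℕ → ℝ), (∀ i, Summable fun ℓ => |f i ℓ|) →
    Summable (fun g : Fin n → ℕ => |∏ i, f i (g i)|) ∧
      (∑' g : Fin n → ℕ, ∏ i, f i (g i)) = ∏ i, ∑' ℓ, f i ℓ := by
  intro n
  induction n with
  | zero =>
    intro f _
    constructor
    · exact Summable.of_finite
    · have hu : ∀ g : Fin 0 → ℕ, g = (default : Fin 0 → ℕ) := fun g => Subsingleton.elim _ _
      rw [tsum_eq_single (default : Fin 0 → ℕ) (fun b hb => absurd (hu b) hb)]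
      simp
  | succ n ih =>
    intro f h
    have ihs := ih (fun i => f i.succ) (fun i => h i.succ)
    set e : (ℕ × (Fin n → ℕ)) ≃ (Fin (n+1) → ℕ) := Fin.consEquiv fun _ => ℕ with he
    have hcomp : ∀ p : ℕ × (Fin n → ℕ),
        (∏ i, f i (e p i)) = f 0 p.1 * ∏ i, f i.succ (p.2 i) := by
      intro p
      rw [Fin.prod_univ_succ]
      simp [he, Fin.consEquiv]
    have hs1 : Summable fun ℓ => ‖f 0 ℓ‖ := by simpa only [Real.norm_eq_abs] using h 0
    have hs2 : Summable fun g : Fin n → ℕ => ‖∏ i, f i.succ (g i)‖ := by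
      simpa only [Real.norm_eq_abs] using ihs.1
    have hmul := hs1.mul_norm hs2
    constructor
    · refine e.summable_iff.mp ?_
      have : ((fun g : Fin (n+1) → ℕ => |∏ i, f i (g i)|) ∘ e)
          = fun p : ℕ × (Fin n → ℕ) => ‖f 0 p.1 * ∏ i, f i.succ (p.2 i)‖ := by
        funext p
        simp only [Function.comp_apply, Real.norm_eq_abs]
        rw [hcomp p]
      rw [this]
      exact hmul
    · rw [← e.tsum_eq]
      calc (∑' p : ℕ × (Fin n → ℕ), ∏ i, f i (e p i))
          = ∑' p : ℕ × (Fin n → ℕ), f 0 p.1 * ∏ i, f i.succ (p.2 i) := tsum_congr hcomp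
        _ = (∑' ℓ, f 0 ℓ) * ∑' g : Fin n → ℕ, ∏ i, f i.succ (g i) :=
            (tsum_mul_tsum_of_summable_norm hs1 hs2).symm
        _ = ∏ i, ∑' ℓ, f i ℓ := by rw [ihs.2, Fin.prod_univ_succ]

private noncomputable def injEquiv (k : ℕ) :
    ({f : Fin k → ℕ // StrictMono f} × Equiv.Perm (Fin k)) ≃
      {g : Fin k → ℕ // Function.Injective g} :=
  Equiv.ofBijective
    (fun p => ⟨p.1.1 ∘ p.2, p.1.2.injective.comp p.2.injective⟩) (by
    constructor
    · rintro ⟨⟨f₁, h₁⟩, τ₁⟩ ⟨⟨f₂, h₂⟩, τ₂⟩ hp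
      have hg : f₁ ∘ τ₁ = f₂ ∘ τ₂ := congrArg Subtype.val hp
      have hr : Set.range f₁ = Set.range f₂ := by
        calc Set.range f₁ = Set.range (f₁ ∘ τ₁) := (τ₁.surjective.range_comp f₁).symm
          _ = Set.range (f₂ ∘ τ₂) := by rw [hg]
          _ = Set.range f₂ := τ₂.surjective.range_comp f₂
      haveI : WellFoundedLT (Fin k) := inferInstance
      have hf : f₁ = f₂ := (h₁.range_inj h₂).mp hr
      subst hf
      have hτ : τ₁ = τ₂ := by
        ext i
        exact congrArg Fin.val (h₁.injective (congrFun hg i))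
      subst hτ
      rfl
    · rintro ⟨g, hg⟩
      set s : Finset ℕ := Finset.image g Finset.univ with hs
      have hcard : s.card = k := by
        rw [hs, Finset.card_image_of_injective _ hg, Finset.card_univ, Fintype.card_fin]
      set f : Fin k → ℕ := ⇑(s.orderEmbOfFin hcard) with hfdef
      have hfsm : StrictMono f := (s.orderEmbOfFin hcard).strictMono
      have hrange : Set.range g = Set.range f := by
        rw [hfdef, Finset.range_orderEmbOfFin, hs, Finset.coe_image, Finset.coe_univ,
          Set.image_univ]
      set τ : Equiv.Perm (Fin k) :=
        ((Equiv.ofInjective g hg).trans (Equiv.setCongr hrange)).trans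
          (Equiv.ofInjective f hfsm.injective).symm with hτdef
      refine ⟨(⟨f, hfsm⟩, τ), ?_⟩
      refine Subtype.ext (funext fun i => ?_)
      show f (τ i) = g i
      rw [hτdef]
      simp only [Equiv.trans_apply, Equiv.setCongr_apply]
      rw [Equiv.apply_ofInjective_symm hfsm.injective]
      rfl)

theorem stmt_7 (k : ℕ) (hk : 1 ≤ k)
    (A : Fin k → ℕ → ℝ) (B : ℕ → Fin k → ℝ)
    (habs : ∀ i j : Fin k, Summable fun ℓ : ℕ => |A i ℓ * B ℓ j|)
    (C : Matrix (Fin k) (Fin k) ℝ)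
    (hC : ∀ i j : Fin k, C i j = ∑' ℓ : ℕ, A i ℓ * B ℓ j) :
    Summable (fun ℓ : {f : Fin k → ℕ // StrictMono f} =>
      (Matrix.of fun i j : Fin k => A i (ℓ.1 j)).det *
        (Matrix.of fun i j : Fin k => B (ℓ.1 i) j).det) ∧
    (∑' ℓ : {f : Fin k → ℕ // StrictMono f},
      (Matrix.of fun i j : Fin k => A i (ℓ.1 j)).det *
        (Matrix.of fun i j : Fin k => B (ℓ.1 i) j).det) = C.det := by
  classical
  set H : (Fin k → ℕ) → ℝ :=
    fun g => (∏ i, A i (g i)) * (Matrix.of fun i j : Fin k => B (g i) j).det with hHdef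
  set F : Equiv.Perm (Fin k) → (Fin k → ℕ) → ℝ :=
    fun σ g => ((Equiv.Perm.sign σ : ℤ) : ℝ) *
      ∏ i, (A (σ i) (g (σ i)) * B (g (σ i)) i) with hFdef
  -- expansion of H as a finite sum over permutations
  have hHexp : ∀ g : Fin k → ℕ, H g = ∑ σ : Equiv.Perm (Fin k), F σ g := by
    intro g
    show (∏ i, A i (g i)) * (Matrix.of fun i j : Fin k => B (g i) j).det = _
    rw [Matrix.det_apply', Finset.mul_sum]
    refine Finset.sum_congr rfl fun σ _ => ?_
    have h1 : (∏ i, A i (g i)) = ∏ i, A (σ i) (g (σ i)) :=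
      (Equiv.prod_comp σ fun i => A i (g i)).symm
    simp only [Matrix.of_apply, hFdef]
    rw [h1, mul_left_comm, ← Finset.prod_mul_distrib]
  -- summability of each F σ, and their sums
  have hbase : ∀ σ : Equiv.Perm (Fin k),
      Summable (fun g : Fin k → ℕ => ∏ i, A (σ i) (g i) * B (g i) i) :=
    fun σ => ((auxPi k (fun i ℓ => A (σ i) ℓ * B ℓ i) (fun i => habs (σ i) i)).1).of_abs
  have heσ : ∀ σ : Equiv.Perm (Fin k),
      Summable (fun g : Fin k → ℕ => ∏ i, A (σ i) (g (σ i)) * B (g (σ i)) i) := by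
    intro σ
    have := (Equiv.arrowCongr σ.symm (Equiv.refl ℕ)).summable_iff.mpr (hbase σ)
    exact this.congr fun g => rfl
  have hFsum : ∀ σ : Equiv.Perm (Fin k), Summable (F σ) := by
    intro σ
    exact (heσ σ).mul_left _
  have hFtsum : ∀ σ : Equiv.Perm (Fin k),
      (∑' g : Fin k → ℕ, F σ g)
        = ((Equiv.Perm.sign σ : ℤ) : ℝ) * ∏ i, ∑' ℓ, A (σ i) ℓ * B ℓ i := by
    intro σ
    rw [hFdef]
    rw [tsum_mul_left]
    congr 1
    have h2 := (Equiv.arrowCongr σ.symm (Equiv.refl ℕ)).tsum_eq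
      (fun g : Fin k → ℕ => ∏ i, A (σ i) (g i) * B (g i) i)
    have h3 := (auxPi k (fun i ℓ => A (σ i) ℓ * B ℓ i) (fun i => habs (σ i) i)).2
    calc (∑' g : Fin k → ℕ, ∏ i, A (σ i) (g (σ i)) * B (g (σ i)) i)
        = ∑' g : Fin k → ℕ, ∏ i, A (σ i) (g i) * B (g i) i := h2
      _ = ∏ i, ∑' ℓ, A (σ i) ℓ * B ℓ i := h3
  have hHsummable : Summable H :=
    (summable_sum fun σ _ => hFsum σ).congr fun g => (hHexp g).symm
  have htsumH : (∑' g : Fin k → ℕ, H g) = C.det := by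
    calc (∑' g : Fin k → ℕ, H g) = ∑' g : Fin k → ℕ, ∑ σ : Equiv.Perm (Fin k), F σ g :=
          tsum_congr hHexp
      _ = ∑ σ : Equiv.Perm (Fin k), ∑' g : Fin k → ℕ, F σ g :=
          Summable.tsum_finsetSum fun σ _ => hFsum σ
      _ = ∑ σ : Equiv.Perm (Fin k),
            ((Equiv.Perm.sign σ : ℤ) : ℝ) * ∏ i, ∑' ℓ, A (σ i) ℓ * B ℓ i :=
          Finset.sum_congr rfl fun σ _ => hFtsum σ
      _ = C.det := by
          rw [Matrix.det_apply']
          exact (Finset.sum_congr rfl fun σ _ => by simp only [hC]).symm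
  -- support of H
  have hsupp : Function.support H ⊆ {g : Fin k → ℕ | Function.Injective g} := by
    intro g hgH
    by_contra hni
    apply hgH
    obtain ⟨a, b, hab, hne⟩ := Function.not_injective_iff.mp hni
    show (∏ i, A i (g i)) * (Matrix.of fun i j : Fin k => B (g i) j).det = 0
    rw [Matrix.det_zero_of_row_eq hne (funext fun j => by
      show B (g a) j = B (g b) j
      rw [hab]), mul_zero]
  set E := injEquiv k with hE
  have hsubty : Summable (fun g : {g : Fin k → ℕ // Function.Injective g} => H g.1) :=
    hHsummable.subtype {g : Fin k → ℕ | Function.Injective g}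
  have hEsummable : Summable (fun p : {f : Fin k → ℕ // StrictMono f} × Equiv.Perm (Fin k) =>
      H (E p).1) :=
    (E.summable_iff.mpr hsubty).congr fun p => rfl
  have key1 : (∑' g : {g : Fin k → ℕ // Function.Injective g}, H g.1)
      = ∑' g : Fin k → ℕ, H g := tsum_subtype_eq_of_support_subset hsupp
  have key2 : (∑' p : {f : Fin k → ℕ // StrictMono f} × Equiv.Perm (Fin k), H (E p).1)
      = ∑' g : {g : Fin k → ℕ // Function.Injective g}, H g.1 :=
    E.tsum_eq fun g => H g.1
  have key3 : (∑' p : {f : Fin k → ℕ // StrictMono f} × Equiv.Perm (Fin k), H (E p).1)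
      = ∑' fsm : {f : Fin k → ℕ // StrictMono f}, ∑ τ : Equiv.Perm (Fin k), H (fsm.1 ∘ τ) := by
    rw [Summable.tsum_prod' hEsummable fun b => Summable.of_finite]
    refine tsum_congr fun fsm => ?_
    rw [tsum_fintype]
    rfl
  have key4 : ∀ fsm : {f : Fin k → ℕ // StrictMono f},
      (∑ τ : Equiv.Perm (Fin k), H (fsm.1 ∘ τ))
        = (Matrix.of fun i j : Fin k => A i (fsm.1 j)).det *
            (Matrix.of fun i j : Fin k => B (fsm.1 i) j).det := by
    rintro ⟨f, hf⟩
    calc (∑ τ : Equiv.Perm (Fin k), H (f ∘ τ))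
        = ∑ τ : Equiv.Perm (Fin k), (∏ i, A i (f (τ i))) *
            (((Equiv.Perm.sign τ : ℤ) : ℝ) * (Matrix.of fun i j : Fin k => B (f i) j).det) := by
          refine Finset.sum_congr rfl fun τ _ => ?_
          have hsub : (Matrix.of fun i j : Fin k => B ((f ∘ τ) i) j)
              = (Matrix.of fun i j : Fin k => B (f i) j).submatrix τ id := rfl
          show (∏ i, A i (f (τ i))) * _ = _
          rw [hsub, Matrix.det_permute]
      _ = (∑ τ : Equiv.Perm (Fin k), ((Equiv.Perm.sign τ : ℤ) : ℝ) * ∏ i, A i (f (τ i))) *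
            (Matrix.of fun i j : Fin k => B (f i) j).det := by
          rw [Finset.sum_mul]
          exact Finset.sum_congr rfl fun τ _ => by ring
      _ = (Matrix.of fun i j : Fin k => A i (f j)).det *
            (Matrix.of fun i j : Fin k => B (f i) j).det := by
          congr 1
          rw [← Matrix.det_transpose, Matrix.det_apply']
          exact (Finset.sum_congr rfl fun τ _ => by
            simp only [Matrix.transpose_apply, Matrix.of_apply]).symm
  constructor
  · have hsτ : ∀ τ : Equiv.Perm (Fin k),
        Summable (fun fsm : {f : Fin k → ℕ // StrictMono f} => H (fsm.1 ∘ τ)) := by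
      intro τ
      exact hEsummable.comp_injective
        (i := fun fsm : {f : Fin k → ℕ // StrictMono f} => (fsm, τ))
        fun a b h => (Prod.ext_iff.mp h).1
    exact (summable_sum fun τ _ => hsτ τ).congr fun fsm => key4 fsm
  · calc (∑' fsm : {f : Fin k → ℕ // StrictMono f},
          (Matrix.of fun i j : Fin k => A i (fsm.1 j)).det *
            (Matrix.of fun i j : Fin k => B (fsm.1 i) j).det)
        = ∑' fsm : {f : Fin k → ℕ // StrictMono f}, ∑ τ : Equiv.Perm (Fin k), H (fsm.1 ∘ τ) :=
          tsum_congr fun fsm => (key4 fsm).symm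
      _ = ∑' p : {f : Fin k → ℕ // StrictMono f} × Equiv.Perm (Fin k), H (E p).1 := key3.symm
      _ = ∑' g : {g : Fin k → ℕ // Function.Injective g}, H g.1 := key2
      _ = ∑' g : Fin k → ℕ, H g := key1
      _ = C.det := htsumH
end

section
/- Let f : ℝ → ℝ be a function that is analytic on [0,1]. Then there exist a constant B > 1 (depending only on f) and a positive integer k₀ such that for every integer k ≥ k₀ and every κ ∈ (0,1], the following holds: if there exists x ∈ [0,1] with |f^{(k+1)}(x)| > κ, then there exists a closed interval [c,d] ⊆ [0,1] with d − c > κ/(128·B·k·4^{2k+1}·k!) such that for every y ∈ [c,d] and every integer i with 0 ≤ i ≤ k+1, |f^{(i)}(y)| > ( κ² / (64·B·k·4^{2k+1}·k!) )^{k+2−i}. -/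
/-!
On a compact set of analyticity the derivatives obey Cauchy estimates
`|f⁽ⁿ⁾| ≤ C n! ρⁿ`, so for large `k` the derivative `f⁽ᵏ⁺³⁾` is at most `(k!)²` on `[0,1]`.
If `|f⁽ⁿ⁾(x₀)| > κ`, then on an interval of length `4ⁿ L` around `x₀` either `|f⁽ⁿ⁾| > κ/2`
throughout, or the mean value theorem yields a point where `|f⁽ⁿ⁺¹⁾| > κ / (2 · 4ⁿ L)`.
In the first case we descend: wherever `|g'| > ε` on an interval, `|g| > ε ℓ / 4` on its first
or its last quarter, since otherwise `g` would vary by at most `ε ℓ / 2` over a distance of at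
least `ℓ / 2`. After `n` quarterings we get an interval of length `L` on which all of
`f, …, f⁽ⁿ⁾` are bounded below. Starting from `n = k + 1` with `L = κ / (128 k 4²ᵏ⁺¹ k!)`, the
second case can happen at most once: a second occurrence would force `|f⁽ᵏ⁺³⁾| > (k!)²`.
-/

open Set Filter Topology Nat
open scoped NNReal ENNReal

theorem FormalMultilinearSeries.exists_nnnorm_changeOrigin_mul_pow_le {𝕜 E F : Type*}
    [NontriviallyNormedField 𝕜] [NormedAddCommGroup E] [NormedSpace 𝕜 E]
    [NormedAddCommGroup F] [NormedSpace 𝕜 F] (p : FormalMultilinearSeries 𝕜 E F)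
    {r r' : ℝ≥0} (h : (r + r' : ℝ≥0∞) < p.radius) :
    ∃ M : ℝ≥0, ∀ x : E, ‖x‖₊ ≤ r → ∀ k, ‖p.changeOrigin x k‖₊ * r' ^ k ≤ M := by
  have hsum := p.changeOriginSeries_summable_aux₁ h
  refine ⟨∑' s : Σ k l : ℕ, { s : Finset (Fin (k + l)) // s.card = l },
    ‖p (s.1 + s.2.1)‖₊ * r ^ s.2.1 * r' ^ s.1, fun x hx k => ?_⟩
  have hr : (r : ℝ≥0∞) < p.radius := lt_of_le_of_lt (by simp) h
  calc ‖p.changeOrigin x k‖₊ * r' ^ k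
      ≤ (∑' t : Σ l : ℕ, { s : Finset (Fin (k + l)) // s.card = l },
          ‖p (k + t.1)‖₊ * r ^ t.1) * r' ^ k := by
        gcongr
        refine (p.nnnorm_changeOrigin_le k ((ENNReal.coe_le_coe.2 hx).trans_lt hr)).trans ?_
        have hle : ∀ t : Σ l : ℕ, { s : Finset (Fin (k + l)) // s.card = l },
            ‖p (k + t.1)‖₊ * ‖x‖₊ ^ t.1 ≤ ‖p (k + t.1)‖₊ * r ^ t.1 := fun t => by gcongr
        have hsum₂ := p.changeOriginSeries_summable_aux₂ hr k
        exact (NNReal.summable_of_le hle hsum₂).tsum_le_tsum hle hsum₂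
    _ = ∑' t : Σ l : ℕ, { s : Finset (Fin (k + l)) // s.card = l },
          ‖p (k + t.1)‖₊ * r ^ t.1 * r' ^ k := NNReal.tsum_mul_right _ _ |>.symm
    _ ≤ _ := NNReal.tsum_comp_le_tsum_of_inj hsum (i := Sigma.mk k) sigma_mk_injective

section CauchyEstimates

variable {𝕜 F : Type*} [NontriviallyNormedField 𝕜] [NormedAddCommGroup F] [NormedSpace 𝕜 F]
  [CompleteSpace F] {f : 𝕜 → F}

theorem AnalyticAt.exists_norm_iteratedDeriv_le {x : 𝕜} (hf : AnalyticAt 𝕜 f x) :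
    ∃ C ρ : ℝ, 0 ≤ C ∧ 0 ≤ ρ ∧ ∀ᶠ y in 𝓝 x, ∀ n, ‖iteratedDeriv n f y‖ ≤ C * n ! * ρ ^ n := by
  obtain ⟨p, r, hp⟩ := hf
  obtain ⟨q, hq, hqr⟩ := ENNReal.lt_iff_exists_nnreal_btwn.1 hp.r_pos
  have hq : 0 < q := by exact_mod_cast hq
  set r₀ := q / 2
  have hr₀ : (0 : ℝ) < r₀ := by positivity
  have hrad : (r₀ + r₀ : ℝ≥0∞) < p.radius := by
    rw [← ENNReal.coe_add, add_halves]
    exact hqr.trans_le hp.r_le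
  obtain ⟨M, hM⟩ := p.exists_nnnorm_changeOrigin_mul_pow_le hrad
  refine ⟨M, (r₀ : ℝ)⁻¹, M.2, by positivity, ?_⟩
  filter_upwards [Metric.ball_mem_nhds x hr₀] with y hy n
  have hyx : ‖y - x‖₊ ≤ r₀ := by
    rw [← NNReal.coe_le_coe, coe_nnnorm, ← dist_eq_norm]
    exact (Metric.mem_ball.1 hy).le
  have hps := hp.changeOrigin (y := y - x) <| by
    refine lt_of_le_of_lt ?_ hqr
    exact_mod_cast hyx.trans (NNReal.half_le_self q)
  rw [add_sub_cancel] at hps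
  have hcoeff : ‖p.changeOrigin (y - x) n‖ ≤ M * (r₀ : ℝ)⁻¹ ^ n := by
    rw [inv_pow, ← div_eq_mul_inv, le_div_iff₀ (by positivity)]
    exact_mod_cast hM _ hyx n
  calc ‖iteratedDeriv n f y‖ = ‖n ! • p.changeOrigin (y - x) n (fun _ => 1)‖ := by
        rw [hps.factorial_smul, iteratedDeriv_eq_iteratedFDeriv]
    _ ≤ n ! * ‖p.changeOrigin (y - x) n‖ := by
        refine norm_nsmul_le.trans ?_
        gcongr
        exact ((p.changeOrigin (y - x) n).le_opNorm fun _ => 1).trans_eq (by simp)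
    _ ≤ n ! * (M * (r₀ : ℝ)⁻¹ ^ n) := by gcongr
    _ = M * n ! * (r₀ : ℝ)⁻¹ ^ n := by ring

theorem IsCompact.exists_norm_iteratedDeriv_le {K : Set 𝕜} (hK : IsCompact K)
    (hf : ∀ x ∈ K, AnalyticAt 𝕜 f x) :
    ∃ C ρ : ℝ, 0 ≤ C ∧ 0 ≤ ρ ∧ ∀ x ∈ K, ∀ n, ‖iteratedDeriv n f x‖ ≤ C * n ! * ρ ^ n := by
  refine hK.induction_on (p := fun s => ∃ C ρ : ℝ, 0 ≤ C ∧ 0 ≤ ρ ∧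
    ∀ x ∈ s, ∀ n, ‖iteratedDeriv n f x‖ ≤ C * n ! * ρ ^ n) ?_ ?_ ?_ ?_
  · exact ⟨0, 0, le_rfl, le_rfl, by simp⟩
  · rintro s t hst ⟨C, ρ, hC, hρ, hbound⟩
    exact ⟨C, ρ, hC, hρ, fun x hx => hbound x (hst hx)⟩
  · rintro s t ⟨C₁, ρ₁, hC₁, hρ₁, hs⟩ ⟨C₂, ρ₂, hC₂, hρ₂, ht⟩
    refine ⟨max C₁ C₂, max ρ₁ ρ₂, le_max_of_le_left hC₁, le_max_of_le_left hρ₁, ?_⟩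
    rintro x (hx | hx) n
    · exact (hs x hx n).trans (by gcongr <;> simp)
    · exact (ht x hx n).trans (by gcongr <;> simp)
  · intro x hx
    obtain ⟨C, ρ, hC, hρ, hbound⟩ := (hf x hx).exists_norm_iteratedDeriv_le
    exact ⟨_, mem_nhdsWithin_of_mem_nhds hbound, C, ρ, hC, hρ, fun y hy => hy⟩

end CauchyEstimates

theorem Nat.factorial_add_le_two_pow_mul (k m : ℕ) : (k + m)! ≤ 2 ^ (k + m) * m ! * k ! := by
  rw [← add_choose_mul_factorial_mul_factorial k m, mul_right_comm]
  gcongr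
  exact choose_le_two_pow _ _

theorem eventually_mul_factorial_add_mul_pow_le_sq_factorial {C ρ : ℝ} (hC : 0 ≤ C) (hρ : 0 ≤ ρ)
    (m : ℕ) : ∀ᶠ k : ℕ in atTop, C * (k + m)! * ρ ^ (k + m) ≤ (k ! : ℝ) ^ 2 := by
  filter_upwards [FloorSemiring.eventually_mul_pow_lt_factorial_sub (C * m ! * (2 * ρ) ^ m)
    (2 * ρ) 0] with k hk
  rw [Nat.sub_zero] at hk
  have hfac : ((k + m)! : ℝ) ≤ 2 ^ (k + m) * m ! * k ! := by
    exact_mod_cast Nat.factorial_add_le_two_pow_mul k m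
  calc C * (k + m)! * ρ ^ (k + m) ≤ C * (2 ^ (k + m) * m ! * k !) * ρ ^ (k + m) := by gcongr
    _ = C * m ! * (2 * ρ) ^ m * (2 * ρ) ^ k * k ! := by ring
    _ ≤ k ! * k ! := by gcongr
    _ = (k ! : ℝ) ^ 2 := (sq _).symm

theorem exists_mem_uIcc_abs_sub_eq_mul {g : ℝ → ℝ} {u v : ℝ}
    (hg : ∀ x ∈ uIcc u v, DifferentiableAt ℝ g x) :
    ∃ ξ ∈ uIcc u v, |g v - g u| = |deriv g ξ| * |v - u| := by
  wlog huv : u ≤ v generalizing u v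
  · obtain ⟨ξ, hξ, h⟩ := this (by rwa [uIcc_comm]) (le_of_not_ge huv)
    exact ⟨ξ, by rwa [uIcc_comm], by rw [abs_sub_comm, h, abs_sub_comm]⟩
  rcases huv.eq_or_lt with rfl | hlt
  · exact ⟨u, left_mem_uIcc, by simp⟩
  rw [uIcc_of_le huv] at hg ⊢
  obtain ⟨ξ, hξ, h⟩ := exists_deriv_eq_slope g hlt
    (fun x hx => (hg x hx).continuousAt.continuousWithinAt)
    (fun x hx => (hg x (Ioo_subset_Icc_self hx)).differentiableWithinAt)
  refine ⟨ξ, Ioo_subset_Icc_self hξ, ?_⟩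
  rw [h, abs_div, div_mul_cancel₀ _ (abs_ne_zero.2 (sub_ne_zero.2 hlt.ne'))]

theorem exists_mem_Icc_subset_Icc {x s t ℓ : ℝ} (hx : x ∈ Icc s t) (hℓ : 0 ≤ ℓ)
    (hℓt : ℓ ≤ t - s) : ∃ a, x ∈ Icc a (a + ℓ) ∧ Icc a (a + ℓ) ⊆ Icc s t := by
  refine ⟨min x (t - ℓ), ⟨min_le_left _ _, ?_⟩, Icc_subset_Icc ?_ ?_⟩
  · rw [← min_add_add_right]
    exact le_min (by linarith) (by linarith [hx.2])
  · exact le_min hx.1 (by linarith)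
  · linarith [min_le_right x (t - ℓ)]

theorem exists_Icc_quarter_lt_abs {g : ℝ → ℝ} {a ℓ ε : ℝ} (hℓ : 0 < ℓ) (hε : 0 ≤ ε)
    (hg : ∀ x ∈ Icc a (a + ℓ), DifferentiableAt ℝ g x)
    (hderiv : ∀ x ∈ Icc a (a + ℓ), ε < |deriv g x|) :
    ∃ c, Icc c (c + ℓ / 4) ⊆ Icc a (a + ℓ) ∧ ∀ y ∈ Icc c (c + ℓ / 4), ε * (ℓ / 4) < |g y| := by
  by_contra! h
  obtain ⟨y₁, hy₁, hgy₁⟩ := h a (Icc_subset_Icc le_rfl (by linarith))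
  obtain ⟨y₂, hy₂, hgy₂⟩ := h (a + 3 * ℓ / 4) (Icc_subset_Icc (by linarith) (by linarith))
  have hsub : uIcc y₁ y₂ ⊆ Icc a (a + ℓ) :=
    uIcc_subset_Icc ⟨hy₁.1, by linarith [hy₁.2]⟩ ⟨by linarith [hy₂.1], by linarith [hy₂.2]⟩
  obtain ⟨ξ, hξ, heq⟩ := exists_mem_uIcc_abs_sub_eq_mul fun x hx => hg x (hsub hx)
  have hsep : ℓ / 2 ≤ |y₂ - y₁| := by
    rw [abs_of_nonneg] <;> linarith [hy₁.2, hy₂.1]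
  have := calc ε * (ℓ / 2) ≤ ε * |y₂ - y₁| := by gcongr
    _ < |deriv g ξ| * |y₂ - y₁| := by gcongr; exacts [by linarith, hderiv ξ (hsub hξ)]
    _ = |g y₂ - g y₁| := heq.symm
    _ ≤ |g y₂| + |g y₁| := abs_sub _ _
    _ ≤ ε * (ℓ / 4) + ε * (ℓ / 4) := add_le_add hgy₂ hgy₁
    _ = ε * (ℓ / 2) := by ring
  exact lt_irrefl _ this

theorem exists_Icc_lt_abs_iteratedDeriv {f : ℝ → ℝ} (n : ℕ) {a ℓ ε : ℝ} (hℓ : 0 < ℓ)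
    (hε : 0 ≤ ε) (hf : ∀ i < n, ∀ x ∈ Icc a (a + ℓ), DifferentiableAt ℝ (iteratedDeriv i f) x)
    (hn : ∀ x ∈ Icc a (a + ℓ), ε < |iteratedDeriv n f x|) :
    ∃ c, Icc c (c + ℓ / 4 ^ n) ⊆ Icc a (a + ℓ) ∧
      ∀ y ∈ Icc c (c + ℓ / 4 ^ n), ∀ i ≤ n, ε * (ℓ / 4 ^ n) ^ (n - i) < |iteratedDeriv i f y| := by
  induction n generalizing a ℓ ε with
  | zero =>
    refine ⟨a, by simp, fun y hy i hi => ?_⟩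
    obtain rfl := Nat.le_zero.1 hi
    simpa using hn y (by simpa using hy)
  | succ n ih =>
    rw [iteratedDeriv_succ] at hn
    obtain ⟨a', ha', hquarter⟩ := exists_Icc_quarter_lt_abs hℓ hε (hf n n.lt_succ_self) hn
    obtain ⟨c, hc, hlow⟩ := ih (ℓ := ℓ / 4) (by positivity) (by positivity)
      (fun i hi x hx => hf i (by omega) x (ha' hx)) hquarter
    rw [div_div, ← pow_succ' (4 : ℝ) n] at hc hlow
    refine ⟨c, hc.trans ha', fun y hy i hi => ?_⟩
    rcases hi.lt_or_eq with hi | rfl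
    · refine lt_of_le_of_lt ?_ (hlow y hy i (by omega))
      have hL : ℓ / 4 ^ (n + 1) ≤ ℓ / 4 :=
        div_le_div_of_nonneg_left hℓ.le (by norm_num) (le_self_pow₀ (by norm_num) (by omega))
      calc ε * (ℓ / 4 ^ (n + 1)) ^ (n + 1 - i)
          = ε * (ℓ / 4 ^ (n + 1)) * (ℓ / 4 ^ (n + 1)) ^ (n - i) := by
            rw [show n + 1 - i = n - i + 1 by omega, pow_succ]; ring
        _ ≤ ε * (ℓ / 4) * (ℓ / 4 ^ (n + 1)) ^ (n - i) := by gcongr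
    · simpa [iteratedDeriv_succ] using hn y (hc.trans ha' hy)

theorem exists_Icc_lt_abs_iteratedDeriv_or_lt_abs_iteratedDeriv_succ {f : ℝ → ℝ} (n : ℕ)
    {s t κ L x₀ : ℝ} (hκ : 0 < κ) (hL : 0 < L) (hLst : 4 ^ n * L ≤ t - s)
    (hf : ∀ i ≤ n, ∀ x ∈ Icc s t, DifferentiableAt ℝ (iteratedDeriv i f) x)
    (hx₀ : x₀ ∈ Icc s t) (hfx₀ : κ < |iteratedDeriv n f x₀|) :
    (∃ c, Icc c (c + L) ⊆ Icc s t ∧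
      ∀ y ∈ Icc c (c + L), ∀ i ≤ n, κ / 2 * L ^ (n - i) < |iteratedDeriv i f y|) ∨
    ∃ ξ ∈ Icc s t, κ / (2 * (4 ^ n * L)) < |iteratedDeriv (n + 1) f ξ| := by
  obtain ⟨a, hx₀a, has⟩ := exists_mem_Icc_subset_Icc hx₀ (by positivity) hLst
  by_cases hlow : ∀ y ∈ Icc a (a + 4 ^ n * L), κ / 2 < |iteratedDeriv n f y|
  · obtain ⟨c, hc, hbound⟩ := exists_Icc_lt_abs_iteratedDeriv n (by positivity) (by positivity)
      (fun i hi x hx => hf i hi.le x (has hx)) hlow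
    rw [mul_div_cancel_left₀ _ (by positivity)] at hc hbound
    exact .inl ⟨c, hc.trans has, hbound⟩
  push Not at hlow
  obtain ⟨y, hy, hfy⟩ := hlow
  have hsub : uIcc x₀ y ⊆ Icc s t := (uIcc_subset_Icc hx₀a hy).trans has
  obtain ⟨ξ, hξ, heq⟩ := exists_mem_uIcc_abs_sub_eq_mul fun x hx => hf n le_rfl x (hsub hx)
  refine .inr ⟨ξ, hsub hξ, ?_⟩
  rw [iteratedDeriv_succ, ← div_div, div_lt_iff₀ (by positivity)]
  calc κ / 2 < |iteratedDeriv n f x₀| - |iteratedDeriv n f y| := by linarith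
    _ ≤ |iteratedDeriv n f y - iteratedDeriv n f x₀| := by
      rw [abs_sub_comm]; exact abs_sub_abs_le_abs_sub _ _
    _ = |deriv (iteratedDeriv n f) ξ| * |y - x₀| := heq
    _ ≤ |deriv (iteratedDeriv n f) ξ| * (4 ^ n * L) := by
      gcongr
      exact abs_sub_le_iff.2 ⟨by linarith [hy.2, hx₀a.1], by linarith [hy.1, hx₀a.2]⟩

theorem exists_Icc_pow_lt_abs_iteratedDeriv {f : ℝ → ℝ} (n : ℕ) {κ L : ℝ} (hκ : 0 < κ)
    (hκ1 : κ ≤ 1) (hL : 0 < L) (hLκ : 4 ^ (n + 1) * L ≤ κ)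
    (hf : ∀ i ≤ n + 1, ∀ x ∈ Icc (0 : ℝ) 1, DifferentiableAt ℝ (iteratedDeriv i f) x)
    (hbound : ∀ x ∈ Icc (0 : ℝ) 1, |iteratedDeriv (n + 2) f x| ≤ κ / (4 ^ (2 * n + 2) * L ^ 2))
    (hx₀ : ∃ x ∈ Icc (0 : ℝ) 1, κ < |iteratedDeriv n f x|) :
    ∃ c, Icc c (c + L) ⊆ Icc 0 1 ∧
      ∀ y ∈ Icc c (c + L), ∀ i ≤ n, (κ * L) ^ (n + 1 - i) < |iteratedDeriv i f y| := by
  obtain ⟨x₀, hx₀, hfx₀⟩ := hx₀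
  have h4 : (4 : ℝ) ≤ 4 ^ (n + 1) := le_self_pow₀ (by norm_num) (by omega)
  have hL1 : 4 ^ (n + 1) * L ≤ 1 := hLκ.trans hκ1
  have hL2 : L ≤ 1 / 2 := by nlinarith
  rcases exists_Icc_lt_abs_iteratedDeriv_or_lt_abs_iteratedDeriv_succ n hκ hL
    (by rw [sub_zero]; rw [pow_succ] at hL1; nlinarith) (fun i hi => hf i (by omega)) hx₀ hfx₀
    with ⟨c, hc, hlow⟩ | ⟨ξ, hξ, hfξ⟩
  · refine ⟨c, hc, fun y hy i hi => lt_of_le_of_lt ?_ (hlow y hy i hi)⟩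
    calc (κ * L) ^ (n + 1 - i) = κ ^ (n - i) * κ * (L ^ (n - i) * L) := by
          rw [show n + 1 - i = n - i + 1 by omega, mul_pow, pow_succ, pow_succ]
      _ ≤ 1 * κ * (L ^ (n - i) * (1 / 2)) := by gcongr; exact pow_le_one₀ hκ.le hκ1
      _ = κ / 2 * L ^ (n - i) := by ring
  have hκ₁ : 2 ≤ κ / (2 * (4 ^ n * L)) := by
    rw [le_div_iff₀ (by positivity)]; rw [pow_succ] at hLκ; linarith
  rcases exists_Icc_lt_abs_iteratedDeriv_or_lt_abs_iteratedDeriv_succ (n + 1) (by positivity) hL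
    (by rwa [sub_zero]) hf hξ hfξ with ⟨c, hc, hlow⟩ | ⟨ξ₂, hξ₂, hfξ₂⟩
  · refine ⟨c, hc, fun y hy i hi => lt_of_le_of_lt ?_ (hlow y hy i (by omega))⟩
    calc (κ * L) ^ (n + 1 - i) = κ ^ (n + 1 - i) * L ^ (n + 1 - i) := mul_pow _ _ _
      _ ≤ 1 * L ^ (n + 1 - i) := by gcongr; exact pow_le_one₀ hκ.le hκ1
      _ ≤ κ / (2 * (4 ^ n * L)) / 2 * L ^ (n + 1 - i) := by gcongr; linarith
  have : κ / (2 * (4 ^ n * L)) / (2 * (4 ^ (n + 1) * L)) = κ / (4 ^ (2 * n + 2) * L ^ 2) := by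
    rw [div_div, pow_succ, show 2 * n + 2 = n + n + 2 by ring, pow_add, pow_add]; ring
  linarith [hbound ξ₂ hξ₂]

theorem exists_Icc_pow_lt_abs_iteratedDeriv_of_le_sq_factorial {f : ℝ → ℝ} {k : ℕ} (hk : 1 ≤ k)
    {κ : ℝ} (hκ : 0 < κ) (hκ1 : κ ≤ 1)
    (hf : ∀ i ≤ k + 2, ∀ x ∈ Icc (0 : ℝ) 1, DifferentiableAt ℝ (iteratedDeriv i f) x)
    (hbound : ∀ x ∈ Icc (0 : ℝ) 1, |iteratedDeriv (k + 3) f x| ≤ (k ! : ℝ) ^ 2)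
    (hx₀ : ∃ x ∈ Icc (0 : ℝ) 1, κ < |iteratedDeriv (k + 1) f x|) :
    ∃ c, Icc c (c + κ / (128 * k * 4 ^ (2 * k + 1) * k !)) ⊆ Icc 0 1 ∧
      ∀ y ∈ Icc c (c + κ / (128 * k * 4 ^ (2 * k + 1) * k !)), ∀ i ≤ k + 1,
        (κ * (κ / (128 * k * 4 ^ (2 * k + 1) * k !))) ^ (k + 2 - i) < |iteratedDeriv i f y| := by
  set F : ℝ := 128 * k * 4 ^ (2 * k + 1) * (k ! : ℝ)
  have hk : (1 : ℝ) ≤ k := by exact_mod_cast hk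
  have h4 : (1 : ℝ) ≤ 4 ^ (2 * k + 1) := one_le_pow₀ (by norm_num)
  have hK : (1 : ℝ) ≤ k ! := by exact_mod_cast k.factorial_pos
  have hF : 4 ^ (k + 2) ≤ F := calc
    (4 : ℝ) ^ (k + 2) ≤ 4 ^ (2 * k + 1) := pow_le_pow_right₀ (by norm_num) (by omega)
    _ = 1 * 1 * 4 ^ (2 * k + 1) * 1 := by ring
    _ ≤ 128 * k * 4 ^ (2 * k + 1) * (k ! : ℝ) := by gcongr; linarith
  have hF2 : 4 ^ (2 * k + 4) * (k ! : ℝ) ^ 2 ≤ F ^ 2 := calc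
    4 ^ (2 * k + 4) * (k ! : ℝ) ^ 2 = 64 * 4 ^ (2 * k + 1) * (k ! : ℝ) ^ 2 := by ring
    _ ≤ (128 * 1 * 4 ^ (2 * k + 1)) ^ 2 * (k ! : ℝ) ^ 2 := by gcongr; nlinarith
    _ ≤ (128 * k * 4 ^ (2 * k + 1)) ^ 2 * (k ! : ℝ) ^ 2 := by gcongr
    _ = F ^ 2 := by ring
  have hFpos : 0 < F := by positivity
  exact exists_Icc_pow_lt_abs_iteratedDeriv (k + 1) hκ hκ1 (div_pos hκ hFpos)
    (by rw [mul_div_assoc', div_le_iff₀ hFpos, mul_comm κ]; gcongr) hf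
    (fun x hx => calc
      |iteratedDeriv (k + 1 + 2) f x| ≤ (k ! : ℝ) ^ 2 := hbound x hx
      _ ≤ F ^ 2 / 4 ^ (2 * k + 4) := by rw [le_div_iff₀ (by positivity)]; linarith
      _ ≤ F ^ 2 / 4 ^ (2 * k + 4) / κ := le_div_self (by positivity) hκ hκ1
      _ = κ / (4 ^ (2 * (k + 1) + 2) * (κ / F) ^ 2) := by field_simp; ring) hx₀

theorem stmt_11 (f : ℝ → ℝ) (hf : ∀ x ∈ Set.Icc (0:ℝ) 1, AnalyticAt ℝ f x) :
    ∃ B > (1:ℝ), ∃ k₀ : ℕ, 1 ≤ k₀ ∧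
      ∀ k : ℕ, k₀ ≤ k → ∀ κ : ℝ, 0 < κ → κ ≤ 1 →
        (∃ x ∈ Set.Icc (0:ℝ) 1, κ < |iteratedDeriv (k + 1) f x|) →
        ∃ c d : ℝ, 0 ≤ c ∧ c ≤ d ∧ d ≤ 1 ∧
          κ / (128 * B * k * 4 ^ (2 * k + 1) * (Nat.factorial k : ℝ)) < d - c ∧
          ∀ y ∈ Set.Icc c d, ∀ i : ℕ, i ≤ k + 1 →
            (κ ^ 2 / (64 * B * k * 4 ^ (2 * k + 1) * (Nat.factorial k : ℝ))) ^ (k + 2 - i)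
              < |iteratedDeriv i f y| := by
  obtain ⟨C, ρ, hC, hρ, hcauchy⟩ := isCompact_Icc.exists_norm_iteratedDeriv_le hf
  obtain ⟨N, hN⟩ := eventually_atTop.1 (eventually_mul_factorial_add_mul_pow_le_sq_factorial hC hρ 3)
  refine ⟨2, one_lt_two, max N 1, le_max_right _ _, fun k hk κ hκ hκ1 hx₀ => ?_⟩
  have hdiff : ∀ i, ∀ x ∈ Icc (0 : ℝ) 1, DifferentiableAt ℝ (iteratedDeriv i f) x :=
    fun i x hx => by
      rw [iteratedDeriv_eq_iterate]; exact ((hf x hx).iterated_deriv i).differentiableAt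
  have hk₁ : 1 ≤ k := (le_max_right _ _).trans hk
  obtain ⟨c, hc, hlow⟩ := exists_Icc_pow_lt_abs_iteratedDeriv_of_le_sq_factorial hk₁ hκ hκ1 (fun i _ => hdiff i)
    (fun x hx => (hcauchy x hx (k + 3)).trans (hN k ((le_max_left _ _).trans hk))) hx₀
  have hF : (0 : ℝ) < 128 * k * 4 ^ (2 * k + 1) * k ! := by
    have : (0 : ℝ) < k := by exact_mod_cast hk₁
    positivity
  set L := κ / (128 * k * 4 ^ (2 * k + 1) * k !) with hL_def
  have hL : 0 < L := div_pos hκ hF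
  have hcL : c ≤ c + L := le_add_of_nonneg_right hL.le
  refine ⟨c, c + L, (hc ⟨le_rfl, hcL⟩).1, hcL, (hc ⟨hcL, le_rfl⟩).2, ?_, fun y hy i hi => ?_⟩
  · rw [add_sub_cancel_left, hL_def]
    exact div_lt_div_of_pos_left hκ hF (by linarith)
  · convert hlow y hy i hi using 2
    ring
end

section
/- There exist constants c > 0 and ε₀ ∈ (0,1) such that for every ε with 0 < ε ≤ ε₀, every real polynomial p satisfying |p(x) − 1/(1+x)| ≤ ε for all x ∈ [0, 1/2] has degree at least c · log(1/ε). -/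
/-!
If `p` approximates `1 / (1 + x)` within `ε` on `[0, 1/2]`, then `q = (1 + x) p - 1` has degree at
most `n + 1` (where `n = deg p`), is bounded by `3ε/2` on `[0, 1/2]`, and yet `q(-1) = -1`.
Lagrange interpolation at the equispaced nodes `j / (2d)`, `0 ≤ j ≤ d`, shows that a polynomial
of degree `≤ d` grows by at most a factor `exp (6d)` from `[0, 1/2]` to `-1`: the `i`-th basis
polynomial at `-1` is at most `(3d)^d / (i! (d-i)!)`, and these sum to `(6d)^d / d! ≤ exp (6d)`.
Hence `1 ≤ (3/2) ε exp (6(n + 1))`, i.e. `log (1/ε) ≤ 6n + 7`.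
-/

open Finset Polynomial Real Nat

theorem Nat.prod_dist_erase_range {d i : ℕ} (hi : i ≤ d) :
    ∏ j ∈ (range (d + 1)).erase i, Nat.dist i j = i ! * (d - i) ! := by
  have hsplit : (range (d + 1)).erase i = range i ∪ Ico (i + 1) (d + 1) := by
    ext j
    simp only [mem_erase, mem_range, mem_union, mem_Ico]
    omega
  have hdisj : Disjoint (range i) (Ico (i + 1) (d + 1)) := by
    rw [disjoint_left]
    intro j
    simp only [mem_range, mem_Ico]
    omega
  rw [hsplit, prod_union hdisj, ← prod_range_add_one_eq_factorial,
    ← prod_range_add_one_eq_factorial, ← prod_range_reflect, prod_Ico_eq_prod_range]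
  congr 1
  · refine prod_congr rfl fun j hj => ?_
    rw [mem_range] at hj
    rw [Nat.dist_eq_sub_of_le_right (by omega)]
    omega
  · refine prod_congr (by congr 1; omega) fun j _ => ?_
    rw [Nat.dist_eq_sub_of_le (by omega)]
    omega

theorem Nat.cast_dist {R : Type*} [Ring R] [LinearOrder R] [IsStrictOrderedRing R] (i j : ℕ) :
    (Nat.dist i j : R) = |(i : R) - j| := by
  rcases le_total i j with h | h
  · rw [Nat.dist_eq_sub_of_le h, Nat.cast_sub h, abs_sub_comm,
      abs_of_nonneg (sub_nonneg.mpr (Nat.cast_le.mpr h))]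
  · rw [Nat.dist_eq_sub_of_le_right h, Nat.cast_sub h,
      abs_of_nonneg (sub_nonneg.mpr (Nat.cast_le.mpr h))]

theorem Lagrange.abs_eval_le_sum {F ι : Type*} [Field F] [LinearOrder F] [IsStrictOrderedRing F]
    [DecidableEq ι] {s : Finset ι} {v : ι → F} (hvs : Set.InjOn v s) {q : F[X]}
    (hq : q.degree < #s) (t : F) :
    |q.eval t| ≤ ∑ i ∈ s, |q.eval (v i)| * |(Lagrange.basis s v i).eval t| := by
  calc |q.eval t| = |∑ i ∈ s, q.eval (v i) * (Lagrange.basis s v i).eval t| := by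
        conv_lhs => rw [Lagrange.eq_interpolate hvs hq]
        simp only [Lagrange.interpolate_apply, eval_finsetSum, eval_mul, eval_C]
    _ ≤ _ := by
        simp only [← abs_mul]
        exact abs_sum_le_sum_abs _ _

noncomputable def equispacedNode (d j : ℕ) : ℝ := j / (2 * d)

theorem abs_eval_neg_one_basis_equispacedNode_le {d i : ℕ} (hd : 0 < d) (hi : i ≤ d) :
    |(Lagrange.basis (range (d + 1)) (equispacedNode d) i).eval (-1)|
      ≤ (3 * d) ^ d / d ! * d.choose i := by
  have h2d : (0 : ℝ) < 2 * d := by positivity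
  have hterm : ∀ j ∈ (range (d + 1)).erase i,
      |(equispacedNode d i - equispacedNode d j)⁻¹ * (-1 - equispacedNode d j)|
        ≤ 3 * d / Nat.dist i j := by
    intro j hj
    rw [mem_erase, mem_range] at hj
    have hjd : (j : ℝ) ≤ d := by exact_mod_cast Nat.lt_succ_iff.mp hj.2
    have hdiff : equispacedNode d i - equispacedNode d j = ((i : ℝ) - j) / (2 * d) := by
      simp only [equispacedNode]; ring
    have hshift : -1 - equispacedNode d j = -((2 * d + j) / (2 * d)) := by
      simp only [equispacedNode]; field_simp; ring
    have hpos : (0 : ℝ) < 2 * d + j := by positivity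
    rw [abs_mul, abs_inv, hdiff, hshift, abs_neg, abs_div, abs_div, abs_of_pos h2d,
      abs_of_pos hpos, ← Nat.cast_dist, inv_div]
    calc 2 * d / Nat.dist i j * ((2 * d + j) / (2 * d)) = (2 * d + j) / (Nat.dist i j : ℝ) := by
          field_simp
      _ ≤ 3 * d / Nat.dist i j := by gcongr; linarith
  have hdenom : ((i ! * (d - i) ! : ℕ) : ℝ) = d ! / d.choose i := by
    rw [Nat.cast_choose ℝ hi]
    field_simp
    push_cast
    ring
  calc |(Lagrange.basis (range (d + 1)) (equispacedNode d) i).eval (-1)|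
      = ∏ j ∈ (range (d + 1)).erase i,
          |(equispacedNode d i - equispacedNode d j)⁻¹ * (-1 - equispacedNode d j)| := by
        simp only [Lagrange.basis, Lagrange.basisDivisor, eval_prod, eval_mul, eval_C, eval_sub,
          eval_X, abs_prod]
    _ ≤ ∏ j ∈ (range (d + 1)).erase i, (3 * d / Nat.dist i j : ℝ) :=
        prod_le_prod (fun _ _ => abs_nonneg _) hterm
    _ = (3 * d) ^ d / d ! * d.choose i := by
        rw [prod_div_distrib, prod_const, card_erase_of_mem (mem_range.mpr (by omega)),
          card_range, Nat.add_sub_cancel, ← Nat.cast_prod, Nat.prod_dist_erase_range hi, hdenom]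
        have : (d.choose i : ℝ) ≠ 0 := by exact_mod_cast (Nat.choose_pos hi).ne'
        field_simp

theorem abs_eval_neg_one_le_of_abs_le_on_Icc {q : ℝ[X]} {d : ℕ} (hd : 0 < d)
    (hq : q.natDegree ≤ d) {M : ℝ} (hM : ∀ x ∈ Set.Icc (0 : ℝ) (1 / 2), |q.eval x| ≤ M) :
    |q.eval (-1)| ≤ M * exp (6 * d) := by
  have hd' : (0 : ℝ) < d := by exact_mod_cast hd
  have hnode : ∀ i ∈ range (d + 1), equispacedNode d i ∈ Set.Icc (0 : ℝ) (1 / 2) := by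
    intro i hi
    have hid : (i : ℝ) ≤ d := by exact_mod_cast Nat.lt_succ_iff.mp (mem_range.mp hi)
    refine ⟨by unfold equispacedNode; positivity, ?_⟩
    rw [equispacedNode, div_le_iff₀ (by positivity)]
    linarith
  have hinj : Set.InjOn (equispacedNode d) (range (d + 1)) := fun i _ j _ hij => by
    simpa [equispacedNode, hd'.ne'] using hij
  have hdeg : q.degree < #(range (d + 1)) := by
    rw [card_range]
    exact (degree_le_of_natDegree_le hq).trans_lt (by exact_mod_cast Nat.lt_succ_self d)
  have hM0 : 0 ≤ M := (abs_nonneg _).trans (hM 0 (by norm_num))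
  calc |q.eval (-1)|
      ≤ ∑ i ∈ range (d + 1), |q.eval (equispacedNode d i)|
          * |(Lagrange.basis (range (d + 1)) (equispacedNode d) i).eval (-1)| :=
        Lagrange.abs_eval_le_sum hinj hdeg _
    _ ≤ ∑ i ∈ range (d + 1), M * ((3 * d) ^ d / d ! * d.choose i) := by
        refine sum_le_sum fun i hi => mul_le_mul (hM _ (hnode i hi))
          (abs_eval_neg_one_basis_equispacedNode_le hd (Nat.lt_succ_iff.mp (mem_range.mp hi)))
          (abs_nonneg _) hM0
    _ = M * ((6 * d) ^ d / d !) := by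
        rw [← mul_sum, ← mul_sum, ← Nat.cast_sum, Nat.sum_range_choose]
        push_cast
        rw [show (6 * d : ℝ) = 3 * d * 2 by ring, mul_pow (3 * (d : ℝ)) 2 d]
        ring
    _ ≤ M * exp (6 * d) := by
        gcongr
        exact pow_div_factorial_le_exp _ (by positivity) d

theorem log_one_div_le_of_abs_sub_inv_one_add_le {p : ℝ[X]} {ε : ℝ} (hε : 0 < ε)
    (hp : ∀ x ∈ Set.Icc (0 : ℝ) (1 / 2), |p.eval x - 1 / (1 + x)| ≤ ε) :
    Real.log (1 / ε) ≤ 6 * p.natDegree + 7 := by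
  set q : ℝ[X] := (X + 1) * p - 1
  have hq : q.natDegree ≤ p.natDegree + 1 := by
    refine (natDegree_sub_le _ _).trans (max_le (natDegree_mul_le.trans ?_) (by simp))
    rw [← C_1, natDegree_X_add_C, add_comm]
  have hbound : ∀ x ∈ Set.Icc (0 : ℝ) (1 / 2), |q.eval x| ≤ 3 / 2 * ε := by
    intro x hx
    have hx1 : 0 < 1 + x := by linarith [hx.1]
    have : q.eval x = (1 + x) * (p.eval x - 1 / (1 + x)) := by
      simp only [q, eval_sub, eval_mul, eval_add, eval_X, eval_one]
      field_simp
      ring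
    rw [this, abs_mul, abs_of_pos hx1]
    exact mul_le_mul (by linarith [hx.2]) (hp x hx) (abs_nonneg _) (by norm_num)
  have hq1 : |q.eval (-1)| = 1 := by simp [q]
  have key := abs_eval_neg_one_le_of_abs_le_on_Icc (Nat.succ_pos _) hq hbound
  rw [hq1] at key
  have h32 : (3 / 2 : ℝ) ≤ exp 1 := by linarith [add_one_le_exp (1 : ℝ)]
  rw [Real.log_le_iff_le_exp (by positivity), div_le_iff₀ hε]
  calc 1 ≤ 3 / 2 * ε * exp (6 * ↑(p.natDegree + 1)) := key
    _ ≤ exp 1 * ε * exp (6 * ↑(p.natDegree + 1)) := by gcongr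
    _ = exp (6 * p.natDegree + 7) * ε := by
        rw [mul_right_comm, ← exp_add]
        push_cast
        ring_nf

theorem stmt_13 :
    ∃ c > (0:ℝ), ∃ ε₀ : ℝ, 0 < ε₀ ∧ ε₀ < 1 ∧
      ∀ ε : ℝ, 0 < ε → ε ≤ ε₀ →
        ∀ p : Polynomial ℝ,
          (∀ x ∈ Set.Icc (0:ℝ) (1/2), |p.eval x - 1 / (1 + x)| ≤ ε) →
          c * Real.log (1 / ε) ≤ (p.natDegree : ℝ) := by
  refine ⟨1 / 12, by norm_num, exp (-14), exp_pos _, exp_lt_one_iff.mpr (by norm_num), ?_⟩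
  intro ε hε hε₀ p hp
  have hupper := log_one_div_le_of_abs_sub_inv_one_add_le hε hp
  have hlower : 14 ≤ Real.log (1 / ε) := by
    rw [Real.le_log_iff_exp_le (by positivity), le_div_iff₀ hε]
    calc exp 14 * ε ≤ exp 14 * exp (-14) := by gcongr
      _ = 1 := by rw [← exp_add]; norm_num
  linarith
end

section
/- Let n, d ≥ 1 and q ≥ 0 be integers and let x_1, …, x_n ∈ ℝ^d. Define the matrix A ∈ ℝ^{n×n} by A_{ij} = (‖x_i − x_j‖₂²)^q. Then the rank of A is at most binom(2d + 2q − 1, 2q). -/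
open MvPolynomial

theorem stmt_14 (n d q : ℕ) (hn : 1 ≤ n) (hd : 1 ≤ d)
    (x : Fin n → EuclideanSpace ℝ (Fin d))
    (A : Matrix (Fin n) (Fin n) ℝ)
    (hA : ∀ i j, A i j = (‖x i - x j‖ ^ 2) ^ q) :
    A.rank ≤ Nat.choose (2 * d + 2 * q - 1) (2 * q) := by
  classical
  let P : MvPolynomial (Fin d ⊕ Fin d) ℝ :=
    (∑ l : Fin d, (X (Sum.inl l) - X (Sum.inr l)) ^ 2) ^ q
  have hP : P.IsHomogeneous (2 * q) := by
    have h2 : (∑ l : Fin d, (X (Sum.inl l) - X (Sum.inr l)) ^ 2 :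
        MvPolynomial (Fin d ⊕ Fin d) ℝ).IsHomogeneous 2 := by
      apply IsHomogeneous.sum
      intro l _
      simpa using ((isHomogeneous_X ℝ (Sum.inl l)).sub (isHomogeneous_X ℝ (Sum.inr l))).pow 2
    simpa [P, two_mul] using h2.pow q
  have hcard : ∀ m ∈ P.support, Multiset.card (Finsupp.toMultiset m) = 2 * q := by
    intro m hm
    have hdeg := hP (mem_support_iff.mp hm)
    rw [Finsupp.card_toMultiset]
    simpa [Finsupp.weight, Finsupp.linearCombination, Finsupp.sum] using hdeg
  let B : Matrix (Fin n) (Sym (Fin d ⊕ Fin d) (2 * q)) ℝ := fun i s =>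
    P.coeff (Multiset.toFinsupp s.val) *
      ∏ l : Fin d, x i l ^ (Multiset.count (Sum.inl l) s.val)
  let C : Matrix (Sym (Fin d ⊕ Fin d) (2 * q)) (Fin n) ℝ := fun s j =>
    ∏ l : Fin d, x j l ^ (Multiset.count (Sum.inr l) s.val)
  have hBC : A = B * C := by
    ext i j
    rw [hA, Matrix.mul_apply]
    have hnorm : (‖x i - x j‖ : ℝ) ^ 2 = ∑ l : Fin d, (x i l - x j l) ^ 2 := by
      rw [EuclideanSpace.norm_eq, Real.sq_sqrt (by positivity)]
      simp [sq_abs]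
    have heval : (‖x i - x j‖ ^ 2 : ℝ) ^ q =
        MvPolynomial.eval (Sum.elim (x i) (x j)) P := by
      simp [P, hnorm]
    have key : ∀ s : Sym (Fin d ⊕ Fin d) (2 * q),
        P.coeff (Multiset.toFinsupp s.val) *
          ∏ v, (Sum.elim (x i) (x j)) v ^ (Multiset.toFinsupp s.val) v
        = B i s * C s j := by
      intro s
      simp only [B, C, Fintype.prod_sum_type, Sum.elim_inl, Sum.elim_inr,
        Multiset.toFinsupp_apply, mul_assoc]
    rw [heval, eval_eq']
    refine Finset.sum_bij_ne_zero
      (fun m hm _ => (⟨Finsupp.toMultiset m, hcard m hm⟩ : Sym (Fin d ⊕ Fin d) (2 * q)))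
      (fun _ _ _ => Finset.mem_univ _) ?_ ?_ ?_
    · intro m₁ h₁₁ h₁₂ m₂ h₂₁ h₂₂ h
      have := congrArg (fun s : Sym (Fin d ⊕ Fin d) (2 * q) => Multiset.toFinsupp s.val) h
      simpa [Finsupp.toMultiset_toFinsupp] using this
    · intro s _ hne
      have hc : P.coeff (Multiset.toFinsupp s.val) ≠ 0 := by
        intro h0
        apply hne
        simp only [B]
        rw [h0, zero_mul, zero_mul]
      have hmem : Multiset.toFinsupp s.val ∈ P.support := mem_support_iff.mpr hc
      have hfa : P.coeff (Multiset.toFinsupp s.val) *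
          ∏ v, (Sum.elim (x i) (x j)) v ^ (Multiset.toFinsupp s.val) v ≠ 0 := by
        rw [key s]; exact hne
      refine ⟨Multiset.toFinsupp s.val, hmem, hfa, ?_⟩
      exact Subtype.ext (by simp [Multiset.toFinsupp_toMultiset])
    · intro m hm hne
      rw [← key ⟨Finsupp.toMultiset m, hcard m hm⟩]
      simp [Finsupp.toMultiset_toFinsupp]
  have h1 : A.rank ≤ Fintype.card (Sym (Fin d ⊕ Fin d) (2 * q)) := by
    rw [hBC]
    exact (Matrix.rank_mul_le_right B C).trans (Matrix.rank_le_card_height C)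
  calc A.rank ≤ _ := h1
    _ = Nat.choose (2 * d + 2 * q - 1) (2 * q) := by
        rw [Sym.card_sym_eq_choose]
        congr 2
        simp [two_mul]
end

section
/- Let G be a connected weighted graph on n ≥ 2 vertices with positive edge weights, let s ≠ t be two vertices, and let R = Reff_G(s,t) = (e_s − e_t)ᵀ L_G† (e_s − e_t). Then 0.5 · R² ≤ ‖L_G† (e_s − e_t)‖₂² ≤ n · R². -/
open Matrix Finset

section Helpers
variable {n : ℕ}

private lemma aux_walk (G : SimpleGraph (Fin n)) (x : Fin n → ℝ) (M : ℝ) (s : Fin n)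
    (h : ∀ j, j ≠ s → x j = M → ∀ k, G.Adj j k → x k = M) :
    ∀ {j r : Fin n}, (p : G.Walk j r) → r = s → x j = M → x s = M := by
  intro j r p
  induction p with
  | @nil u => intro hr hj; rw [hr] at hj; exact hj
  | @cons u v _ hadj _ ih =>
    intro hr hu
    by_cases hus : u = s
    · rwa [hus] at hu
    · exact ih hr (h u hus hu v hadj)

private lemma aux_mulVec (w : Fin n → Fin n → ℝ)
    (L : Matrix (Fin n) (Fin n) ℝ)
    (hL : ∀ u v, L u v = if u = v then ∑ s ∈ univ.erase u, w u s else - w u v)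
    (x : Fin n → ℝ) (j : Fin n) :
    L.mulVec x j = ∑ v ∈ univ.erase j, w j v * (x j - x v) := by
  have : L.mulVec x j = ∑ v, L j v * x v := rfl
  rw [this, ← Finset.sum_erase_add _ _ (mem_univ j), hL j j, if_pos rfl,
    Finset.sum_mul, ← Finset.sum_add_distrib]
  refine Finset.sum_congr rfl fun v hv => ?_
  rw [hL j v, if_neg (Finset.mem_erase.mp hv).1.symm]
  ring

private lemma aux_maxle
    (w : Fin n → Fin n → ℝ)
    (hsymm : ∀ u v, w u v = w v u)
    (hnonneg : ∀ u v, 0 ≤ w u v)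
    (hconn : (SimpleGraph.fromRel fun u v : Fin n => 0 < w u v).Connected)
    (L : Matrix (Fin n) (Fin n) ℝ)
    (hL : ∀ u v, L u v = if u = v then ∑ s ∈ univ.erase u, w u s else - w u v)
    (x c : Fin n → ℝ) (hx : L.mulVec x = c)
    (s : Fin n) (hc : ∀ j, j ≠ s → c j ≤ 0) :
    ∀ i, x i ≤ x s := by
  obtain ⟨j, _, hj⟩ := Finset.exists_max_image univ x ⟨s, mem_univ s⟩
  have hprop : ∀ u, u ≠ s → x u = x j → ∀ k,
      (SimpleGraph.fromRel fun u v : Fin n => 0 < w u v).Adj u k → x k = x j := by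
    intro u hus hu k hadj
    have heq : ∑ v ∈ univ.erase u, w u v * (x u - x v) = c u := by
      rw [← aux_mulVec w L hL x u, hx]
    have hterm : ∀ v ∈ univ.erase u, 0 ≤ w u v * (x u - x v) := by
      intro v _
      exact mul_nonneg (hnonneg u v) (by rw [hu]; linarith [hj v (mem_univ v)])
    have hsum0 : ∑ v ∈ univ.erase u, w u v * (x u - x v) = 0 :=
      le_antisymm (heq ▸ hc u hus) (Finset.sum_nonneg hterm)
    obtain ⟨hku, hw⟩ : u ≠ k ∧ 0 < w u k := by
      obtain ⟨hne, hor⟩ := hadj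
      refine ⟨hne, ?_⟩
      rcases hor with h | h
      · exact h
      · rwa [hsymm]
    have hk0 : w u k * (x u - x k) = 0 :=
      (Finset.sum_eq_zero_iff_of_nonneg hterm).mp hsum0 k
        (Finset.mem_erase.mpr ⟨hku.symm, mem_univ k⟩)
    have : x u - x k = 0 := by
      rcases mul_eq_zero.mp hk0 with h | h
      · exact absurd h (ne_of_gt hw)
      · exact h
    have := sub_eq_zero.mp this
    rw [← this, hu]
  obtain ⟨p⟩ := hconn.preconnected j s
  have hs : x s = x j := aux_walk _ x (x j) s hprop p rfl rfl
  intro i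
  rw [hs]
  exact hj i (mem_univ i)

end Helpers

theorem stmt_16 (n : ℕ) (hn : 2 ≤ n)
    (w : Fin n → Fin n → ℝ)
    (hsymm : ∀ u v, w u v = w v u)
    (hnonneg : ∀ u v, 0 ≤ w u v)
    (hconn : (SimpleGraph.fromRel fun u v : Fin n => 0 < w u v).Connected)
    (L : Matrix (Fin n) (Fin n) ℝ)
    (hL : ∀ u v, L u v = if u = v then ∑ s ∈ univ.erase u, w u s else - w u v)
    (H : Matrix (Fin n) (Fin n) ℝ)
    (hH1 : L * H * L = L) (hH2 : H * L * H = H)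
    (hH3 : (L * H)ᵀ = L * H) (hH4 : (H * L)ᵀ = H * L)
    (s t : Fin n) (hst : s ≠ t)
    (χ : Fin n → ℝ)
    (hχ : χ = fun i => (if i = s then (1:ℝ) else 0) - (if i = t then (1:ℝ) else 0))
    (R : ℝ) (hR : R = χ ⬝ᵥ H.mulVec χ) :
    0.5 * R ^ 2 ≤ ∑ i, (H.mulVec χ i) ^ 2 ∧
    ∑ i, (H.mulVec χ i) ^ 2 ≤ (n : ℝ) * R ^ 2 := by
  have hLsym : Lᵀ = L := by
    ext u v
    simp only [Matrix.transpose_apply, hL]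
    by_cases h : u = v
    · subst h; simp
    · rw [if_neg h, if_neg (Ne.symm h), hsymm]
  have hcol : ∀ u v, L v u = L u v := by
    intro u v
    have := congrFun (congrFun hLsym u) v
    simpa using this
  have hrowsum : ∀ u, ∑ v, L u v = 0 := by
    intro u
    rw [← Finset.sum_erase_add _ _ (mem_univ u), hL u u, if_pos rfl]
    rw [Finset.sum_congr rfl (fun v hv => by
      rw [hL u v, if_neg (Finset.mem_erase.mp hv).1.symm])]
    simp
  have hones : (fun _ => (1:ℝ)) ᵥ* L = 0 := by
    funext u
    have h1 : ((fun _ => (1:ℝ)) ᵥ* L) u = ∑ v, L v u := by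
      simp [Matrix.vecMul, dotProduct]
    rw [h1, Finset.sum_congr rfl (fun v _ => hcol u v), hrowsum]
    rfl
  -- x := H χ
  set x : Fin n → ℝ := H.mulVec χ with hxdef
  -- sum of x is zero
  have honesH : (fun _ => (1:ℝ)) ᵥ* H = 0 := by
    have hHL : H * L = L * Hᵀ := by
      rw [← hH4, Matrix.transpose_mul, hLsym]
    have hHL0 : (fun _ => (1:ℝ)) ᵥ* (H * L) = 0 := by
      rw [hHL, ← Matrix.vecMul_vecMul, hones, Matrix.zero_vecMul]
    rw [← hH2, ← Matrix.vecMul_vecMul, hHL0, Matrix.zero_vecMul]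
  have hsumx : ∑ i, x i = 0 := by
    have : ∑ i, x i = (fun _ => (1:ℝ)) ⬝ᵥ x := by
      simp [dotProduct]
    rw [this, hxdef, Matrix.dotProduct_mulVec, honesH, zero_dotProduct]
  -- L x = χ
  have hLannil : L * (1 - L * H) = 0 := by
    have h0 : (1 - L * H) * L = 0 := by
      rw [sub_mul, one_mul, hH1, sub_self]
    have := congrArg Matrix.transpose h0
    rwa [Matrix.transpose_mul, Matrix.transpose_sub, Matrix.transpose_one, hH3,
      hLsym, Matrix.transpose_zero] at this
  have hy : L.mulVec (χ - L.mulVec x) = 0 := by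
    have : χ - L.mulVec x = (1 - L * H).mulVec χ := by
      rw [Matrix.sub_mulVec, Matrix.one_mulVec, hxdef, Matrix.mulVec_mulVec]
    rw [this, Matrix.mulVec_mulVec, hLannil, Matrix.zero_mulVec]
  set y : Fin n → ℝ := χ - L.mulVec x with hydef
  have hsumy : ∑ i, y i = 0 := by
    have h1 : ∑ i, χ i = 0 := by
      rw [hχ]
      simp [Finset.sum_sub_distrib, hst]
    have h2 : ∑ i, L.mulVec x i = 0 := by
      have : ∑ i, L.mulVec x i = (fun _ => (1:ℝ)) ⬝ᵥ L.mulVec x := by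
        simp [dotProduct]
      rw [this, Matrix.dotProduct_mulVec, hones, zero_dotProduct]
    simp only [hydef, Pi.sub_apply, Finset.sum_sub_distrib, h1, h2, sub_zero]
  have hyconst : ∀ i i', y i ≤ y i' :=
    fun i i' => aux_maxle w hsymm hnonneg hconn L hL y 0 hy i' (fun _ _ => le_refl 0) i
  have hyzero : y = 0 := by
    obtain ⟨i0, _⟩ := Finset.exists_max_image (univ : Finset (Fin n)) y ⟨s, mem_univ s⟩
    have hconst : ∀ i, y i = y i0 := fun i => le_antisymm (hyconst i i0) (hyconst i0 i)
    have : ∑ i, y i = (n : ℝ) * y i0 := by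
      rw [Finset.sum_congr rfl (fun i _ => hconst i)]
      simp [mul_comm]
    have hy0 : y i0 = 0 := by
      have hn0 : (n:ℝ) ≠ 0 := by positivity
      have := hsumy
      rw [‹∑ i, y i = (n : ℝ) * y i0›] at this
      exact (mul_eq_zero.mp this).resolve_left hn0
    funext i
    rw [hconst i, hy0]; rfl
  have hLx : L.mulVec x = χ := by
    have := sub_eq_zero.mp (hydef ▸ hyzero : χ - L.mulVec x = 0)
    exact this.symm
  -- max principle
  have hmax : ∀ i, x i ≤ x s := by
    refine aux_maxle w hsymm hnonneg hconn L hL x χ hLx s ?_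
    intro j hjs
    rw [hχ]
    simp [hjs]
    split <;> norm_num
  have hmin : ∀ i, x t ≤ x i := by
    have h2 : L.mulVec (-x) = -χ := by rw [Matrix.mulVec_neg, hLx]
    have := aux_maxle w hsymm hnonneg hconn L hL (-x) (-χ) h2 t ?_
    · intro i; have := this i; simpa using this
    · intro j hjt
      rw [hχ]
      simp [hjt]
      split <;> norm_num
  -- R = x s - x t
  have hRst : R = x s - x t := by
    rw [hR]
    have hdp : χ ⬝ᵥ x = ∑ i, χ i * x i := rfl
    rw [hdp, hχ]
    rw [Finset.sum_congr rfl (fun i _ => sub_mul ((if i = s then (1:ℝ) else 0))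
      ((if i = t then (1:ℝ) else 0)) (x i))]
    rw [Finset.sum_sub_distrib]
    congr 1
    · rw [Finset.sum_eq_single s (fun b _ hb => by simp [hb]) (by simp)]; simp
    · rw [Finset.sum_eq_single t (fun b _ hb => by simp [hb]) (by simp)]; simp
  -- nonnegativity facts
  have hnpos : (0:ℝ) < n := by exact_mod_cast (by omega : 0 < n)
  have hxs0 : 0 ≤ x s := by
    by_contra h
    push_neg at h
    have hle : ∑ i, x i ≤ (n:ℝ) * x s := by
      calc ∑ i, x i ≤ ∑ _i : Fin n, x s := Finset.sum_le_sum (fun i _ => hmax i)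
      _ = (n:ℝ) * x s := by simp [mul_comm]
    rw [hsumx] at hle
    nlinarith
  have hxt0 : x t ≤ 0 := by
    by_contra h
    push_neg at h
    have hle : (n:ℝ) * x t ≤ ∑ i, x i := by
      calc (n:ℝ) * x t = ∑ _i : Fin n, x t := by simp [mul_comm]
      _ ≤ ∑ i, x i := Finset.sum_le_sum (fun i _ => hmin i)
    rw [hsumx] at hle
    nlinarith
  have hub : ∀ i, x i ≤ R := fun i => by rw [hRst]; linarith [hmax i]
  have hlb : ∀ i, -R ≤ x i := fun i => by rw [hRst]; linarith [hmin i]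
  have hS : x s ^ 2 + x t ^ 2 ≤ ∑ i, x i ^ 2 := by
    have hsub : ({s, t} : Finset (Fin n)) ⊆ univ := Finset.subset_univ _
    have h1 : ∑ i ∈ ({s, t} : Finset (Fin n)), x i ^ 2 ≤ ∑ i, x i ^ 2 :=
      Finset.sum_le_sum_of_subset_of_nonneg hsub (fun i _ _ => sq_nonneg _)
    rwa [Finset.sum_pair hst] at h1
  constructor
  · rw [hRst]
    nlinarith [sq_nonneg (x s + x t)]
  · calc ∑ i, x i ^ 2 ≤ ∑ _i : Fin n, R ^ 2 :=
        Finset.sum_le_sum (fun i _ => sq_le_sq' (hlb i) (hub i))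
    _ = (n:ℝ) * R ^ 2 := by simp [mul_comm]
end

section
/- Let G be a connected weighted graph on vertex set V with positive edge weights and m edges, and let S be a nonempty proper subset of V; let ∂S denote the set of edges of G with exactly one endpoint in S (which is nonempty since G is connected). Then min_{s∈S, t∉S} Reff_G(s,t) ≤ min_{e∈∂S} (1/w_e) ≤ m · min_{s∈S, t∉S} Reff_G(s,t). -/
/-!
Let `L` be the Laplacian, `L†` its pseudoinverse, `b = e_s - e_t` and `x = L† b` the potential.
Then `Reff(s,t) = x_s - x_t = xᵀ L x ≥ w_st (x_s - x_t)²`, so `Reff(s,t) ≤ 1 / w_st` on every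
edge. Conversely, since the kernel of `L` consists of the constants (`G` is connected),
`L L† b = b`, hence `xᵀ L 1_S = 1` for `s ∈ S`, `t ∉ S`. Cauchy–Schwarz for the form of `L`
gives `1 ≤ Reff(s,t) · 1_Sᵀ L 1_S = Reff(s,t) · w(∂S) ≤ Reff(s,t) · |∂S| · max_{e ∈ ∂S} w_e`,
and `|∂S| ≤ m`.
-/

open Matrix Finset

namespace Matrix

variable {m n R : Type*} [Fintype m] [Fintype n] [CommRing R]

structure IsMoorePenroseInverse (A : Matrix m n R) (H : Matrix n m R) : Prop where
  mul_inv_mul : A * H * A = A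
  inv_mul_inv : H * A * H = H
  transpose_mul_inv : (A * H)ᵀ = A * H
  transpose_inv_mul : (H * A)ᵀ = H * A

namespace IsMoorePenroseInverse

variable {A : Matrix m n R} {H K : Matrix n m R}

theorem transpose (hH : A.IsMoorePenroseInverse H) : Aᵀ.IsMoorePenroseInverse Hᵀ where
  mul_inv_mul := by rw [← transpose_mul, ← transpose_mul, ← Matrix.mul_assoc, hH.mul_inv_mul]
  inv_mul_inv := by rw [← transpose_mul, ← transpose_mul, ← Matrix.mul_assoc, hH.inv_mul_inv]
  transpose_mul_inv := by rw [← transpose_mul, transpose_transpose, hH.transpose_inv_mul]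
  transpose_inv_mul := by rw [← transpose_mul, transpose_transpose, hH.transpose_mul_inv]

theorem eq_mul_mul_left (hH : A.IsMoorePenroseInverse H) (hK : A.IsMoorePenroseInverse K) :
    H = H * A * K :=
  calc H = H * (A * H)ᵀ := by rw [hH.transpose_mul_inv, ← Matrix.mul_assoc, hH.inv_mul_inv]
    _ = H * (A * K * A * H)ᵀ := by rw [hK.mul_inv_mul]
    _ = H * ((A * H)ᵀ * (A * K)ᵀ) := by simp only [transpose_mul, Matrix.mul_assoc]
    _ = H * A * H * A * K := by
      rw [hH.transpose_mul_inv, hK.transpose_mul_inv]; simp only [Matrix.mul_assoc]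
    _ = H * A * K := by rw [hH.inv_mul_inv]

theorem eq_mul_mul_right (hH : A.IsMoorePenroseInverse H) (hK : A.IsMoorePenroseInverse K) :
    K = H * A * K :=
  calc K = (K * A)ᵀ * K := by rw [hK.transpose_inv_mul, hK.inv_mul_inv]
    _ = (K * (A * H * A))ᵀ * K := by rw [hH.mul_inv_mul]
    _ = (H * A)ᵀ * (K * A)ᵀ * K := by simp only [transpose_mul, Matrix.mul_assoc]
    _ = H * A * (K * A * K) := by
      rw [hH.transpose_inv_mul, hK.transpose_inv_mul]; simp only [Matrix.mul_assoc]
    _ = H * A * K := by rw [hK.inv_mul_inv]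

theorem unique (hH : A.IsMoorePenroseInverse H) (hK : A.IsMoorePenroseInverse K) : H = K :=
  (hH.eq_mul_mul_left hK).trans (hH.eq_mul_mul_right hK).symm

section Square

variable {A H : Matrix n n R}

theorem transpose_eq_self (hH : A.IsMoorePenroseInverse H) (hA : Aᵀ = A) : Hᵀ = H :=
  (hA ▸ hH.transpose).unique hH

theorem mul_comm (hH : A.IsMoorePenroseInverse H) (hA : Aᵀ = A) : A * H = H * A := by
  rw [← hH.transpose_mul_inv, transpose_mul, hH.transpose_eq_self hA, hA]

theorem mulVec_dotProduct_mulVec_mulVec (hH : A.IsMoorePenroseInverse H) (hA : Aᵀ = A)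
    (b : n → R) : (H *ᵥ b) ⬝ᵥ A *ᵥ (H *ᵥ b) = b ⬝ᵥ H *ᵥ b := by
  calc (H *ᵥ b) ⬝ᵥ A *ᵥ (H *ᵥ b) = b ⬝ᵥ Hᵀ *ᵥ (A *ᵥ (H *ᵥ b)) := by
        rw [dotProduct_mulVec b Hᵀ, vecMul_transpose]
    _ = b ⬝ᵥ H *ᵥ b := by
        rw [hH.transpose_eq_self hA, mulVec_mulVec, mulVec_mulVec, hH.inv_mul_inv]

end Square

end IsMoorePenroseInverse

theorem dotProduct_mulVec_mul_le {n R : Type*} [Fintype n] [DecidableEq n] [CommRing R]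
    [LinearOrder R] [IsStrictOrderedRing R] {A : Matrix n n R} (hA : ∀ x, 0 ≤ x ⬝ᵥ A *ᵥ x)
    (x y : n → R) :
    (x ⬝ᵥ A *ᵥ y) * (y ⬝ᵥ A *ᵥ x) ≤ (x ⬝ᵥ A *ᵥ x) * (y ⬝ᵥ A *ᵥ y) := by
  simpa only [toLinearMap₂'_apply'] using
    LinearMap.BilinForm.apply_mul_apply_le_of_forall_zero_le (toLinearMap₂' R A)
      (fun z => by simpa only [toLinearMap₂'_apply'] using hA z) x y

end Matrix

theorem SimpleGraph.Reachable.eq_of_forall_adj {V α : Type*} {G : SimpleGraph V} {f : V → α}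
    (hf : ∀ u v, G.Adj u v → f u = f v) {u v : V} (h : G.Reachable u v) : f u = f v := by
  obtain ⟨p⟩ := h
  induction p with
  | nil => rfl
  | cons hadj _ ih => exact (hf _ _ hadj).trans ih

def weightGraph {V : Type*} (w : V → V → ℝ) : SimpleGraph V :=
  SimpleGraph.fromRel fun u v => 0 < w u v

theorem weightGraph_adj {V : Type*} {w : V → V → ℝ} (hw : ∀ u v, w u v = w v u) {u v : V} :
    (weightGraph w).Adj u v ↔ u ≠ v ∧ 0 < w u v := by
  rw [weightGraph, SimpleGraph.fromRel_adj, hw v u, or_self]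

variable {V : Type*} [Fintype V] [DecidableEq V] {w : V → V → ℝ}

def laplacian (w : V → V → ℝ) : Matrix V V ℝ :=
  Matrix.of fun u v => if u = v then ∑ s ∈ univ.erase u, w u s else -w u v

theorem laplacian_mulVec_apply (x : V → ℝ) (u : V) :
    (laplacian w *ᵥ x) u = ∑ v, w u v * (x u - x v) := by
  rw [mulVec, dotProduct, ← sum_erase_add _ _ (mem_univ u), ← sum_erase_add _ _ (mem_univ u)]
  simp only [laplacian, of_apply, if_pos, sub_self, mul_zero, add_zero, sum_mul]
  rw [← sum_add_distrib]
  refine sum_congr rfl fun v hv => ?_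
  rw [if_neg (ne_of_mem_erase hv).symm]
  ring

theorem dotProduct_laplacian_mulVec (x : V → ℝ) :
    x ⬝ᵥ laplacian w *ᵥ x = ∑ u, ∑ v, w u v * x u * (x u - x v) := by
  simp only [dotProduct, laplacian_mulVec_apply, mul_sum]
  exact sum_congr rfl fun u _ => sum_congr rfl fun v _ => by ring

theorem laplacian_transpose (hw : ∀ u v, w u v = w v u) : (laplacian w)ᵀ = laplacian w := by
  ext u v
  by_cases h : u = v
  · subst h; rfl
  · simp [laplacian, h, Ne.symm h, hw u v]

theorem sum_laplacian_mulVec (hw : ∀ u v, w u v = w v u) (x : V → ℝ) :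
    ∑ u, (laplacian w *ᵥ x) u = 0 := by
  have hanti : ∑ u, ∑ v, w u v * (x u - x v) = -∑ u, ∑ v, w u v * (x u - x v) := by
    conv_lhs => rw [sum_comm]
    rw [← sum_neg_distrib]
    exact sum_congr rfl fun u _ => by
      rw [← sum_neg_distrib]; exact sum_congr rfl fun v _ => by rw [hw v u]; ring
  simp only [laplacian_mulVec_apply]
  linarith

theorem two_mul_dotProduct_laplacian_mulVec (hw : ∀ u v, w u v = w v u) (x : V → ℝ) :
    2 * (x ⬝ᵥ laplacian w *ᵥ x) = ∑ u, ∑ v, w u v * (x u - x v) ^ 2 := by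
  have hswap :
      ∑ u, ∑ v, w u v * x u * (x u - x v) = ∑ u, ∑ v, w u v * x v * (x v - x u) := by
    rw [sum_comm]
    exact sum_congr rfl fun u _ => sum_congr rfl fun v _ => by rw [hw]
  calc 2 * (x ⬝ᵥ laplacian w *ᵥ x)
      = ∑ u, ∑ v, w u v * x u * (x u - x v) + ∑ u, ∑ v, w u v * x v * (x v - x u) := by
        rw [← hswap, dotProduct_laplacian_mulVec]; ring
    _ = ∑ u, ∑ v, w u v * (x u - x v) ^ 2 := by
        rw [← sum_add_distrib]
        exact sum_congr rfl fun u _ => by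
          rw [← sum_add_distrib]; exact sum_congr rfl fun v _ => by ring

theorem dotProduct_laplacian_mulVec_nonneg (hw : ∀ u v, w u v = w v u)
    (hw₀ : ∀ u v, 0 ≤ w u v) (x : V → ℝ) : 0 ≤ x ⬝ᵥ laplacian w *ᵥ x := by
  have hsum : 0 ≤ ∑ u, ∑ v, w u v * (x u - x v) ^ 2 :=
    sum_nonneg fun u _ => sum_nonneg fun v _ => mul_nonneg (hw₀ u v) (sq_nonneg _)
  linarith [two_mul_dotProduct_laplacian_mulVec hw x]

theorem mul_sq_sub_le_dotProduct_laplacian_mulVec (hw : ∀ u v, w u v = w v u)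
    (hw₀ : ∀ u v, 0 ≤ w u v) (x : V → ℝ) (s t : V) :
    w s t * (x s - x t) ^ 2 ≤ x ⬝ᵥ laplacian w *ᵥ x := by
  rcases eq_or_ne s t with rfl | hst
  · simpa using dotProduct_laplacian_mulVec_nonneg hw hw₀ x
  set g : V → ℝ := fun u => ∑ v, w u v * (x u - x v) ^ 2
  have hterm : ∀ u v, 0 ≤ w u v * (x u - x v) ^ 2 := fun u v =>
    mul_nonneg (hw₀ u v) (sq_nonneg _)
  have hs : w s t * (x s - x t) ^ 2 ≤ g s := single_le_sum (fun v _ => hterm s v) (mem_univ t)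
  have ht : w t s * (x t - x s) ^ 2 ≤ g t := single_le_sum (fun v _ => hterm t v) (mem_univ s)
  have hpair : g s + g t ≤ ∑ u, g u := by
    rw [← sum_pair hst]
    exact sum_le_sum_of_subset_of_nonneg (subset_univ _) fun u _ _ =>
      sum_nonneg fun v _ => hterm u v
  have hsym : w t s * (x t - x s) ^ 2 = w s t * (x s - x t) ^ 2 := by rw [hw t s]; ring
  linarith [two_mul_dotProduct_laplacian_mulVec hw x]

theorem indicator_dotProduct_laplacian_mulVec (S : Finset V) :
    (fun i => if i ∈ S then (1 : ℝ) else 0) ⬝ᵥ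
        laplacian w *ᵥ (fun i => if i ∈ S then 1 else 0) =
      ∑ p ∈ S ×ˢ Sᶜ, w p.1 p.2 := by
  rw [dotProduct_laplacian_mulVec, sum_product, ← Fintype.sum_ite_mem S]
  refine sum_congr rfl fun u _ => ?_
  by_cases hu : u ∈ S
  · rw [if_pos hu, if_pos hu, ← Fintype.sum_ite_mem Sᶜ (w u)]
    exact sum_congr rfl fun v _ => by by_cases hv : v ∈ S <;> simp [hv]
  · simp [hu]

noncomputable def cutEdges (w : V → V → ℝ) (S : Finset V) : Finset (V × V) :=
  (S ×ˢ Sᶜ).filter fun e => 0 < w e.1 e.2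

theorem card_cutEdges_le [LinearOrder V] (hw : ∀ u v, w u v = w v u) (S : Finset V) :
    #(cutEdges w S) ≤ #(univ.filter fun e : V × V => e.1 < e.2 ∧ 0 < w e.1 e.2) := by
  refine card_le_card_of_surjOn (fun e => if e.1 ∈ S then e else e.swap) fun p hp => ?_
  simp only [cutEdges, coe_filter, mem_product, mem_compl, Set.mem_ofPred_eq] at hp
  obtain ⟨⟨hp₁, hp₂⟩, hpw⟩ := hp
  rcases lt_or_gt_of_ne (ne_of_mem_of_not_mem hp₁ hp₂) with h | h
  · exact ⟨p, by simp [h, hpw], by simp [hp₁]⟩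
  · exact ⟨p.swap, by simp [h, hw p.2, hpw], by simp [hp₂]⟩

theorem exists_mem_cutEdges (hw : ∀ u v, w u v = w v u) (hconn : (weightGraph w).Connected)
    {S : Finset V} (hS : S.Nonempty) (hSc : Sᶜ.Nonempty) : (cutEdges w S).Nonempty := by
  obtain ⟨s, hs⟩ := hS
  obtain ⟨t, ht⟩ := hSc
  obtain ⟨p⟩ := hconn s t
  obtain ⟨d, -, hd₁, hd₂⟩ := p.exists_boundary_dart S hs (by simpa using ht)
  exact ⟨(d.fst, d.snd), mem_filter.2 ⟨mem_product.2 ⟨hd₁, mem_compl.2 hd₂⟩,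
    ((weightGraph_adj hw).1 d.adj).2⟩⟩

theorem eq_of_dotProduct_laplacian_mulVec_eq_zero (hw : ∀ u v, w u v = w v u)
    (hw₀ : ∀ u v, 0 ≤ w u v) (hconn : (weightGraph w).Connected)
    {x : V → ℝ} (hx : x ⬝ᵥ laplacian w *ᵥ x = 0) (u v : V) : x u = x v := by
  have hedge : ∀ a b, 0 < w a b → x a = x b := by
    intro a b hab
    have h := mul_sq_sub_le_dotProduct_laplacian_mulVec hw hw₀ x a b
    rw [hx] at h
    have hsq : (x a - x b) ^ 2 = 0 :=
      le_antisymm (nonpos_of_mul_nonpos_right h hab) (sq_nonneg _)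
    rwa [sq_eq_zero_iff, sub_eq_zero] at hsq
  exact (hconn.preconnected u v).eq_of_forall_adj fun a b hab =>
    hedge a b ((weightGraph_adj hw).1 hab).2

theorem laplacian_mulVec_mulVec_of_sum_eq_zero (hw : ∀ u v, w u v = w v u)
    (hw₀ : ∀ u v, 0 ≤ w u v) (hconn : (weightGraph w).Connected)
    {H : Matrix V V ℝ} (hH : (laplacian w).IsMoorePenroseInverse H) {b : V → ℝ}
    (hb : ∑ i, b i = 0) : laplacian w *ᵥ (H *ᵥ b) = b := by
  -- `b - L L† b` lies in the kernel of `L`, so it is constant, and it sums to zero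
  set c := b - laplacian w *ᵥ (H *ᵥ b) with hc
  have hLc : laplacian w *ᵥ c = 0 := by
    rw [hc, mulVec_sub, mulVec_mulVec, mulVec_mulVec, Matrix.mul_assoc,
      hH.mul_comm (laplacian_transpose hw), ← Matrix.mul_assoc, hH.mul_inv_mul, sub_self]
  have hconst := eq_of_dotProduct_laplacian_mulVec_eq_zero hw hw₀ hconn
    (by rw [hLc, dotProduct_zero])
  have hsum : ∑ i, c i = 0 := by
    simp only [hc, Pi.sub_apply, sum_sub_distrib, hb, sum_laplacian_mulVec hw, sub_zero]
  suffices c = 0 from (sub_eq_zero.1 this).symm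
  funext i
  have hcard : ∑ _j : V, c i = 0 := hsum ▸ sum_congr rfl fun j _ => hconst i j
  rw [sum_const, card_univ, nsmul_eq_mul] at hcard
  exact (mul_eq_zero.1 hcard).resolve_left (Nat.cast_ne_zero.2 (Fintype.card_pos_iff.2 ⟨i⟩).ne')

theorem single_sub_single_dotProduct (s t : V) (z : V → ℝ) :
    (Pi.single s 1 - Pi.single t 1 : V → ℝ) ⬝ᵥ z = z s - z t := by
  simp [sub_dotProduct]

def effectiveResistance (H : Matrix V V ℝ) (s t : V) : ℝ :=
  (Pi.single s 1 - Pi.single t 1) ⬝ᵥ H *ᵥ (Pi.single s 1 - Pi.single t 1)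

section Resistance

variable {H : Matrix V V ℝ}

theorem effectiveResistance_eq_sub (s t : V) :
    effectiveResistance H s t =
      (H *ᵥ (Pi.single s 1 - Pi.single t 1)) s - (H *ᵥ (Pi.single s 1 - Pi.single t 1)) t :=
  single_sub_single_dotProduct s t _

theorem effectiveResistance_eq_dotProduct_laplacian_mulVec (hw : ∀ u v, w u v = w v u)
    (hH : (laplacian w).IsMoorePenroseInverse H) (s t : V) :
    effectiveResistance H s t = (H *ᵥ (Pi.single s 1 - Pi.single t 1)) ⬝ᵥ
      laplacian w *ᵥ (H *ᵥ (Pi.single s 1 - Pi.single t 1)) :=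
  (hH.mulVec_dotProduct_mulVec_mulVec (laplacian_transpose hw) _).symm

theorem effectiveResistance_nonneg (hw : ∀ u v, w u v = w v u) (hw₀ : ∀ u v, 0 ≤ w u v)
    (hH : (laplacian w).IsMoorePenroseInverse H) (s t : V) : 0 ≤ effectiveResistance H s t := by
  rw [effectiveResistance_eq_dotProduct_laplacian_mulVec hw hH]
  exact dotProduct_laplacian_mulVec_nonneg hw hw₀ _

theorem effectiveResistance_le_one_div (hw : ∀ u v, w u v = w v u) (hw₀ : ∀ u v, 0 ≤ w u v)
    (hH : (laplacian w).IsMoorePenroseInverse H) {s t : V} (hst : 0 < w s t) :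
    effectiveResistance H s t ≤ 1 / w s t := by
  have h := mul_sq_sub_le_dotProduct_laplacian_mulVec hw hw₀
    (H *ᵥ (Pi.single s 1 - Pi.single t 1)) s t
  rw [← effectiveResistance_eq_sub,
    ← effectiveResistance_eq_dotProduct_laplacian_mulVec hw hH] at h
  have hR := effectiveResistance_nonneg hw hw₀ hH s t
  rw [le_div_iff₀ hst]
  nlinarith

theorem one_le_effectiveResistance_mul_sum (hw : ∀ u v, w u v = w v u)
    (hw₀ : ∀ u v, 0 ≤ w u v) (hconn : (weightGraph w).Connected)
    (hH : (laplacian w).IsMoorePenroseInverse H) {S : Finset V} {s t : V} (hs : s ∈ S)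
    (ht : t ∉ S) : 1 ≤ effectiveResistance H s t * ∑ p ∈ S ×ˢ Sᶜ, w p.1 p.2 := by
  set x := H *ᵥ (Pi.single s 1 - Pi.single t 1)
  set y : V → ℝ := fun i => if i ∈ S then 1 else 0
  have hyx : y ⬝ᵥ laplacian w *ᵥ x = 1 := by
    rw [laplacian_mulVec_mulVec_of_sum_eq_zero hw hw₀ hconn hH (by simp),
      dotProduct_comm, single_sub_single_dotProduct]
    simp [y, hs, ht]
  have hxy : x ⬝ᵥ laplacian w *ᵥ y = 1 := by
    rw [dotProduct_mulVec, ← mulVec_transpose, laplacian_transpose hw, dotProduct_comm, hyx]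
  have hcs := dotProduct_mulVec_mul_le (dotProduct_laplacian_mulVec_nonneg hw hw₀) x y
  rwa [hxy, hyx, indicator_dotProduct_laplacian_mulVec,
    ← effectiveResistance_eq_dotProduct_laplacian_mulVec hw hH, one_mul] at hcs

theorem inf'_effectiveResistance_le_inf'_one_div (hw : ∀ u v, w u v = w v u)
    (hw₀ : ∀ u v, 0 ≤ w u v) (hH : (laplacian w).IsMoorePenroseInverse H) {S : Finset V}
    (hS : S.Nonempty) (hSc : Sᶜ.Nonempty) (hcut : (cutEdges w S).Nonempty) :
    (S ×ˢ Sᶜ).inf' (hS.product hSc) (fun p => effectiveResistance H p.1 p.2) ≤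
      (cutEdges w S).inf' hcut (fun e => 1 / w e.1 e.2) :=
  le_inf' _ _ fun _ he => inf'_le_of_le _ (mem_filter.1 he).1
    (effectiveResistance_le_one_div hw hw₀ hH (mem_filter.1 he).2)

theorem inf'_one_div_le_card_mul_inf'_effectiveResistance (hw : ∀ u v, w u v = w v u)
    (hw₀ : ∀ u v, 0 ≤ w u v) (hconn : (weightGraph w).Connected)
    (hH : (laplacian w).IsMoorePenroseInverse H) {S : Finset V} (hS : S.Nonempty)
    (hSc : Sᶜ.Nonempty) (hcut : (cutEdges w S).Nonempty) :
    (cutEdges w S).inf' hcut (fun e => 1 / w e.1 e.2) ≤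
      #(cutEdges w S) *
        (S ×ˢ Sᶜ).inf' (hS.product hSc) (fun p => effectiveResistance H p.1 p.2) := by
  obtain ⟨p, hp, hRmin⟩ :=
    exists_mem_eq_inf' (hS.product hSc) fun p => effectiveResistance H p.1 p.2
  obtain ⟨e, he, hmin⟩ := exists_mem_eq_inf' hcut fun e => 1 / w e.1 e.2
  obtain ⟨hs, ht⟩ := mem_product.1 hp
  have hwe : 0 < w e.1 e.2 := (mem_filter.1 he).2
  have hmax : ∀ q ∈ cutEdges w S, w q.1 q.2 ≤ w e.1 e.2 := fun q hq =>
    (one_div_le_one_div hwe (mem_filter.1 hq).2).1 (hmin ▸ inf'_le (fun e => 1 / w e.1 e.2) hq)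
  have hsum : ∑ q ∈ S ×ˢ Sᶜ, w q.1 q.2 ≤ #(cutEdges w S) * w e.1 e.2 :=
    calc ∑ q ∈ S ×ˢ Sᶜ, w q.1 q.2 = ∑ q ∈ cutEdges w S, w q.1 q.2 :=
          (sum_filter_of_ne fun q _ hq => lt_of_le_of_ne (hw₀ q.1 q.2) (Ne.symm hq)).symm
      _ ≤ #(cutEdges w S) • w e.1 e.2 := sum_le_card_nsmul _ _ _ hmax
      _ = #(cutEdges w S) * w e.1 e.2 := nsmul_eq_mul _ _
  have hR := effectiveResistance_nonneg hw hw₀ hH p.1 p.2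
  rw [hRmin, hmin, div_le_iff₀ hwe]
  calc 1 ≤ effectiveResistance H p.1 p.2 * ∑ q ∈ S ×ˢ Sᶜ, w q.1 q.2 :=
        one_le_effectiveResistance_mul_sum hw hw₀ hconn hH hs (mem_compl.1 ht)
    _ ≤ effectiveResistance H p.1 p.2 * (#(cutEdges w S) * w e.1 e.2) := by gcongr
    _ = _ := by ring

end Resistance

theorem stmt_17_general (n : ℕ)
    (w : Fin n → Fin n → ℝ)
    (hsymm : ∀ u v, w u v = w v u)
    (hnonneg : ∀ u v, 0 ≤ w u v)
    (hconn : (SimpleGraph.fromRel fun u v : Fin n => 0 < w u v).Connected)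
    (L : Matrix (Fin n) (Fin n) ℝ)
    (hL : ∀ u v, L u v = if u = v then ∑ s ∈ univ.erase u, w u s else - w u v)
    (H : Matrix (Fin n) (Fin n) ℝ)
    (hH1 : L * H * L = L) (hH2 : H * L * H = H)
    (hH3 : (L * H)ᵀ = L * H) (hH4 : (H * L)ᵀ = H * L)
    (reff : Fin n → Fin n → ℝ)
    (hreff : ∀ s t : Fin n, reff s t =
      (fun i => (if i = s then (1:ℝ) else 0) - (if i = t then (1:ℝ) else 0)) ⬝ᵥ
        H.mulVec (fun i => (if i = s then (1:ℝ) else 0) - (if i = t then (1:ℝ) else 0)))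
    (m : ℕ)
    (hm : m = (univ.filter fun e : Fin n × Fin n => e.1 < e.2 ∧ 0 < w e.1 e.2).card)
    (S : Finset (Fin n)) (hS : S.Nonempty) (hSc : Sᶜ.Nonempty) :
    ∃ hcut : ((S ×ˢ Sᶜ).filter fun e : Fin n × Fin n => 0 < w e.1 e.2).Nonempty,
      (S ×ˢ Sᶜ).inf' (hS.product hSc) (fun st => reff st.1 st.2) ≤
        (((S ×ˢ Sᶜ).filter fun e : Fin n × Fin n => 0 < w e.1 e.2).inf' hcut
          fun e => 1 / w e.1 e.2) ∧
      (((S ×ˢ Sᶜ).filter fun e : Fin n × Fin n => 0 < w e.1 e.2).inf' hcut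
          fun e => 1 / w e.1 e.2) ≤
        (m : ℝ) * (S ×ˢ Sᶜ).inf' (hS.product hSc) (fun st => reff st.1 st.2) := by
  obtain rfl : L = laplacian w := Matrix.ext hL
  have hH : (laplacian w).IsMoorePenroseInverse H := ⟨hH1, hH2, hH3, hH4⟩
  obtain rfl : reff = effectiveResistance H := by
    funext s t
    simp only [hreff, effectiveResistance, ← Pi.single_apply]
    rfl
  have hcut : (cutEdges w S).Nonempty := exists_mem_cutEdges hsymm hconn hS hSc
  refine ⟨hcut, inf'_effectiveResistance_le_inf'_one_div hsymm hnonneg hH hS hSc hcut,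
    (inf'_one_div_le_card_mul_inf'_effectiveResistance hsymm hnonneg hconn hH hS hSc
      hcut).trans ?_⟩
  gcongr
  · exact le_inf' _ _ fun p _ => effectiveResistance_nonneg hsymm hnonneg hH p.1 p.2
  · exact hm ▸ card_cutEdges_le hsymm S

theorem stmt_17 (n : ℕ) (hn : 2 ≤ n)
    (w : Fin n → Fin n → ℝ)
    (hsymm : ∀ u v, w u v = w v u)
    (hnonneg : ∀ u v, 0 ≤ w u v)
    (hconn : (SimpleGraph.fromRel fun u v : Fin n => 0 < w u v).Connected)
    (L : Matrix (Fin n) (Fin n) ℝ)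
    (hL : ∀ u v, L u v = if u = v then ∑ s ∈ univ.erase u, w u s else - w u v)
    (H : Matrix (Fin n) (Fin n) ℝ)
    (hH1 : L * H * L = L) (hH2 : H * L * H = H)
    (hH3 : (L * H)ᵀ = L * H) (hH4 : (H * L)ᵀ = H * L)
    (reff : Fin n → Fin n → ℝ)
    (hreff : ∀ s t : Fin n, reff s t =
      (fun i => (if i = s then (1:ℝ) else 0) - (if i = t then (1:ℝ) else 0)) ⬝ᵥ
        H.mulVec (fun i => (if i = s then (1:ℝ) else 0) - (if i = t then (1:ℝ) else 0)))
    (m : ℕ)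
    (hm : m = (univ.filter fun e : Fin n × Fin n => e.1 < e.2 ∧ 0 < w e.1 e.2).card)
    (S : Finset (Fin n)) (hS : S.Nonempty) (hSc : Sᶜ.Nonempty) :
    ∃ hcut : ((S ×ˢ Sᶜ).filter fun e : Fin n × Fin n => 0 < w e.1 e.2).Nonempty,
      (S ×ˢ Sᶜ).inf' (hS.product hSc) (fun st => reff st.1 st.2) ≤
        (((S ×ˢ Sᶜ).filter fun e : Fin n × Fin n => 0 < w e.1 e.2).inf' hcut
          fun e => 1 / w e.1 e.2) ∧
      (((S ×ˢ Sᶜ).filter fun e : Fin n × Fin n => 0 < w e.1 e.2).inf' hcut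
          fun e => 1 / w e.1 e.2) ≤
        (m : ℝ) * (S ×ˢ Sᶜ).inf' (hS.product hSc) (fun st => reff st.1 st.2) :=
  stmt_17_general n w hsymm hnonneg hconn L hL H hH1 hH2 hH3 hH4 reff hreff m hm S hS hSc
end

section
/- Let G be a connected weighted graph on vertex set V = [n] with nonnegative symmetric weights w and positive-weight edge set making G connected. Let S₁, S₂ ⊆ V be disjoint nonempty sets of vertices, let R₁ = max_{u,v∈S₁} Reff_G(u,v), R₂ = max_{u,v∈S₂} Reff_G(u,v), and τ = Σ_{x∈S₁, y∈S₂} w_{xy}, and assume τ > 0. Then for every u ∈ S₁ and v ∈ S₂, Reff_G(u,v) ≤ 3R₁ + 3R₂ + 3/τ. -/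
open Matrix Finset

def bvec (n : ℕ) (s t : Fin n) : Fin n → ℝ :=
  fun i => (if i = s then (1:ℝ) else 0) - (if i = t then (1:ℝ) else 0)

lemma bvec_dot {n : ℕ} (a c : Fin n) (g : Fin n → ℝ) :
    bvec n a c ⬝ᵥ g = g a - g c := by
  simp [bvec, dotProduct, sub_mul, Finset.sum_sub_distrib, ite_mul]

lemma cs_psd {n : ℕ} (M : Matrix (Fin n) (Fin n) ℝ) (hsym : Mᵀ = M)
    (hpsd : ∀ x, 0 ≤ x ⬝ᵥ M.mulVec x) (x y : Fin n → ℝ) :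
    (x ⬝ᵥ M.mulVec y)^2 ≤ (x ⬝ᵥ M.mulVec x) * (y ⬝ᵥ M.mulVec y) := by
  have hsw : ∀ a b : Fin n → ℝ, a ⬝ᵥ M.mulVec b = b ⬝ᵥ M.mulVec a := by
    intro a b
    rw [Matrix.dotProduct_mulVec, ← Matrix.mulVec_transpose, hsym, dotProduct_comm]
  have key : ∀ t : ℝ, 0 ≤ (y ⬝ᵥ M.mulVec y) * (t * t) + (2 * (x ⬝ᵥ M.mulVec y)) * t + (x ⬝ᵥ M.mulVec x) := by
    intro t
    have h := hpsd (x + t • y)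
    have hexp : (x + t • y) ⬝ᵥ M.mulVec (x + t • y)
        = (y ⬝ᵥ M.mulVec y) * (t * t) + (2 * (x ⬝ᵥ M.mulVec y)) * t + (x ⬝ᵥ M.mulVec x) := by
      rw [Matrix.mulVec_add, Matrix.mulVec_smul]
      simp only [dotProduct_add, add_dotProduct, smul_dotProduct,
        dotProduct_smul, smul_eq_mul]
      rw [hsw y x]
      ring
    linarith [hexp ▸ h]
  have hd := discrim_le_zero key
  unfold discrim at hd
  nlinarith [hd]

lemma pinv_symm {n : ℕ} (L H : Matrix (Fin n) (Fin n) ℝ) (hLsym : Lᵀ = L)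
    (hH1 : L * H * L = L) (hH2 : H * L * H = H)
    (hH3 : (L * H)ᵀ = L * H) (hH4 : (H * L)ᵀ = H * L) : Hᵀ = H := by
  have e1 : Hᵀ * L = L * H := by
    rw [← hH3, Matrix.transpose_mul, hLsym]
  have e2 : L * Hᵀ = H * L := by
    rw [← hH4, Matrix.transpose_mul, hLsym]
  have e3 : L * Hᵀ * L = L := by
    have := congrArg Matrix.transpose hH1
    rw [Matrix.transpose_mul, Matrix.transpose_mul, hLsym] at this
    rw [← Matrix.mul_assoc] at this
    exact this
  have eqP : L * Hᵀ = L * H := by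
    have h5 : L * Hᵀ = (L * H) * (L * Hᵀ) := by
      calc L * Hᵀ = (L * H * L) * Hᵀ := by rw [hH1]
      _ = (L * H) * (L * Hᵀ) := by rw [Matrix.mul_assoc, Matrix.mul_assoc]
    have s2 : (L * Hᵀ)ᵀ = L * Hᵀ := by
      rw [Matrix.transpose_mul, Matrix.transpose_transpose, hLsym, e2]
    have h6 : (L * Hᵀ) * (L * H) = L * H := by
      calc (L * Hᵀ) * (L * H) = (L * Hᵀ * L) * H := (Matrix.mul_assoc _ _ _).symm
      _ = L * H := by rw [e3]
    have h7 : (L * H) * (L * Hᵀ) = L * H := by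
      calc (L * H) * (L * Hᵀ) = (L * H)ᵀ * (L * Hᵀ)ᵀ := by rw [hH3, s2]
      _ = ((L * Hᵀ) * (L * H))ᵀ := (Matrix.transpose_mul _ _).symm
      _ = (L * H)ᵀ := by rw [h6]
      _ = L * H := hH3
    rw [h5, h7]
  have hH2t : Hᵀ * L * Hᵀ = Hᵀ := by
    have := congrArg Matrix.transpose hH2
    rw [Matrix.transpose_mul, Matrix.transpose_mul, hLsym, ← Matrix.mul_assoc] at this
    exact this
  calc Hᵀ = Hᵀ * L * Hᵀ := hH2t.symm
  _ = Hᵀ * (L * Hᵀ) := by rw [Matrix.mul_assoc]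
  _ = Hᵀ * (L * H) := by rw [eqP]
  _ = (Hᵀ * L) * H := by rw [Matrix.mul_assoc]
  _ = (L * H) * H := by rw [e1]
  _ = H * L * H := by rw [← e2, ← eqP, e2]
  _ = H := hH2

lemma quadform {n : ℕ} (w : Fin n → Fin n → ℝ) (hsymm : ∀ u v, w u v = w v u)
    (L : Matrix (Fin n) (Fin n) ℝ)
    (hL : ∀ u v, L u v = if u = v then ∑ s ∈ univ.erase u, w u s else - w u v)
    (x : Fin n → ℝ) :
    x ⬝ᵥ L.mulVec x = (1/2) * ∑ u, ∑ v, w u v * (x u - x v)^2 := by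
  have hrow : ∀ u, (L.mulVec x) u = ∑ v ∈ univ.erase u, w u v * (x u - x v) := by
    intro u
    have hm : L.mulVec x u = ∑ v, L u v * x v := rfl
    rw [hm, ← Finset.add_sum_erase _ (fun v => L u v * x v) (mem_univ u)]
    have h2 : ∑ v ∈ univ.erase u, L u v * x v = ∑ v ∈ univ.erase u, (- (w u v * x v)) :=
      Finset.sum_congr rfl (fun v hv => by
        rw [hL u v, if_neg (Finset.ne_of_mem_erase hv).symm]; ring)
    rw [h2, hL u u, if_pos rfl, Finset.sum_mul, ← Finset.sum_add_distrib]
    exact Finset.sum_congr rfl fun v _ => by ring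
  have hrow' : ∀ u, (L.mulVec x) u = ∑ v, w u v * (x u - x v) := by
    intro u
    rw [hrow u]
    rw [Finset.sum_erase _ (by simp)]
  have h1 : x ⬝ᵥ L.mulVec x = ∑ u, ∑ v, x u * w u v * (x u - x v) := by
    rw [dotProduct]
    refine Finset.sum_congr rfl fun u _ => ?_
    rw [hrow' u, Finset.mul_sum]
    exact Finset.sum_congr rfl fun v _ => by ring
  have hswap : ∑ u, ∑ v, x u * w u v * (x u - x v)
      = ∑ u, ∑ v, -(x v * w u v * (x u - x v)) := by
    rw [Finset.sum_comm]
    refine Finset.sum_congr rfl fun u _ => Finset.sum_congr rfl fun v _ => ?_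
    rw [hsymm]; ring
  have hB : ∑ u, ∑ v, w u v * (x u - x v)^2
      = (∑ u, ∑ v, x u * w u v * (x u - x v)) + ∑ u, ∑ v, -(x v * w u v * (x u - x v)) := by
    rw [← Finset.sum_add_distrib]
    refine Finset.sum_congr rfl fun u _ => ?_
    rw [← Finset.sum_add_distrib]
    exact Finset.sum_congr rfl fun v _ => by ring
  rw [h1, hB, ← hswap]
  ring

set_option maxHeartbeats 1600000 in
theorem stmt_18 (n : ℕ) (hn : 2 ≤ n)
    (w : Fin n → Fin n → ℝ)
    (hsymm : ∀ u v, w u v = w v u)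
    (hnonneg : ∀ u v, 0 ≤ w u v)
    (hconn : (SimpleGraph.fromRel fun u v : Fin n => 0 < w u v).Connected)
    (L : Matrix (Fin n) (Fin n) ℝ)
    (hL : ∀ u v, L u v = if u = v then ∑ s ∈ univ.erase u, w u s else - w u v)
    (H : Matrix (Fin n) (Fin n) ℝ)
    (hH1 : L * H * L = L) (hH2 : H * L * H = H)
    (hH3 : (L * H)ᵀ = L * H) (hH4 : (H * L)ᵀ = H * L)
    (reff : Fin n → Fin n → ℝ)
    (hreff : ∀ s t : Fin n, reff s t =
      (fun i => (if i = s then (1:ℝ) else 0) - (if i = t then (1:ℝ) else 0)) ⬝ᵥ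
        H.mulVec (fun i => (if i = s then (1:ℝ) else 0) - (if i = t then (1:ℝ) else 0)))
    (S₁ S₂ : Finset (Fin n)) (hS₁ : S₁.Nonempty) (hS₂ : S₂.Nonempty)
    (hdisj : Disjoint S₁ S₂)
    (R₁ : ℝ) (hR₁ : R₁ = (S₁ ×ˢ S₁).sup' (hS₁.product hS₁) fun uv => reff uv.1 uv.2)
    (R₂ : ℝ) (hR₂ : R₂ = (S₂ ×ˢ S₂).sup' (hS₂.product hS₂) fun uv => reff uv.1 uv.2)
    (τ : ℝ) (hτdef : τ = ∑ x ∈ S₁, ∑ y ∈ S₂, w x y) (hτ : 0 < τ) :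
    ∀ u ∈ S₁, ∀ v ∈ S₂, reff u v ≤ 3 * R₁ + 3 * R₂ + 3 / τ := by
  have hreff' : ∀ s t, reff s t = bvec n s t ⬝ᵥ H.mulVec (bvec n s t) := hreff
  have hLsym : Lᵀ = L := by
    ext a c
    rw [Matrix.transpose_apply, hL c a, hL a c]
    by_cases h : a = c
    · subst h; rfl
    · rw [if_neg (fun hh => h hh.symm), if_neg h, hsymm]
  have hHsym : Hᵀ = H := pinv_symm L H hLsym hH1 hH2 hH3 hH4
  have hpsd : ∀ x, 0 ≤ x ⬝ᵥ L.mulVec x := by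
    intro x
    rw [quadform w hsymm L hL x]
    have h0 : 0 ≤ ∑ a, ∑ c, w a c * (x a - x c)^2 :=
      Finset.sum_nonneg fun a _ => Finset.sum_nonneg fun c _ =>
        mul_nonneg (hnonneg a c) (sq_nonneg _)
    linarith
  have hrep : ∀ p q : Fin n → ℝ, p ⬝ᵥ H.mulVec q
      = (H.mulVec p) ⬝ᵥ L.mulVec (H.mulVec q) := by
    intro p q
    conv_lhs => rw [← hH2]
    rw [← Matrix.mulVec_mulVec, ← Matrix.mulVec_mulVec, Matrix.dotProduct_mulVec p,
      ← Matrix.mulVec_transpose, hHsym]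
  have hE : ∀ s t, reff s t
      = (H.mulVec (bvec n s t)) ⬝ᵥ L.mulVec (H.mulVec (bvec n s t)) :=
    fun s t => (hreff' s t).trans (hrep _ _)
  have hreffnn : ∀ s t, 0 ≤ reff s t := fun s t => (hE s t) ▸ hpsd _
  have hCS : ∀ (p q : Fin n → ℝ),
      (p ⬝ᵥ H.mulVec q)^2 ≤ (p ⬝ᵥ H.mulVec p) * (q ⬝ᵥ H.mulVec q) := by
    intro p q
    rw [hrep p q, hrep p p, hrep q q]
    exact cs_psd L hLsym hpsd _ _
  intro u hu v hv
  obtain ⟨g, hg⟩ : ∃ g : Fin n → ℝ, g = H.mulVec (bvec n u v) := ⟨_, rfl⟩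
  obtain ⟨R, hRdef⟩ : ∃ r : ℝ, r = reff u v := ⟨_, rfl⟩
  rw [← hRdef]
  have hRnn : 0 ≤ R := by rw [hRdef]; exact hreffnn u v
  have hreffuu : ∀ s : Fin n, reff s s = 0 := by
    intro s
    rw [hreff' s s]
    simp [bvec, dotProduct]
  have hR1nn : 0 ≤ R₁ := by
    rw [hR₁]
    have := Finset.le_sup' (fun uv : Fin n × Fin n => reff uv.1 uv.2)
      (show (u, u) ∈ S₁ ×ˢ S₁ from Finset.mem_product.mpr ⟨hu, hu⟩)
    rw [hreffuu u] at this
    exact this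
  have hR2nn : 0 ≤ R₂ := by
    rw [hR₂]
    have := Finset.le_sup' (fun uv : Fin n × Fin n => reff uv.1 uv.2)
      (show (v, v) ∈ S₂ ×ˢ S₂ from Finset.mem_product.mpr ⟨hv, hv⟩)
    rw [hreffuu v] at this
    exact this
  have hRdiff : R = g u - g v := by
    rw [hRdef, hreff' u v, ← hg]
    exact bvec_dot u v g
  have hbound : ∀ a c : Fin n, g a - g c ≤ Real.sqrt (reff a c * R) := by
    intro a c
    have h1 : (bvec n a c ⬝ᵥ g)^2 ≤ reff a c * R := by
      have h := hCS (bvec n a c) (bvec n u v)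
      rw [← hreff' a c, ← hreff' u v, ← hRdef, ← hg] at h
      exact h
    calc g a - g c = bvec n a c ⬝ᵥ g := (bvec_dot a c g).symm
    _ ≤ |bvec n a c ⬝ᵥ g| := le_abs_self _
    _ = Real.sqrt ((bvec n a c ⬝ᵥ g)^2) := (Real.sqrt_sq_eq_abs _).symm
    _ ≤ Real.sqrt (reff a c * R) := Real.sqrt_le_sqrt h1
  have hEnergy : g ⬝ᵥ L.mulVec g = R := by
    rw [hg, hRdef, hE u v]
  have hsub : ∑ x ∈ S₁, ∑ y ∈ S₂, w x y * (g x - g y)^2 ≤ R := by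
    have hfull : R = (1/2) * ∑ a, ∑ c, w a c * (g a - g c)^2 := by
      rw [← hEnergy, quadform w hsymm L hL g]
    have hsw : ∑ p ∈ S₂ ×ˢ S₁, w p.1 p.2 * (g p.1 - g p.2)^2
        = ∑ x ∈ S₁, ∑ y ∈ S₂, w x y * (g x - g y)^2 := by
      rw [Finset.sum_product, Finset.sum_comm]
      refine Finset.sum_congr rfl fun x _ => Finset.sum_congr rfl fun y _ => ?_
      rw [hsymm]; ring
    have hdisjP : Disjoint (S₁ ×ˢ S₂) (S₂ ×ˢ S₁) := by
      rw [Finset.disjoint_left]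
      intro p hp hp2
      exact Finset.disjoint_left.mp hdisj (Finset.mem_product.mp hp).1
        (Finset.mem_product.mp hp2).1
    have hle : ∑ p ∈ (S₁ ×ˢ S₂) ∪ (S₂ ×ˢ S₁), w p.1 p.2 * (g p.1 - g p.2)^2
        ≤ ∑ a, ∑ c, w a c * (g a - g c)^2 := by
      rw [show (∑ a, ∑ c, w a c * (g a - g c)^2)
          = ∑ p ∈ univ ×ˢ univ, w p.1 p.2 * (g p.1 - g p.2)^2 from by
        rw [Finset.sum_product]]
      refine Finset.sum_le_sum_of_subset_of_nonneg ?_ (fun p _ _ =>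
        mul_nonneg (hnonneg _ _) (sq_nonneg _))
      intro p _
      exact Finset.mem_product.mpr ⟨mem_univ _, mem_univ _⟩
    rw [Finset.sum_union hdisjP, hsw, Finset.sum_product] at hle
    linarith
  -- main averaging estimate
  have hτR : τ * R = ∑ x ∈ S₁, ∑ y ∈ S₂, w x y * R := by
    rw [hτdef, Finset.sum_mul]
    exact Finset.sum_congr rfl fun x _ => Finset.sum_mul _ _ _
  have hsplitsum : τ * R
      = (∑ x ∈ S₁, ∑ y ∈ S₂, w x y * (g u - g x))
      + (∑ x ∈ S₁, ∑ y ∈ S₂, w x y * (g x - g y))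
      + (∑ x ∈ S₁, ∑ y ∈ S₂, w x y * (g y - g v)) := by
    rw [hτR, ← Finset.sum_add_distrib, ← Finset.sum_add_distrib]
    refine Finset.sum_congr rfl fun x _ => ?_
    rw [← Finset.sum_add_distrib, ← Finset.sum_add_distrib]
    refine Finset.sum_congr rfl fun y _ => ?_
    rw [hRdiff]; ring
  have hA1 : (∑ x ∈ S₁, ∑ y ∈ S₂, w x y * (g u - g x)) ≤ τ * Real.sqrt (R₁ * R) := by
    have hterm : ∀ x ∈ S₁, ∀ y ∈ S₂, w x y * (g u - g x) ≤ w x y * Real.sqrt (R₁ * R) := by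
      intro x hx y _
      refine mul_le_mul_of_nonneg_left ?_ (hnonneg x y)
      refine le_trans (hbound u x) (Real.sqrt_le_sqrt ?_)
      refine mul_le_mul_of_nonneg_right ?_ hRnn
      rw [hR₁]
      exact Finset.le_sup' (fun uv : Fin n × Fin n => reff uv.1 uv.2)
        (show (u, x) ∈ S₁ ×ˢ S₁ from Finset.mem_product.mpr ⟨hu, hx⟩)
    calc (∑ x ∈ S₁, ∑ y ∈ S₂, w x y * (g u - g x))
        ≤ ∑ x ∈ S₁, ∑ y ∈ S₂, w x y * Real.sqrt (R₁ * R) :=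
      Finset.sum_le_sum fun x hx => Finset.sum_le_sum fun y hy => hterm x hx y hy
    _ = τ * Real.sqrt (R₁ * R) := by
      rw [hτdef, Finset.sum_mul]
      exact Finset.sum_congr rfl fun x _ => (Finset.sum_mul _ _ _).symm
  have hA3 : (∑ x ∈ S₁, ∑ y ∈ S₂, w x y * (g y - g v)) ≤ τ * Real.sqrt (R₂ * R) := by
    have hterm : ∀ x ∈ S₁, ∀ y ∈ S₂, w x y * (g y - g v) ≤ w x y * Real.sqrt (R₂ * R) := by
      intro x _ y hy
      refine mul_le_mul_of_nonneg_left ?_ (hnonneg x y)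
      refine le_trans (hbound y v) (Real.sqrt_le_sqrt ?_)
      refine mul_le_mul_of_nonneg_right ?_ hRnn
      rw [hR₂]
      exact Finset.le_sup' (fun uv : Fin n × Fin n => reff uv.1 uv.2)
        (show (y, v) ∈ S₂ ×ˢ S₂ from Finset.mem_product.mpr ⟨hy, hv⟩)
    calc (∑ x ∈ S₁, ∑ y ∈ S₂, w x y * (g y - g v))
        ≤ ∑ x ∈ S₁, ∑ y ∈ S₂, w x y * Real.sqrt (R₂ * R) :=
      Finset.sum_le_sum fun x hx => Finset.sum_le_sum fun y hy => hterm x hx y hy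
    _ = τ * Real.sqrt (R₂ * R) := by
      rw [hτdef, Finset.sum_mul]
      exact Finset.sum_congr rfl fun x _ => (Finset.sum_mul _ _ _).symm
  have hA2 : (∑ x ∈ S₁, ∑ y ∈ S₂, w x y * (g x - g y)) ≤ Real.sqrt (τ * R) := by
    obtain ⟨A2, hA2def⟩ : ∃ r : ℝ, r = ∑ x ∈ S₁, ∑ y ∈ S₂, w x y * (g x - g y) := ⟨_, rfl⟩
    rw [← hA2def]
    have hA2sq : A2^2 ≤ τ * R := by
      have hprod : A2 = ∑ p ∈ S₁ ×ˢ S₂,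
          Real.sqrt (w p.1 p.2) * (Real.sqrt (w p.1 p.2) * (g p.1 - g p.2)) := by
        rw [hA2def, Finset.sum_product]
        refine Finset.sum_congr rfl fun x _ => Finset.sum_congr rfl fun y _ => ?_
        rw [← mul_assoc, Real.mul_self_sqrt (hnonneg x y)]
      have cs := Finset.sum_mul_sq_le_sq_mul_sq (S₁ ×ˢ S₂)
        (fun p => Real.sqrt (w p.1 p.2))
        (fun p => Real.sqrt (w p.1 p.2) * (g p.1 - g p.2))
      rw [← hprod] at cs
      have hsum1 : (∑ p ∈ S₁ ×ˢ S₂, (Real.sqrt (w p.1 p.2))^2) = τ := by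
        rw [hτdef, Finset.sum_product]
        exact Finset.sum_congr rfl fun x _ => Finset.sum_congr rfl fun y _ =>
          Real.sq_sqrt (hnonneg x y)
      have hsum2 : (∑ p ∈ S₁ ×ˢ S₂, (Real.sqrt (w p.1 p.2) * (g p.1 - g p.2))^2) ≤ R := by
        refine le_trans (le_of_eq ?_) hsub
        rw [Finset.sum_product]
        refine Finset.sum_congr rfl fun x _ => Finset.sum_congr rfl fun y _ => ?_
        rw [mul_pow, Real.sq_sqrt (hnonneg x y)]
      calc A2^2 ≤ (∑ p ∈ S₁ ×ˢ S₂, (Real.sqrt (w p.1 p.2))^2)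
          * ∑ p ∈ S₁ ×ˢ S₂, (Real.sqrt (w p.1 p.2) * (g p.1 - g p.2))^2 := cs
      _ ≤ τ * R := by
        rw [hsum1]
        exact mul_le_mul_of_nonneg_left hsum2 hτ.le
    calc A2 ≤ |A2| := le_abs_self _
    _ = Real.sqrt (A2^2) := (Real.sqrt_sq_eq_abs _).symm
    _ ≤ Real.sqrt (τ * R) := Real.sqrt_le_sqrt hA2sq
  have hmain : τ * R ≤ τ * Real.sqrt (R₁ * R) + Real.sqrt (τ * R) + τ * Real.sqrt (R₂ * R) := by
    linarith [hsplitsum, hA1, hA2, hA3]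
  -- final arithmetic
  obtain ⟨a, ha⟩ : ∃ r : ℝ, r = Real.sqrt R₁ := ⟨_, rfl⟩
  obtain ⟨b, hb⟩ : ∃ r : ℝ, r = Real.sqrt R₂ := ⟨_, rfl⟩
  obtain ⟨c, hc⟩ : ∃ r : ℝ, r = Real.sqrt τ := ⟨_, rfl⟩
  obtain ⟨s, hs⟩ : ∃ r : ℝ, r = Real.sqrt R := ⟨_, rfl⟩
  have ha2 : a^2 = R₁ := by rw [ha]; exact Real.sq_sqrt hR1nn
  have hb2 : b^2 = R₂ := by rw [hb]; exact Real.sq_sqrt hR2nn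
  have hc2 : c^2 = τ := by rw [hc]; exact Real.sq_sqrt hτ.le
  have hs2 : s^2 = R := by rw [hs]; exact Real.sq_sqrt hRnn
  have hcpos : 0 < c := by rw [hc]; exact Real.sqrt_pos.mpr hτ
  have hanng : 0 ≤ a := by rw [ha]; exact Real.sqrt_nonneg _
  have hbnng : 0 ≤ b := by rw [hb]; exact Real.sqrt_nonneg _
  have hsnng : 0 ≤ s := by rw [hs]; exact Real.sqrt_nonneg _
  have hm1 : Real.sqrt (R₁ * R) = a * s := by rw [ha, hs]; exact Real.sqrt_mul hR1nn R
  have hm2 : Real.sqrt (R₂ * R) = b * s := by rw [hb, hs]; exact Real.sqrt_mul hR2nn R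
  have hm3 : Real.sqrt (τ * R) = c * s := by rw [hc, hs]; exact Real.sqrt_mul hτ.le R
  rw [hm1, hm2, hm3] at hmain
  have hfin : τ * R ≤ τ * (3 * R₁) + τ * (3 * R₂) + 3 := by
    have hmain' : c^2 * s^2 ≤ c^2 * (a * s) + c * s + c^2 * (b * s) := by
      rw [hc2, hs2]; exact hmain
    have hmain2 : (c*s)*(c*s) ≤ (c*s)*(c*a + c*b + 1) := by nlinarith [hmain']
    have hle2 : (c*s)*(c*s) ≤ (c*a + c*b + 1)^2 := by
      nlinarith [hmain2, sq_nonneg (c*s - (c*a + c*b + 1))]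
    have hK2 : (c*a + c*b + 1)^2 ≤ 3*(c*a)^2 + 3*(c*b)^2 + 3 := by
      nlinarith [sq_nonneg (c*a - c*b), sq_nonneg (c*a - 1), sq_nonneg (c*b - 1)]
    have hfinal : (c*s)*(c*s) ≤ 3*(c*a)^2 + 3*(c*b)^2 + 3 := le_trans hle2 hK2
    rw [← ha2, ← hb2, ← hc2, ← hs2]
    nlinarith [hfinal]
  calc R = (τ * R) / τ := by field_simp
  _ ≤ (τ * (3 * R₁) + τ * (3 * R₂) + 3) / τ := by
    exact (div_le_div_iff_of_pos_right hτ).mpr hfin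
  _ = 3 * R₁ + 3 * R₂ + 3 / τ := by field_simp
end
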